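/- arXiv:1507.02248 — 10 statements merged into one kernel-verified Lean document; each statement's English description precedes it below -/
import Mathlib

section
/- Let A be a commutative ring, E a nonzero A-module, and R = A ⋉ E the trivial ring extension (idealization). Then R is a chain ring (its ideals are totally ordered by inclusion) if and only if A is a valuation domain and E is a uniserial divisible A-module. -/
/-- A commutative ring is a chain ring if its ideals are totally ordered by inclusion. -/
def ChainRing (R : Type*) [CommRing R] : Prop := ∀ I J : Ideal R, I ≤ J ∨ J ≤ I

open TrivSqZeroExt MulOpposite

/-- If divisibility is total, the ring is a chain ring. -/
lemma chainRing_of_dvd_total {R : Type*} [CommRing R]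
    (h : ∀ x y : R, x ∣ y ∨ y ∣ x) : ChainRing R := by
  intro I J
  by_cases hIJ : I ≤ J
  · exact Or.inl hIJ
  · right
    obtain ⟨x, hxI, hxJ⟩ := SetLike.not_le_iff_exists.mp hIJ
    intro y hy
    rcases h y x with ⟨r, hr⟩ | ⟨r, hr⟩
    · exact absurd (hr ▸ Ideal.mul_mem_right r J hy) hxJ
    · exact hr ▸ Ideal.mul_mem_right r I hxI

/-- If cyclic submodules are comparable, the module is uniserial. -/
lemma uniserial_of_smul_total {A E : Type*} [CommRing A] [AddCommGroup E] [Module A E]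
    (h : ∀ x y : E, (∃ c : A, y = c • x) ∨ (∃ c : A, x = c • y)) :
    ∀ M N : Submodule A E, M ≤ N ∨ N ≤ M := by
  intro M N
  by_cases hMN : M ≤ N
  · exact Or.inl hMN
  · right
    obtain ⟨x, hxM, hxN⟩ := SetLike.not_le_iff_exists.mp hMN
    intro y hy
    rcases h y x with ⟨c, hc⟩ | ⟨c, hc⟩
    · exact absurd (hc ▸ N.smul_mem c hy) hxN
    · exact hc ▸ M.smul_mem c hxM

/-- Helper constructor for `TrivSqZeroExt`. -/
def tszeMk {A E : Type*} (a : A) (e : E) : TrivSqZeroExt A E := (a, e)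

@[simp] lemma tszeMk_fst {A E : Type*} (a : A) (e : E) : (tszeMk a e).fst = a := rfl
@[simp] lemma tszeMk_snd {A E : Type*} (a : A) (e : E) : (tszeMk a e).snd = e := rfl

/-- `R = A ⋉ E` is a chain ring iff `A` is a valuation domain and
`E` is a uniserial divisible `A`-module. -/
theorem trivSqZeroExt_chainRing_iff {A E : Type*} [CommRing A] [AddCommGroup E]
    [Module A E] [Module Aᵐᵒᵖ E] [IsCentralScalar A E] [Nontrivial E] :
    ChainRing (TrivSqZeroExt A E) ↔
      (IsDomain A ∧ ChainRing A ∧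
        (∀ M N : Submodule A E, M ≤ N ∨ N ≤ M) ∧
        (∀ a : A, a ≠ 0 → ∀ x : E, ∃ y : E, x = a • y)) := by
  have hu : ∀ u : TrivSqZeroExt A E, u = tszeMk u.fst u.snd := fun u => rfl
  have nA : Nontrivial A := Module.nontrivial A E
  constructor
  · intro hR
    -- elementwise comparisons in R
    have key : ∀ u v : TrivSqZeroExt A E, u ∣ v ∨ v ∣ u := by
      intro u v
      rcases hR (Ideal.span {u}) (Ideal.span {v}) with h | h
      · exact Or.inr (Ideal.mem_span_singleton.mp (h (Ideal.mem_span_singleton_self u)))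
      · exact Or.inl (Ideal.mem_span_singleton.mp (h (Ideal.mem_span_singleton_self v)))
    -- divisibility of E
    have hdiv : ∀ a : A, a ≠ 0 → ∀ x : E, ∃ y : E, x = a • y := by
      intro a ha x
      rcases key (tszeMk a (0:E)) (tszeMk (0:A) x) with ⟨r, hr⟩ | ⟨r, hr⟩
      · refine ⟨r.snd, ?_⟩
        have := congrArg TrivSqZeroExt.snd hr
        simp only [snd_mul] at this
        simpa [op_smul_eq_smul] using this
      · have := congrArg TrivSqZeroExt.fst hr
        simp only [fst_mul] at this
        simp at this
        exact absurd this ha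
    -- chain ring A
    have hA : ChainRing A := by
      apply chainRing_of_dvd_total
      intro a b
      rcases key (tszeMk a (0:E)) (tszeMk b (0:E)) with ⟨r, hr⟩ | ⟨r, hr⟩
      · exact Or.inl ⟨r.fst, congrArg TrivSqZeroExt.fst hr⟩
      · exact Or.inr ⟨r.fst, congrArg TrivSqZeroExt.fst hr⟩
    -- uniserial E
    have hE : ∀ M N : Submodule A E, M ≤ N ∨ N ≤ M := by
      apply uniserial_of_smul_total
      intro x y
      rcases key (tszeMk (0:A) x) (tszeMk (0:A) y) with ⟨r, hr⟩ | ⟨r, hr⟩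
      · left
        refine ⟨r.fst, ?_⟩
        have := congrArg TrivSqZeroExt.snd hr
        simpa [snd_mul] using this
      · right
        refine ⟨r.fst, ?_⟩
        have := congrArg TrivSqZeroExt.snd hr
        simpa [snd_mul] using this
    -- domain
    have hdom : IsDomain A := by
      have hnzd : NoZeroDivisors A := by
        refine ⟨fun {a b} hab => ?_⟩
        by_contra hcon
        push_neg at hcon
        obtain ⟨ha, hb⟩ := hcon
        obtain ⟨x, hx⟩ := exists_ne (0 : E)
        -- a • e = 0 for all e
        have hann : ∀ e : E, a • e = 0 := by
          intro e
          obtain ⟨y, hy⟩ := hdiv b hb e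
          rw [hy, smul_smul, hab, zero_smul]
        obtain ⟨y, hy⟩ := hdiv a ha x
        exact hx (by rw [hy, hann])
      exact NoZeroDivisors.to_isDomain A
    exact ⟨hdom, hA, hE, hdiv⟩
  · rintro ⟨hdom, hA, hE, hdiv⟩
    apply chainRing_of_dvd_total
    -- total comparability of A under divisibility
    have hAdvd : ∀ a b : A, a ∣ b ∨ b ∣ a := by
      intro a b
      rcases hA (Ideal.span {a}) (Ideal.span {b}) with h | h
      · exact Or.inr (Ideal.mem_span_singleton.mp (h (Ideal.mem_span_singleton_self a)))
      · exact Or.inl (Ideal.mem_span_singleton.mp (h (Ideal.mem_span_singleton_self b)))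
    have hEsmul : ∀ x y : E, (∃ c : A, y = c • x) ∨ (∃ c : A, x = c • y) := by
      intro x y
      rcases hE (Submodule.span A {x}) (Submodule.span A {y}) with h | h
      · obtain ⟨c, hc⟩ := Submodule.mem_span_singleton.mp
          (h (Submodule.mem_span_singleton_self x))
        exact Or.inr ⟨c, hc.symm⟩
      · obtain ⟨c, hc⟩ := Submodule.mem_span_singleton.mp
          (h (Submodule.mem_span_singleton_self y))
        exact Or.inl ⟨c, hc.symm⟩
    -- key: if a ≠ 0 and a ∣ b then (a,e) ∣ (b,f)
    have main : ∀ (a : A), a ≠ 0 → ∀ (e : E) (b : A), a ∣ b → ∀ f : E,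
        ∃ r : TrivSqZeroExt A E, tszeMk b f = tszeMk a e * r := by
      intro a ha e b hab f
      obtain ⟨c, hc⟩ := hab
      obtain ⟨h, hh⟩ := hdiv a ha (f - c • e)
      refine ⟨tszeMk c h, ?_⟩
      refine TrivSqZeroExt.ext ?_ ?_
      · simpa [fst_mul] using hc
      · show f = _
        rw [snd_mul]
        show f = a • h + op c • e
        rw [op_smul_eq_smul, ← hh]
        abel
    intro u v
    rw [hu u, hu v]
    set a := u.fst; set e := u.snd; set b := v.fst; set f := v.snd
    by_cases ha : a = 0
    · by_cases hb : b = 0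
      · rw [ha, hb]
        rcases hEsmul e f with ⟨c, hc⟩ | ⟨c, hc⟩
        · left
          refine ⟨tszeMk c (0:E), TrivSqZeroExt.ext (by simp [fst_mul]) ?_⟩
          show f = _
          rw [snd_mul]
          show f = (0 : A) • (0 : E) + op c • e
          simp [op_smul_eq_smul, hc]
        · right
          refine ⟨tszeMk c (0:E), TrivSqZeroExt.ext (by simp [fst_mul]) ?_⟩
          show e = _
          rw [snd_mul]
          show e = (0 : A) • (0 : E) + op c • f
          simp [op_smul_eq_smul, hc]
      · obtain ⟨r, hr⟩ := main b hb f a (ha ▸ dvd_zero b) e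
        exact Or.inr ⟨r, hr⟩
    · by_cases hb : b = 0
      · obtain ⟨r, hr⟩ := main a ha e b (hb ▸ dvd_zero a) f
        exact Or.inl ⟨r, hr⟩
      · rcases hAdvd a b with hd | hd
        · obtain ⟨r, hr⟩ := main a ha e b hd f
          exact Or.inl ⟨r, hr⟩
        · obtain ⟨r, hr⟩ := main b hb f a hd e
          exact Or.inr ⟨r, hr⟩
end

section
/- Let R = A ⋉ E be a trivial ring extension and suppose R is a chain ring. Then for every nonzero a ∈ A and every x ∈ E, there exists y ∈ E with x = a·y; in particular aE = E for all nonzero a, and A is an integral domain. -/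
/-- if `R = A ⋉ E` is a chain ring (with `E ≠ 0`), then every `x ∈ E` is
divisible by every nonzero `a ∈ A` (so `aE = E` for all `a ≠ 0`), and `A` is a domain. -/
theorem of_trivSqZeroExt_chainRing {A E : Type*} [CommRing A] [AddCommGroup E]
    [Module A E] [Module Aᵐᵒᵖ E] [IsCentralScalar A E] [Nontrivial E]
    (h : ChainRing (TrivSqZeroExt A E)) :
    (∀ a : A, a ≠ 0 → ∀ x : E, ∃ y : E, x = a • y) ∧
    (∀ a : A, a ≠ 0 → (Ideal.span {a}) • (⊤ : Submodule A E) = ⊤) ∧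
    IsDomain A := by
  have key : ∀ a : A, a ≠ 0 → ∀ x : E, ∃ y : E, x = a • y := by
    intro a ha x
    rcases h (Ideal.span {TrivSqZeroExt.inl a}) (Ideal.span {TrivSqZeroExt.inr x}) with hle | hle
    · have hm := hle (Ideal.mem_span_singleton_self _)
      rw [Ideal.mem_span_singleton] at hm
      obtain ⟨c, hc⟩ := hm
      have hfst := congrArg TrivSqZeroExt.fst hc
      simp [TrivSqZeroExt.fst_mul] at hfst
      exact absurd hfst ha
    · have hm := hle (Ideal.mem_span_singleton_self _)
      rw [Ideal.mem_span_singleton] at hm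
      obtain ⟨c, hc⟩ := hm
      refine ⟨c.snd, ?_⟩
      have hsnd := congrArg TrivSqZeroExt.snd hc
      simpa [TrivSqZeroExt.snd_mul] using hsnd
  refine ⟨key, ?_, ?_⟩
  · intro a ha
    rw [eq_top_iff]
    intro x _
    obtain ⟨y, hy⟩ := key a ha x
    rw [hy]
    exact Submodule.smul_mem_smul (Ideal.mem_span_singleton_self a) trivial
  · have hA : Nontrivial A := by
      by_contra hnt
      rw [not_nontrivial_iff_subsingleton] at hnt
      obtain ⟨x, y, hxy⟩ := exists_pair_ne E
      apply hxy
      have h1 : (1 : A) = 0 := Subsingleton.elim _ _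
      calc x = (1 : A) • x := (one_smul _ _).symm
        _ = (0 : A) • x := by rw [h1]
        _ = 0 := zero_smul _ _
        _ = (0 : A) • y := (zero_smul _ _).symm
        _ = (1 : A) • y := by rw [h1]
        _ = y := one_smul _ _
    have hnz : ∀ a b : A, a * b = 0 → a = 0 ∨ b = 0 := by
      intro a b hab
      by_contra hcon
      push_neg at hcon
      obtain ⟨ha, hb⟩ := hcon
      obtain ⟨x, hx⟩ := exists_ne (0 : E)
      obtain ⟨y, hy⟩ := key a ha x
      obtain ⟨z, hz⟩ := key b hb y
      apply hx
      rw [hy, hz, smul_smul, hab, zero_smul]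
    haveI : NoZeroDivisors A := ⟨fun {a b} hab => hnz a b hab⟩
    exact NoZeroDivisors.to_isDomain A
end

section
/- An A-module E has a distributive lattice of submodules (i.e., (M+N)∩P = (M∩P)+(N∩P) for all submodules M, N, P of E) if and only if the localization E_P is a uniserial A_P-module for every maximal ideal P of A. -/
open Submodule IsLocalizedModule

section lemmas

variable {R M N : Type*} [CommSemiring R] [AddCommMonoid M] [AddCommMonoid N]
  [Module R M] [Module R N] (p : Submonoid R) (f : M →ₗ[R] N) [IsLocalizedModule p f]

lemma localized₀_mono {X Y : Submodule R M} (h : X ≤ Y) :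
    X.localized₀ p f ≤ Y.localized₀ p f := by
  rintro x hx
  obtain ⟨m, hm, s, rfl⟩ := (Submodule.mem_localized₀ p f _ _).1 hx
  exact ⟨m, h hm, s, rfl⟩

lemma localized₀_sup (X Y : Submodule R M) :
    (X ⊔ Y).localized₀ p f = X.localized₀ p f ⊔ Y.localized₀ p f := by
  refine le_antisymm ?_ (sup_le (localized₀_mono p f le_sup_left)
    (localized₀_mono p f le_sup_right))
  rintro x ⟨m, hm, s, rfl⟩
  obtain ⟨m₁, hm₁, m₂, hm₂, rfl⟩ := Submodule.mem_sup.1 hm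
  rw [IsLocalizedModule.mk'_add]
  exact Submodule.add_mem_sup ⟨m₁, hm₁, s, rfl⟩ ⟨m₂, hm₂, s, rfl⟩

lemma localized₀_inf (X Y : Submodule R M) :
    (X ⊓ Y).localized₀ p f = X.localized₀ p f ⊓ Y.localized₀ p f := by
  refine le_antisymm (le_inf (localized₀_mono p f inf_le_left)
    (localized₀_mono p f inf_le_right)) ?_
  rintro x ⟨⟨m, hm, s, rfl⟩, n, hn, t, he⟩
  obtain ⟨c, hc⟩ := (IsLocalizedModule.mk'_eq_mk'_iff f n m t s).1 he
  refine ⟨(c * t) • m, ⟨Submodule.smul_mem _ _ hm, ?_⟩, c * t * s, ?_⟩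
  · rw [mul_smul, hc, ← mul_smul]
    exact Submodule.smul_mem _ _ hn
  · rw [IsLocalizedModule.mk'_eq_mk'_iff]
    refine ⟨1, ?_⟩
    simp only [one_smul, mul_smul]
    rw [smul_comm s c, smul_comm s t]

end lemmas

section key

variable {A E : Type*} [CommRing A] [AddCommGroup E] [Module A E]

lemma key_distrib (hd : ∀ M N P : Submodule A E, (M ⊔ N) ⊓ P = (M ⊓ P) ⊔ (N ⊓ P))
    (m n : E) : ∃ a : A, a • n ∈ span A {m} ∧ (1 - a) • m ∈ span A {n} := by
  have h := hd (span A {m}) (span A {n}) (span A {m + n})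
  have hmem : m + n ∈ (span A {m} ⊔ span A {n}) ⊓ span A {m + n} := by
    refine ⟨Submodule.add_mem_sup ?_ ?_, Submodule.mem_span_singleton_self _⟩ <;>
      exact Submodule.mem_span_singleton_self _
  rw [h, Submodule.mem_sup] at hmem
  obtain ⟨u, hu, v, hv, huv⟩ := hmem
  obtain ⟨a, ha⟩ := Submodule.mem_span_singleton.1 hu.2
  refine ⟨a, ?_, ?_⟩
  · have : a • n = u - a • m := by
      rw [← ha, smul_add]; abel
    rw [this]
    exact Submodule.sub_mem _ hu.1 (Submodule.smul_mem _ _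
      (Submodule.mem_span_singleton_self _))
  · have hv' : v = (1 - a) • (m + n) := by
      rw [sub_smul, one_smul, ha, ← huv]; abel
    have : (1 - a) • m = v - (1 - a) • n := by
      rw [hv', smul_add]; abel
    rw [this]
    exact Submodule.sub_mem _ hv.1 (Submodule.smul_mem _ _
      (Submodule.mem_span_singleton_self _))

lemma unit_smul_mem_span {R' M' : Type*} [CommRing R'] [AddCommGroup M'] [Module R' M']
    {c : R'} (hc : IsUnit c) {x z : M'} (h : c • x ∈ span R' {z}) : x ∈ span R' {z} := by
  obtain ⟨u, rfl⟩ := hc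
  have h2 := Submodule.smul_mem _ ((↑u⁻¹ : R')) h
  rwa [smul_smul, Units.inv_mul, one_smul] at h2

end key

/-- an `A`-module `E` has a distributive lattice of submodules iff
`E_P` is a uniserial `A_P`-module for every maximal ideal `P` of `A`. -/
theorem distributive_submodules_iff_locally_uniserial {A E : Type*} [CommRing A]
    [AddCommGroup E] [Module A E] :
    (∀ M N P : Submodule A E, (M ⊔ N) ⊓ P = (M ⊓ P) ⊔ (N ⊓ P)) ↔
      (∀ (P : Ideal A), ∀ hP : P.IsMaximal,
        haveI : P.IsPrime := hP.isPrime
        ∀ M N : Submodule (Localization P.primeCompl) (LocalizedModule P.primeCompl E),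
          M ≤ N ∨ N ≤ M) := by
  constructor
  · intro hd P hP
    haveI : P.IsPrime := hP.isPrime
    intro M N
    set R' := Localization P.primeCompl
    set f := LocalizedModule.mkLinearMap P.primeCompl E
    -- spans of localized elements
    have hspan : ∀ (m : E) (s : P.primeCompl),
        span R' {IsLocalizedModule.mk' f m s} = span R' {f m} := by
      intro m s
      have hu : IsUnit (algebraMap A R' (s : A)) := IsLocalization.map_units R' s
      have hc : (algebraMap A R' (s : A)) • IsLocalizedModule.mk' f m s = f m := by
        rw [algebraMap_smul, ← Submonoid.smul_def, IsLocalizedModule.mk'_cancel']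
      rw [← hc, Submodule.span_singleton_smul_eq hu]
    have claim : ∀ x y : LocalizedModule P.primeCompl E,
        span R' {x} ≤ span R' {y} ∨ span R' {y} ≤ span R' {x} := by
      intro x y
      obtain ⟨⟨m, s⟩, rfl⟩ := IsLocalizedModule.mk'_surjective P.primeCompl f x
      obtain ⟨⟨n, t⟩, rfl⟩ := IsLocalizedModule.mk'_surjective P.primeCompl f y
      simp only [Function.uncurry_apply_pair]
      rw [hspan m s, hspan n t]
      obtain ⟨a, h1, h2⟩ := key_distrib hd m n
      by_cases ha : a ∈ P
      · left
        rw [Submodule.span_singleton_le_iff_mem]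
        have hna : (1 : A) - a ∉ P := fun h => hP.ne_top (P.eq_top_of_isUnit_mem
          (by simpa using P.add_mem h ha) isUnit_one)
        obtain ⟨c, hc⟩ := Submodule.mem_span_singleton.1 h2
        refine unit_smul_mem_span (IsLocalization.map_units R'
          (⟨1 - a, hna⟩ : P.primeCompl)) ?_
        have : (algebraMap A R' (1 - a)) • f m = (algebraMap A R' c) • f n := by
          rw [algebraMap_smul, algebraMap_smul, ← map_smul, ← map_smul, hc]
        rw [this]
        exact Submodule.smul_mem _ _ (Submodule.mem_span_singleton_self _)
      · right
        rw [Submodule.span_singleton_le_iff_mem]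
        obtain ⟨c, hc⟩ := Submodule.mem_span_singleton.1 h1
        refine unit_smul_mem_span (IsLocalization.map_units R'
          (⟨a, ha⟩ : P.primeCompl)) ?_
        have : (algebraMap A R' a) • f n = (algebraMap A R' c) • f m := by
          rw [algebraMap_smul, algebraMap_smul, ← map_smul, ← map_smul, hc]
        rw [this]
        exact Submodule.smul_mem _ _ (Submodule.mem_span_singleton_self _)
    by_contra hcon
    push_neg at hcon
    obtain ⟨hMN, hNM⟩ := hcon
    obtain ⟨x, hxM, hxN⟩ := Set.not_subset.1 hMN
    obtain ⟨y, hyN, hyM⟩ := Set.not_subset.1 hNM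
    rcases claim x y with h | h
    · exact hxN ((Submodule.span_singleton_le_iff_mem y N).2 hyN
        (h (Submodule.mem_span_singleton_self x)))
    · exact hyM ((Submodule.span_singleton_le_iff_mem x M).2 hxM
        (h (Submodule.mem_span_singleton_self y)))
  · intro h M N P'
    refine le_antisymm ?_ (sup_le (inf_le_inf_right _ le_sup_left)
      (inf_le_inf_right _ le_sup_right))
    apply Submodule.le_of_localization_maximal
      (fun P _ => LocalizedModule P.primeCompl E)
      (fun P _ => LocalizedModule.mkLinearMap P.primeCompl E)
    intro P hP
    set p := P.primeCompl
    set f := LocalizedModule.mkLinearMap p E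
    rw [_root_.localized₀_inf, _root_.localized₀_sup, _root_.localized₀_sup, _root_.localized₀_inf,
      _root_.localized₀_inf]
    have hcomp : M.localized₀ p f ≤ N.localized₀ p f ∨
        N.localized₀ p f ≤ M.localized₀ p f := by
      haveI : P.IsPrime := hP.isPrime
      have := h P hP (M.localized' (Localization p) p f) (N.localized' (Localization p) p f)
      rcases this with h' | h'
      · left
        intro x hx
        rw [← Submodule.restrictScalars_localized' (Localization p)] at hx ⊢
        exact h' hx
      · right
        intro x hx
        rw [← Submodule.restrictScalars_localized' (Localization p)] at hx ⊢
        exact h' hx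
    rcases hcomp with h' | h'
    · rw [sup_eq_right.mpr h']
      exact le_sup_right
    · rw [sup_eq_left.mpr h']
      exact le_sup_left
end

section
/- Let A be a commutative ring, E an A-module, R = A ⋉ E the trivial extension, S a multiplicative subset of R, and S' the image of S under the projection (a,x) ↦ a. Then the localization S⁻¹R is isomorphic as a ring to the trivial extension S'⁻¹A ⋉ S'⁻¹E. -/
open TrivSqZeroExt

/-- `S⁻¹(A ⋉ E) ≅ (S'⁻¹A) ⋉ (S'⁻¹E)` as rings, where `S'` is the image of `S`
under the first projection `(a, x) ↦ a`. -/
theorem localization_trivSqZeroExt {A E : Type*} [CommRing A] [AddCommGroup E]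
    [Module A E] [Module Aᵐᵒᵖ E] [IsCentralScalar A E]
    (S : Submonoid (TrivSqZeroExt A E)) (S' : Submonoid A)
    (hS' : S' = S.map
      (⟨⟨TrivSqZeroExt.fst, TrivSqZeroExt.fst_one⟩, TrivSqZeroExt.fst_mul⟩ :
        TrivSqZeroExt A E →* A)) :
    letI : Module (Localization S')ᵐᵒᵖ (LocalizedModule S' E) :=
      Module.compHom (LocalizedModule S' E)
        ((RingHom.id (Localization S')).fromOpposite mul_comm)
    haveI : IsCentralScalar (Localization S') (LocalizedModule S' E) :=
      ⟨fun _ _ => rfl⟩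
    Nonempty
      (Localization S ≃+*
        TrivSqZeroExt (Localization S') (LocalizedModule S' E)) := by
  letI : Module (Localization S')ᵐᵒᵖ (LocalizedModule S' E) :=
    Module.compHom (LocalizedModule S' E)
      ((RingHom.id (Localization S')).fromOpposite mul_comm)
  haveI : IsCentralScalar (Localization S') (LocalizedModule S' E) :=
    ⟨fun _ _ => rfl⟩
  set L := Localization S' with hL
  set T := TrivSqZeroExt L (LocalizedModule S' E) with hT
  -- membership transfer
  have hmem : ∀ a : A, a ∈ S' ↔ ∃ x ∈ S, TrivSqZeroExt.fst x = a := by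
    subst hS'; intro a
    simp [Submonoid.mem_map]
  -- smul facts
  have hsm : ∀ (a : A) (m : E), (algebraMap A L a) • LocalizedModule.mk m (1 : S') =
      LocalizedModule.mk (a • m) (1 : S') := fun a m => by
    rw [← Localization.mk_one_eq_algebraMap, LocalizedModule.mk_smul_mk, one_mul]
  have hop : ∀ (r : L) (m : LocalizedModule S' E), MulOpposite.op r • m = r • m :=
    fun _ _ => rfl
  have hopE : ∀ (a : A) (m : E), MulOpposite.op a • m = a • m :=
    fun a m => op_smul_eq_smul a m
  -- fst/snd of `inl r + inr m`
  have hfstT : ∀ (r : L) (m : LocalizedModule S' E),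
      TrivSqZeroExt.fst (inl r + inr m : T) = r := by
    intro r m; rw [fst_add, fst_inl, fst_inr, add_zero]
  have hsndT : ∀ (r : L) (m : LocalizedModule S' E),
      TrivSqZeroExt.snd (inl r + inr m : T) = m := by
    intro r m; rw [snd_add, snd_inl, snd_inr, zero_add]
  have hfstA : ∀ (r : A) (m : E),
      TrivSqZeroExt.fst (inl r + inr m : TrivSqZeroExt A E) = r := by
    intro r m; rw [fst_add, fst_inl, fst_inr, add_zero]
  have hsndA : ∀ (r : A) (m : E),
      TrivSqZeroExt.snd (inl r + inr m : TrivSqZeroExt A E) = m := by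
    intro r m; rw [snd_add, snd_inl, snd_inr, zero_add]
  -- the ring hom
  let g : TrivSqZeroExt A E →+* T :=
    { toFun := fun x => inl (algebraMap A L x.fst) + inr (LocalizedModule.mk x.snd 1)
      map_one' := by
        apply TrivSqZeroExt.ext
        · rw [hfstT, fst_one, map_one, fst_one]
        · rw [hsndT, snd_one, snd_one, LocalizedModule.zero_mk]
      map_mul' := fun x y => by
        apply TrivSqZeroExt.ext
        · rw [hfstT, fst_mul (R := L), hfstT, hfstT, fst_mul, map_mul]
        · rw [hsndT, snd_mul (R := L), hfstT, hfstT, hsndT, hsndT, snd_mul, hop, hopE,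
            hsm, hsm, LocalizedModule.mk_add_mk]
          simp
      map_zero' := by
        apply TrivSqZeroExt.ext
        · rw [hfstT, fst_zero, map_zero, fst_zero]
        · rw [hsndT, snd_zero, snd_zero, LocalizedModule.zero_mk]
      map_add' := fun x y => by
        apply TrivSqZeroExt.ext
        · rw [hfstT, fst_add (R := L), hfstT, hfstT, fst_add, map_add]
        · rw [hsndT, snd_add (R := L), hsndT, hsndT, snd_add, LocalizedModule.mk_add_mk]
          simp }
  have hgfst : ∀ x : TrivSqZeroExt A E, (g x).fst = algebraMap A L x.fst := by
    intro x; exact hfstT _ _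
  have hgsnd : ∀ x : TrivSqZeroExt A E, (g x).snd = LocalizedModule.mk x.snd 1 := by
    intro x; exact hsndT _ _
  letI : Algebra (TrivSqZeroExt A E) T := g.toAlgebra
  have halg : ∀ x, algebraMap (TrivSqZeroExt A E) T x = g x := fun _ => rfl
  haveI : IsLocalization S T := by
    refine { map_units := ?_, surj := ?_, exists_of_eq := ?_ }
    · rintro ⟨y, hy⟩
      rw [halg, isUnit_iff_isUnit_fst, hgfst]
      exact IsLocalization.map_units L ⟨y.fst, (hmem _).2 ⟨y, hy, rfl⟩⟩
    · intro z
      obtain ⟨a, u, hz1⟩ : ∃ a u, z.fst = Localization.mk a u := by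
        induction TrivSqZeroExt.fst z using Localization.induction_on with
        | _ p => exact ⟨p.1, p.2, rfl⟩
      obtain ⟨e, t', hz2⟩ : ∃ e t', z.snd = LocalizedModule.mk e t' := by
        induction z.snd using LocalizedModule.induction_on with
        | _ m s => exact ⟨m, s, rfl⟩
      obtain ⟨σ, hσS, hσ⟩ := (hmem u).1 u.2
      obtain ⟨τ, hτS, hτ⟩ := (hmem t').1 t'.2
      set s : A := (u : A) with hs
      set t : A := (t' : A) with ht
      set d : E := (σ * τ).snd + t • σ.snd with hd
      have hcfst : (σ * (σ * τ)).fst = s * (s * t) := by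
        rw [fst_mul, fst_mul, hσ, hτ]
      have hcsnd : (σ * (σ * τ)).snd = s • d := by
        rw [hd, smul_add, smul_smul, snd_mul, hopE, hσ, fst_mul, hσ, hτ]
      refine ⟨⟨inl (a * s * t) + inr (a • d + (s * s) • e),
        ⟨σ * (σ * τ), S.mul_mem hσS (S.mul_mem hσS hτS)⟩⟩, ?_⟩
      rw [halg, halg]
      dsimp only
      apply TrivSqZeroExt.ext
      · rw [fst_mul (R := L), hgfst, hgfst, hfstA, hz1, hcfst, ← Localization.mk_one_eq_algebraMap,
          ← Localization.mk_one_eq_algebraMap, Localization.mk_mul,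
          Localization.mk_eq_mk_iff, Localization.r_iff_exists]
        refine ⟨1, ?_⟩
        simp only [Submonoid.coe_one, one_mul, ← hs]
        ring_nf
        simp only [hs]
        ring
      · rw [snd_mul (R := L), hgfst, hgsnd, hgsnd, hsndA, hop, hz1, hz2, hcfst, hcsnd,
          ← Localization.mk_one_eq_algebraMap]
        have h1 : (Localization.mk a u) • LocalizedModule.mk (s • d) (1 : S') =
            LocalizedModule.mk (a • d) (1 : S') := by
          rw [LocalizedModule.mk_smul_mk, LocalizedModule.mk_eq]
          refine ⟨1, ?_⟩
          simp only [one_smul, Submonoid.smul_def, Submonoid.coe_mul, Submonoid.coe_one,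
            mul_one, smul_smul, ← hs]
          rw [mul_comm]
        have h2 : (Localization.mk (s * (s * t)) (1 : S')) • LocalizedModule.mk e t' =
            LocalizedModule.mk ((s * s) • e) (1 : S') := by
          rw [LocalizedModule.mk_smul_mk, LocalizedModule.mk_eq]
          refine ⟨1, ?_⟩
          simp only [one_smul, Submonoid.smul_def, Submonoid.coe_mul, Submonoid.coe_one,
            one_mul, smul_smul, ← ht]
          rw [mul_comm t (s * s), ← mul_assoc]
        rw [h1, h2, LocalizedModule.mk_add_mk]
        simp
    · intro x y hxy
      rw [halg, halg] at hxy
      have h1 : algebraMap A L x.fst = algebraMap A L y.fst := by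
        have := congrArg TrivSqZeroExt.fst hxy
        rwa [hgfst, hgfst] at this
      have h2 : LocalizedModule.mk x.snd (1 : S') = LocalizedModule.mk y.snd (1 : S') := by
        have := congrArg TrivSqZeroExt.snd hxy
        rwa [hgsnd, hgsnd] at this
      obtain ⟨c, hc⟩ := IsLocalization.exists_of_eq (M := S') (S := L) h1
      obtain ⟨u, hu⟩ := LocalizedModule.mk_eq.1 h2
      simp only [one_smul, Submonoid.smul_def] at hu
      obtain ⟨σ, hσS, hσ⟩ := (hmem c).1 c.2
      obtain ⟨τ, hτS, hτ⟩ := (hmem u).1 u.2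
      refine ⟨⟨σ * (σ * τ), S.mul_mem hσS (S.mul_mem hσS hτS)⟩, ?_⟩
      dsimp only
      have hwfst : (σ * (σ * τ)).fst = (c : A) * ((c : A) * (u : A)) := by
        rw [fst_mul, fst_mul, hσ, hτ]
      have hwsnd : (σ * (σ * τ)).snd = (c : A) • ((σ * τ).snd + (u : A) • σ.snd) := by
        rw [smul_add, smul_smul, snd_mul, hopE, hσ, fst_mul, hσ, hτ]
      apply TrivSqZeroExt.ext
      · rw [fst_mul (σ * (σ * τ)) x, fst_mul (σ * (σ * τ)) y, hwfst]
        have key : ∀ z : A, (c : A) * ((c : A) * (u : A)) * z =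
            (c : A) * (u : A) * ((c : A) * z) := by intro z; ring
        rw [key, key, hc]
      · rw [snd_mul (σ * (σ * τ)) x, snd_mul (σ * (σ * τ)) y, hopE, hopE, hwfst, hwsnd]
        congr 1
        · have key : (c : A) * ((c : A) * (u : A)) = (c : A) * (c : A) * (u : A) := by ring
          simp only [key, mul_smul]
          rw [hu]
        · rw [smul_smul, smul_smul, mul_comm x.fst, mul_comm y.fst, hc]
  exact ⟨(IsLocalization.algEquiv S (Localization S) T).toRingEquiv⟩
end

section
/- Let A be a commutative ring, E a nonzero A-module, and R = A ⋉ E. Then R is arithmetical if and only if: A is arithmetical, A_P is an integral domain for every prime P in the support of E, E is locally FP-injective, and E has a distributive lattice of submodules. -/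
/-- A ring is arithmetical if its lattice of ideals is distributive. -/
def ArithmeticalRing (R : Type*) [CommRing R] : Prop :=
  ∀ I J K : Ideal R, (I ⊔ J) ⊓ K = (I ⊓ K) ⊔ (J ⊓ K)

/-- `M` is FP-injective over `R`: every homomorphism from a finitely generated submodule of a
finite free module `Rⁿ` into `M` extends to `Rⁿ` (equivalently, `Ext¹_R(F, M) = 0` for every
finitely presented `R`-module `F`). -/
def IsFPInjective (R M : Type*) [CommRing R] [AddCommGroup M] [Module R M] : Prop :=
  ∀ (n : ℕ) (K : Submodule R (Fin n → R)), K.FG →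
    ∀ f : K →ₗ[R] M, ∃ g : (Fin n → R) →ₗ[R] M, ∀ k : K, g k = f k


section DistribPair
variable {A : Type*} [CommRing A] {M : Type*} [AddCommGroup M] [Module A M]

theorem distrib_iff_pair :
    (∀ X Y Z : Submodule A M, (X ⊔ Y) ⊓ Z = (X ⊓ Z) ⊔ (Y ⊓ Z)) ↔
      (∀ e f : M, ∃ s r u : A, s • f = r • e ∧ (1 - s) • e = u • f) := by
  constructor
  · intro h e f
    have he : e + f ∈ ((Submodule.span A {e} ⊔ Submodule.span A {f}) ⊓ Submodule.span A {e + f}) :=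
      ⟨Submodule.add_mem_sup (Submodule.mem_span_singleton_self e)
        (Submodule.mem_span_singleton_self f), Submodule.mem_span_singleton_self _⟩
    rw [h] at he
    obtain ⟨x, hx, y, hy, hxy⟩ := Submodule.mem_sup.mp he
    obtain ⟨r, hr⟩ := Submodule.mem_span_singleton.mp hx.1
    obtain ⟨s, hs⟩ := Submodule.mem_span_singleton.mp hx.2
    obtain ⟨u, hu⟩ := Submodule.mem_span_singleton.mp hy.1
    refine ⟨s, r - s, u - (1 - s), ?_, ?_⟩
    · have : s • f = x - s • e := by
        rw [← hs, smul_add]; abel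
      rw [this, ← hr]; exact (sub_smul r s e).symm
    · have hy' : (1 - s) • (e + f) = y := by
        rw [sub_smul, one_smul, hs, ← hxy]; abel
      have : (1 - s) • e = y - (1 - s) • f := by
        rw [← hy', smul_add]; abel
      rw [this, ← hu]; exact (sub_smul u (1 - s) f).symm
  · intro h X Y Z
    refine le_antisymm ?_ (sup_le (inf_le_inf_right Z le_sup_left)
      (inf_le_inf_right Z le_sup_right))
    rintro z ⟨hz1, hz2⟩
    obtain ⟨x, hx, y, hy, rfl⟩ := Submodule.mem_sup.mp hz1
    obtain ⟨s, r, u, h1, h2⟩ := h x y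
    refine Submodule.mem_sup.mpr ⟨s • (x + y), ⟨?_, Z.smul_mem s hz2⟩,
      (1 - s) • (x + y), ⟨?_, Z.smul_mem _ hz2⟩, ?_⟩
    · have : s • (x + y) = (s + r) • x := by rw [smul_add, h1, add_smul]
      rw [this]; exact X.smul_mem _ hx
    · have : (1 - s) • (x + y) = (u + (1 - s)) • y := by rw [smul_add, h2, add_smul]
      rw [this]; exact Y.smul_mem _ hy
    · rw [← add_smul]; simp

end DistribPair

theorem arithmetical_iff_pair {R : Type*} [CommRing R] :
    ArithmeticalRing R ↔ ∀ x y : R, ∃ s r u : R, s * y = r * x ∧ (1 - s) * x = u * y := by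
  have h := distrib_iff_pair (A := R) (M := R)
  simp only [smul_eq_mul] at h
  exact h


section LocalBridge
variable {A : Type*} [CommRing A] {E : Type*} [AddCommGroup E] [Module A E]
variable (P : Ideal A) [P.IsPrime]

lemma not_mem_or_not_mem (s : A) : s ∉ P ∨ (1 - s) ∉ P := by
  by_contra h
  push_neg at h
  exact (‹P.IsPrime›.ne_top) (Ideal.eq_top_iff_one P |>.mpr
    (by simpa using P.add_mem h.1 h.2))

lemma isUnit_mk_one (s : P.primeCompl) : IsUnit (Localization.mk (1 : A) s) :=
  IsUnit.of_mul_eq_one (Localization.mk (s : A) 1)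
    (by rw [Localization.mk_mul, one_mul, mul_one]; exact Localization.mk_self s)

lemma loc_mk_decomp (a : A) (s : P.primeCompl) :
    Localization.mk a s = Localization.mk 1 s * Localization.mk a 1 := by
  rw [Localization.mk_mul, one_mul, mul_one]

lemma loc_mk_eq_zero_iff (a : A) (s : P.primeCompl) :
    Localization.mk a s = 0 ↔ ∃ t, t ∉ P ∧ t * a = 0 := by
  rw [← Localization.mk_zero s, Localization.mk_eq_mk_iff, Localization.r_iff_exists]
  constructor
  · rintro ⟨c, hc⟩
    refine ⟨(c : A) * s, fun h => ?_, by push_cast at hc ⊢; linear_combination hc⟩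
    rcases ‹P.IsPrime›.mem_or_mem h with h | h
    exacts [c.2 h, s.2 h]
  · rintro ⟨t, ht, h⟩
    exact ⟨⟨t, ht⟩, by push_cast; linear_combination (s : A) * h⟩

lemma loc_mk_one_eq_iff (a b : A) :
    Localization.mk a (1 : P.primeCompl) = Localization.mk b 1 ↔
      ∃ t, t ∉ P ∧ t * a = t * b := by
  rw [Localization.mk_eq_mk_iff, Localization.r_iff_exists]
  constructor
  · rintro ⟨c, hc⟩
    exact ⟨c, c.2, by simpa using hc⟩
  · rintro ⟨t, ht, h⟩
    exact ⟨⟨t, ht⟩, by simpa using h⟩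

lemma loc_mk_cancel_left (t : P.primeCompl) (a : A) :
    Localization.mk ((t : A) * a) t = Localization.mk a 1 := by
  rw [Localization.mk_eq_mk_iff, Localization.r_iff_exists]
  exact ⟨1, by push_cast; ring⟩

lemma lm_mk_one_eq_iff (e f : E) :
    LocalizedModule.mk e (1 : P.primeCompl) = LocalizedModule.mk f 1 ↔
      ∃ t, t ∉ P ∧ t • e = t • f := by
  rw [LocalizedModule.mk_eq]
  constructor
  · rintro ⟨c, hc⟩
    refine ⟨(c : A), c.2, by simpa [Submonoid.smul_def] using hc⟩
  · rintro ⟨t, ht, h⟩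
    exact ⟨⟨t, ht⟩, by simpa [Submonoid.smul_def] using h⟩

lemma lm_mk_eq_zero_iff (e : E) (s : P.primeCompl) :
    LocalizedModule.mk e s = 0 ↔ ∃ t, t ∉ P ∧ t • e = 0 := by
  rw [← LocalizedModule.zero_mk s, LocalizedModule.mk_eq]
  constructor
  · rintro ⟨c, hc⟩
    refine ⟨(c : A) * s, fun h => ?_, ?_⟩
    · rcases ‹P.IsPrime›.mem_or_mem h with h | h
      exacts [c.2 h, s.2 h]
    · have := hc
      simp only [Submonoid.smul_def, smul_smul, smul_zero] at this ⊢
      exact this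
  · rintro ⟨t, ht, h⟩
    refine ⟨⟨t, ht⟩, ?_⟩
    simp only [Submonoid.smul_def, smul_smul, smul_zero]
    rw [mul_comm, mul_smul, h, smul_zero]

lemma lm_mk_decomp (e : E) (s : P.primeCompl) :
    LocalizedModule.mk e s = Localization.mk (1 : A) s • LocalizedModule.mk e 1 := by
  rw [LocalizedModule.mk_smul_mk, one_smul, mul_one]

lemma loc_exists_mk (z : Localization P.primeCompl) :
    ∃ (a : A) (s : P.primeCompl), z = Localization.mk a s :=
  Localization.induction_on z fun p => ⟨p.1, p.2, rfl⟩

lemma lm_exists_mk (φ : LocalizedModule P.primeCompl E) :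
    ∃ (e : E) (s : P.primeCompl), φ = LocalizedModule.mk e s :=
  LocalizedModule.induction_on (fun e s => ⟨e, s, rfl⟩) φ

lemma nontrivial_lm_iff :
    Nontrivial (LocalizedModule P.primeCompl E) ↔ ∃ e : E, ∀ t ∉ P, t • e ≠ 0 := by
  constructor
  · intro h
    obtain ⟨φ, hφ⟩ := exists_ne (0 : LocalizedModule P.primeCompl E)
    obtain ⟨e, s, rfl⟩ := lm_exists_mk P φ
    exact ⟨e, fun t ht hte => hφ ((lm_mk_eq_zero_iff P e s).mpr ⟨t, ht, hte⟩)⟩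
  · rintro ⟨e, he⟩
    refine ⟨LocalizedModule.mk e 1, 0, fun h => ?_⟩
    obtain ⟨t, ht, hte⟩ := (lm_mk_eq_zero_iff P e 1).mp h
    exact he t ht hte

lemma unit_mul_dvd {α : Type*} [CommRing α] {u v m n : α} (hu : IsUnit u) (hv : IsUnit v)
    (h : m ∣ n) : u * m ∣ v * n := by
  obtain ⟨c, rfl⟩ := h
  refine ⟨(hu.unit⁻¹ : αˣ) * v * c, ?_⟩
  calc v * (m * c) = ((hu.unit : α) * (hu.unit⁻¹ : αˣ)) * (v * (m * c)) := by
        rw [Units.mul_inv, one_mul]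
    _ = u * m * ((hu.unit⁻¹ : αˣ) * v * c) := by rw [IsUnit.unit_spec]; ring

lemma chain_loc (hA : ∀ a b : A, ∃ s r u : A, s * b = r * a ∧ (1 - s) * a = u * b) :
    ∀ x y : Localization P.primeCompl, x ∣ y ∨ y ∣ x := by
  have key : ∀ (a b : A) (s : A), s ∉ P → ∀ r, s * b = r * a →
      Localization.mk a (1 : P.primeCompl) ∣ Localization.mk b 1 := by
    intro a b s hs r h1
    refine ⟨Localization.mk r ⟨s, hs⟩, ?_⟩
    rw [Localization.mk_mul, one_mul, Localization.mk_eq_mk_iff, Localization.r_iff_exists]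
    exact ⟨1, by push_cast; linear_combination h1⟩
  intro x y
  obtain ⟨a, s, rfl⟩ := loc_exists_mk P x
  obtain ⟨b, t, rfl⟩ := loc_exists_mk P y
  rw [loc_mk_decomp P a s, loc_mk_decomp P b t]
  obtain ⟨c, r, u, h1, h2⟩ := hA a b
  rcases not_mem_or_not_mem P c with hc | hc
  · exact Or.inl (unit_mul_dvd (isUnit_mk_one P s) (isUnit_mk_one P t) (key a b c hc r h1))
  · exact Or.inr (unit_mul_dvd (isUnit_mk_one P t) (isUnit_mk_one P s) (key b a (1 - c) hc u h2))

lemma isDomain_loc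
    (hd : ∀ a b : A, a * b = 0 → (∃ t, t ∉ P ∧ t * a = 0) ∨ (∃ t, t ∉ P ∧ t * b = 0)) :
    IsDomain (Localization P.primeCompl) := by
  haveI : Nontrivial (Localization P.primeCompl) :=
    IsLocalization.AtPrime.nontrivial (Localization P.primeCompl) P
  haveI : NoZeroDivisors (Localization P.primeCompl) := by
    constructor
    intro x y hxy
    obtain ⟨a, s, rfl⟩ := loc_exists_mk P x
    obtain ⟨b, t, rfl⟩ := loc_exists_mk P y
    rw [Localization.mk_mul] at hxy
    obtain ⟨u, hu, huab⟩ := (loc_mk_eq_zero_iff P (a * b) (s * t)).mp hxy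
    rcases hd a (u * b) (by linear_combination huab) with ⟨w, hw, hwa⟩ | ⟨w, hw, hwb⟩
    · exact Or.inl ((loc_mk_eq_zero_iff P a s).mpr ⟨w, hw, hwa⟩)
    · refine Or.inr ((loc_mk_eq_zero_iff P b t).mpr ⟨w * u, fun h => ?_, by linear_combination hwb⟩)
      rcases ‹P.IsPrime›.mem_or_mem h with h | h
      exacts [hw h, hu h]
  exact NoZeroDivisors.to_isDomain _

lemma divisible_loc
    (hdiv : ∀ a : A, (∀ t, t ∉ P → t * a ≠ 0) → ∀ f : E, ∃ s, s ∉ P ∧ ∃ ρ : E, s • f = a • ρ) :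
    ∀ z : Localization P.primeCompl, z ≠ 0 →
      ∀ φ : LocalizedModule P.primeCompl E, ∃ ψ, z • ψ = φ := by
  intro z hz φ
  obtain ⟨a, s, rfl⟩ := loc_exists_mk P z
  obtain ⟨f, t, rfl⟩ := lm_exists_mk P φ
  have ha : ∀ u, u ∉ P → u * a ≠ 0 := fun u hu hua =>
    hz ((loc_mk_eq_zero_iff P a s).mpr ⟨u, hu, hua⟩)
  obtain ⟨s0, hs0, ρ, hρ⟩ := hdiv a ha f
  refine ⟨LocalizedModule.mk ((s : A) • ρ) (⟨s0, hs0⟩ * t), ?_⟩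
  rw [LocalizedModule.mk_smul_mk, LocalizedModule.mk_eq]
  refine ⟨1, ?_⟩
  simp only [one_smul, Submonoid.smul_def, Submonoid.coe_mul, smul_smul]
  rw [show ((t : A) * (a * (s : A))) = (((t : A) * (s : A)) * a) from by ring, mul_smul, ← hρ,
    smul_smul]
  congr 1
  ring

lemma uniserial_loc (hE : ∀ e f : E, ∃ s r u : A, s • f = r • e ∧ (1 - s) • e = u • f) :
    ∀ φ ψ : LocalizedModule P.primeCompl E,
      (∃ c : Localization P.primeCompl, ψ = c • φ) ∨ (∃ c : Localization P.primeCompl, φ = c • ψ) := by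
  have key : ∀ (e f : E) (s : A), s ∉ P → ∀ r : A, s • f = r • e →
      ∃ c : Localization P.primeCompl,
        LocalizedModule.mk f (1 : P.primeCompl) = c • LocalizedModule.mk e 1 := by
    intro e f s hs r h1
    refine ⟨Localization.mk r ⟨s, hs⟩, ?_⟩
    rw [LocalizedModule.mk_smul_mk, mul_one, LocalizedModule.mk_eq]
    refine ⟨1, ?_⟩
    simp only [one_smul, Submonoid.smul_def, smul_smul, OneMemClass.coe_one, one_mul]
    rw [← h1]
  have lift : ∀ (e f : E) (s t : P.primeCompl) (c : Localization P.primeCompl),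
      LocalizedModule.mk f (1 : P.primeCompl) = c • LocalizedModule.mk e 1 →
      ∃ d : Localization P.primeCompl,
        LocalizedModule.mk f t = d • LocalizedModule.mk e s := by
    intro e f s t c hc
    refine ⟨Localization.mk 1 t * c * ((isUnit_mk_one P s).unit⁻¹ : _), ?_⟩
    rw [lm_mk_decomp P e s, lm_mk_decomp P f t, hc, smul_smul, smul_smul]
    congr 1
    rw [mul_assoc, mul_assoc]
    congr 1
    rw [IsUnit.val_inv_mul, mul_one]
  intro φ ψ
  obtain ⟨e, s, rfl⟩ := lm_exists_mk P φ
  obtain ⟨f, t, rfl⟩ := lm_exists_mk P ψ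
  obtain ⟨c, r, u, h1, h2⟩ := hE e f
  rcases not_mem_or_not_mem P c with hc | hc
  · obtain ⟨d, hd⟩ := key e f c hc r h1
    exact Or.inl (lift e f s t d hd)
  · obtain ⟨d, hd⟩ := key f e (1 - c) hc u h2
    exact Or.inr (lift f e t s d hd)

end LocalBridge


section Ext
variable {B : Type*} [CommRing B] {F : Type*} [AddCommGroup F] [Module B F]

lemma principal_of_fg (hchain : ∀ x y : B, x ∣ y ∨ y ∣ x) (I : Ideal B) (hI : I.FG) :
    ∃ a ∈ I, I = Ideal.span {a} := by
  obtain ⟨S, rfl⟩ := hI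
  classical
  induction S using Finset.induction_on with
  | empty =>
    refine ⟨0, by simp, ?_⟩
    rw [Ideal.span_singleton_eq_bot.mpr rfl]
    simp
  | @insert c S hcS ih =>
    obtain ⟨a, haI, ha⟩ := ih
    rcases hchain a c with h | h
    · refine ⟨a, Ideal.span_mono (by simp) haI, le_antisymm ?_ ?_⟩
      · rw [Finset.coe_insert, Ideal.span_insert, ha]
        refine sup_le ?_ le_rfl
        rw [Ideal.span_le, Set.singleton_subset_iff, SetLike.mem_coe,
          Ideal.mem_span_singleton]
        exact h
      · rw [← ha]
        exact Ideal.span_mono (by simp)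
    · refine ⟨c, Ideal.subset_span (by simp), le_antisymm ?_ ?_⟩
      · rw [Finset.coe_insert, Ideal.span_insert]
        refine sup_le ?_ ?_
        · rw [Ideal.span_le, Set.singleton_subset_iff]
          exact Ideal.subset_span rfl
        · rw [ha, Ideal.span_le, Set.singleton_subset_iff, SetLike.mem_coe,
            Ideal.mem_span_singleton]
          exact h
      · rw [Ideal.span_le, Set.singleton_subset_iff]
        exact SetLike.mem_coe.mpr (Ideal.subset_span (by simp))

noncomputable def tailMap (B : Type*) [CommRing B] (n : ℕ) :
    ((Fin (n + 1)) → B) →ₗ[B] (Fin n → B) :=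
  LinearMap.funLeft B B Fin.succ

noncomputable def consMap (B : Type*) [CommRing B] (n : ℕ) :
    (Fin n → B) →ₗ[B] (Fin (n + 1) → B) where
  toFun v := Fin.cons 0 v
  map_add' v w := by
    funext i
    refine Fin.cases ?_ (fun j => ?_) i <;> simp
  map_smul' c v := by
    funext i
    refine Fin.cases ?_ (fun j => ?_) i <;> simp

lemma tail_cons (n : ℕ) (v : Fin n → B) : tailMap B n (consMap B n v) = v := by
  funext i; simp [tailMap, consMap, LinearMap.funLeft]

lemma cons_tail (n : ℕ) (x : Fin (n + 1) → B) (hx : x 0 = 0) :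
    consMap B n (tailMap B n x) = x := by
  funext i
  refine Fin.cases ?_ (fun j => ?_) i
  · simp [consMap, hx]
  · simp [tailMap, consMap, LinearMap.funLeft]

lemma ext_lemma (hdom : ∀ x y : B, x * y = 0 → x = 0 ∨ y = 0)
    (hchain : ∀ x y : B, x ∣ y ∨ y ∣ x)
    (hdiv : ∀ x : B, x ≠ 0 → ∀ φ : F, ∃ ψ, x • ψ = φ) :
    IsFPInjective B F := by
  intro n
  induction n with
  | zero =>
    intro K hK f
    refine ⟨0, fun k => ?_⟩
    have hk : k = 0 := Subtype.ext (Subsingleton.elim _ _)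
    simp [hk]
  | succ n ih =>
    intro K hK f
    classical
    set π : ((Fin (n + 1)) → B) →ₗ[B] B := LinearMap.proj 0 with hπ
    have hIfg : (K.map π).FG := hK.map π
    obtain ⟨a, haI, haspan⟩ := principal_of_fg hchain (K.map π) hIfg
    have hcoef : ∀ v : Fin (n + 1) → B, ∃ c : B, v ∈ K → v 0 = c * a := by
      intro v
      by_cases hv : v ∈ K
      · have : π v ∈ K.map π := Submodule.mem_map_of_mem hv
        rw [haspan, Ideal.mem_span_singleton] at this
        obtain ⟨c, hc⟩ := this
        exact ⟨c, fun _ => by simpa [hπ, mul_comm] using hc⟩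
      · exact ⟨0, fun h => absurd h hv⟩
    choose co hco using hcoef
    by_cases ha : a = 0
    · have hzero : ∀ k ∈ K, k 0 = 0 := by
        intro k hk
        rw [hco k hk, ha, mul_zero]
      set K' : Submodule B (Fin n → B) := K.map (tailMap B n) with hK'
      have hK'fg : K'.FG := hK.map _
      have hmem : ∀ k' : K', consMap B n (k' : Fin n → B) ∈ K := by
        rintro ⟨k', hk'⟩
        obtain ⟨k, hk, rfl⟩ := hk'
        simpa [cons_tail n k (hzero k hk)] using hk
      set ρ : K' →ₗ[B] K :=
        LinearMap.codRestrict K ((consMap B n) ∘ₗ K'.subtype) hmem with hρ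
      obtain ⟨g', hg'⟩ := ih K' hK'fg (f ∘ₗ ρ)
      refine ⟨g' ∘ₗ tailMap B n, fun k => ?_⟩
      have hmemk : tailMap B n (k : Fin (n + 1) → B) ∈ K' :=
        Submodule.mem_map_of_mem k.2
      have hgk := hg' ⟨tailMap B n (k : Fin (n + 1) → B), hmemk⟩
      simp only [LinearMap.coe_comp, Function.comp_apply] at hgk ⊢
      rw [hgk, hρ]
      congr 1
      apply Subtype.ext
      exact cons_tail n (k : Fin (n + 1) → B) (hzero _ k.2)
    · -- a ≠ 0
      obtain ⟨k0, hk0K, hk0⟩ := haI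
      have hk0' : k0 0 = a := by simpa [hπ] using hk0
      obtain ⟨S, hS⟩ := hK
      have hSK : ∀ v ∈ S, v ∈ K := fun v hv => hS ▸ Submodule.subset_span hv
      set T : Finset (Fin (n + 1) → B) := S.image (fun v => v - co v • k0) with hT
      have hTsub : (T : Set (Fin (n + 1) → B)) ⊆ ↑(K ⊓ LinearMap.ker π) := by
        intro x hx
        simp only [hT, Finset.coe_image, Set.mem_image, Finset.mem_coe] at hx
        obtain ⟨v, hv, rfl⟩ := hx
        have hvK : v ∈ K := hSK v hv
        refine ⟨K.sub_mem hvK (K.smul_mem _ hk0K), ?_⟩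
        simp only [SetLike.mem_coe, LinearMap.mem_ker, map_sub, map_smul, hπ,
          LinearMap.proj_apply, smul_eq_mul]
        rw [hco v hvK, hk0']
        ring
      have hK0 : K ⊓ LinearMap.ker π = Submodule.span B (T : Set (Fin (n + 1) → B)) := by
        apply le_antisymm
        · rintro k ⟨hkK, hkker⟩
          have hkS : k ∈ Submodule.span B (S : Set (Fin (n + 1) → B)) := hS ▸ hkK
          obtain ⟨d, -, hd⟩ := Submodule.mem_span_finset.mp hkS
          have h0 : k 0 = 0 := by simpa [hπ] using hkker
          have hker : (∑ v ∈ S, d v * co v) * a = 0 := by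
            calc (∑ v ∈ S, d v * co v) * a = ∑ v ∈ S, d v * (co v * a) := by
                  rw [Finset.sum_mul]; exact Finset.sum_congr rfl fun v _ => by ring
              _ = ∑ v ∈ S, d v * v 0 := Finset.sum_congr rfl fun v hv => by
                  rw [← hco v (hSK v hv)]
              _ = k 0 := by
                  rw [← hd]
                  simp [Finset.sum_apply]
              _ = 0 := h0
          have hker0 : (∑ v ∈ S, d v * co v) = 0 := by
            rcases hdom _ _ hker with h | h
            · exact h
            · exact absurd h ha
          have hrepr : k = ∑ v ∈ S, d v • (v - co v • k0) := by
            have expand : ∑ v ∈ S, d v • (v - co v • k0)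
                = (∑ v ∈ S, d v • v) - (∑ v ∈ S, d v * co v) • k0 := by
              calc ∑ v ∈ S, d v • (v - co v • k0)
                  = ∑ v ∈ S, (d v • v - (d v * co v) • k0) :=
                    Finset.sum_congr rfl fun v _ => by rw [smul_sub, smul_smul]
                _ = (∑ v ∈ S, d v • v) - (∑ v ∈ S, (d v * co v) • k0) :=
                    Finset.sum_sub_distrib _ _
                _ = (∑ v ∈ S, d v • v) - (∑ v ∈ S, d v * co v) • k0 := by
                    rw [← Finset.sum_smul]
            rw [expand, hd, hker0, zero_smul, sub_zero]
          rw [hrepr]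
          refine Submodule.sum_mem _ fun v hv => Submodule.smul_mem _ _ ?_
          apply Submodule.subset_span
          simp only [hT, Finset.coe_image, Set.mem_image, Finset.mem_coe]
          exact ⟨v, hv, rfl⟩
        · rw [Submodule.span_le]
          exact hTsub
      have hK0fg : (K ⊓ LinearMap.ker π).FG := ⟨T, hK0.symm⟩
      set K' : Submodule B (Fin n → B) := (K ⊓ LinearMap.ker π).map (tailMap B n) with hK'
      have hK'fg : K'.FG := hK0fg.map _
      have hcons : ∀ x : Fin (n + 1) → B, x ∈ K ⊓ LinearMap.ker π →
          consMap B n (tailMap B n x) = x := by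
        intro x hx
        exact cons_tail n x (by simpa [hπ] using hx.2)
      have hmem : ∀ k' : K', consMap B n (k' : Fin n → B) ∈ K := by
        rintro ⟨k', hk'⟩
        obtain ⟨k, hk, rfl⟩ := hk'
        simpa [hcons k hk] using hk.1
      set ρ : K' →ₗ[B] K :=
        LinearMap.codRestrict K ((consMap B n) ∘ₗ K'.subtype) hmem with hρ2
      obtain ⟨g', hg'⟩ := ih K' hK'fg (f ∘ₗ ρ)
      obtain ⟨v, hv⟩ := hdiv a ha (f ⟨k0, hk0K⟩ - g' (tailMap B n k0))
      refine ⟨g' ∘ₗ tailMap B n + π.smulRight v, fun k => ?_⟩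
      have hc : (k : Fin (n + 1) → B) 0 = co (k : Fin (n + 1) → B) * a :=
        hco _ k.2
      set c : B := co (k : Fin (n + 1) → B) with hcdef
      have hkk0 : (k : Fin (n + 1) → B) - c • k0 ∈ K ⊓ LinearMap.ker π := by
        refine ⟨K.sub_mem k.2 (K.smul_mem _ hk0K), ?_⟩
        simp only [SetLike.mem_coe, LinearMap.mem_ker, map_sub, map_smul, hπ,
          LinearMap.proj_apply, smul_eq_mul]
        rw [hc, hk0']
        ring
      have htail : tailMap B n ((k : Fin (n + 1) → B) - c • k0) ∈ K' :=
        Submodule.mem_map_of_mem hkk0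
      have hg'k := hg' ⟨_, htail⟩
      have hρval : ρ ⟨_, htail⟩ = ⟨(k : Fin (n + 1) → B), k.2⟩ - c • ⟨k0, hk0K⟩ := by
        apply Subtype.ext
        have := hcons _ hkk0
        exact this
      have hfρ : g' (tailMap B n ((k : Fin (n + 1) → B) - c • k0))
          = f k - c • f ⟨k0, hk0K⟩ := by
        rw [hg'k, LinearMap.comp_apply, hρval, map_sub, map_smul]
      have hgt : g' (tailMap B n ((k : Fin (n + 1) → B) - c • k0))
          = g' (tailMap B n (k : Fin (n + 1) → B)) - c • g' (tailMap B n k0) := by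
        rw [map_sub, map_smul, map_sub, map_smul]
      -- now compute g k
      have : (g' ∘ₗ tailMap B n + π.smulRight v) (k : Fin (n + 1) → B)
          = g' (tailMap B n (k : Fin (n + 1) → B)) + ((k : Fin (n + 1) → B) 0) • v := by
        simp [hπ, LinearMap.smulRight_apply]
      rw [this, hc]
      have comb := hgt.symm.trans hfρ
      have key : f k = g' (tailMap B n (k : Fin (n + 1) → B)) + c • (a • v) := by
        rw [hv]
        calc f k = (g' (tailMap B n (k : Fin (n + 1) → B)) - c • g' (tailMap B n k0))
              + c • f ⟨k0, hk0K⟩ := by rw [comb]; abel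
          _ = g' (tailMap B n (k : Fin (n + 1) → B))
              + c • (f ⟨k0, hk0K⟩ - g' (tailMap B n k0)) := by rw [smul_sub]; abel
      rw [key, smul_smul]
end Ext


lemma div_of_fpinj {B : Type*} [CommRing B] [IsDomain B] {F : Type*} [AddCommGroup F]
    [Module B F] (hfp : IsFPInjective B F) (x : B) (hx : x ≠ 0) (φ : F) :
    ∃ ψ : F, x • ψ = φ := by
  classical
  set f₀ : Fin 1 → B := fun _ => x with hf₀
  set ℓ : B →ₗ[B] (Fin 1 → B) := LinearMap.toSpanSingleton B _ f₀ with hℓ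
  have hinj : Function.Injective ℓ := by
    intro c d hcd
    have h2 : c * x = d * x := by
      have := congrFun (by exact congrArg (fun q : Fin 1 → B => q) hcd :
        (ℓ c : Fin 1 → B) = ℓ d) 0
      simpa [hℓ, hf₀, LinearMap.toSpanSingleton_apply, smul_eq_mul] using this
    exact mul_right_cancel₀ hx h2
  have hKfg : (LinearMap.range ℓ).FG := by
    rw [← LinearMap.span_singleton_eq_range]
    exact Submodule.fg_span_singleton _
  set e : B ≃ₗ[B] LinearMap.range ℓ := LinearEquiv.ofInjective ℓ hinj with he
  set fm : (LinearMap.range ℓ) →ₗ[B] F :=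
    (LinearMap.toSpanSingleton B F φ) ∘ₗ (e.symm : LinearMap.range ℓ →ₗ[B] B) with hfm
  obtain ⟨g, hg⟩ := hfp 1 (LinearMap.range ℓ) hKfg fm
  have hf₀mem : f₀ ∈ LinearMap.range ℓ := ⟨1, by simp [hℓ]⟩
  have he1 : e 1 = ⟨f₀, hf₀mem⟩ := by
    apply Subtype.ext
    simp [he, hℓ]
  have hsymm : e.symm ⟨f₀, hf₀mem⟩ = 1 := by
    rw [← he1, LinearEquiv.symm_apply_apply]
  have hfm1 : fm ⟨f₀, hf₀mem⟩ = φ := by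
    rw [hfm, LinearMap.comp_apply]
    simp only [LinearEquiv.coe_coe, hsymm]
    simp [LinearMap.toSpanSingleton_apply_one]
  have hg0 : g f₀ = φ := by
    have := hg ⟨f₀, hf₀mem⟩
    simpa [hfm1] using this
  refine ⟨g (fun _ => 1), ?_⟩
  rw [← map_smul, show (x • fun _ => (1 : B)) = f₀ from funext fun i => by
    simp [hf₀, smul_eq_mul], hg0]


section TSZE
variable {A : Type*} [CommRing A] {E : Type*} [AddCommGroup E] [Module A E]
  [Module Aᵐᵒᵖ E] [IsCentralScalar A E]

lemma inr_mem_maximal (Q : Ideal (TrivSqZeroExt A E)) (hQ : Q.IsMaximal) (σ : E) :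
    TrivSqZeroExt.inr σ ∈ Q := by
  refine hQ.isPrime.mem_of_pow_mem 2 ?_
  rw [pow_two, TrivSqZeroExt.inr_mul_inr]
  exact Q.zero_mem

lemma exists_maximal_comap (Q : Ideal (TrivSqZeroExt A E)) (hQ : Q.IsMaximal) :
    ∃ P : Ideal A, P.IsMaximal ∧ ∀ w : TrivSqZeroExt A E, w ∈ Q ↔ w.fst ∈ P := by
  set P : Ideal A := Q.comap (TrivSqZeroExt.inlHom A E) with hP
  have hiff : ∀ w : TrivSqZeroExt A E, w ∈ Q ↔ w.fst ∈ P := by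
    intro w
    constructor
    · intro hw
      have h1 : TrivSqZeroExt.inl w.fst = w - TrivSqZeroExt.inr w.snd := by
        apply TrivSqZeroExt.ext <;> simp
      show TrivSqZeroExt.inlHom A E w.fst ∈ Q
      have h2 : (TrivSqZeroExt.inlHom A E w.fst : TrivSqZeroExt A E)
          = TrivSqZeroExt.inl w.fst := rfl
      rw [h2, h1]
      exact Q.sub_mem hw (inr_mem_maximal Q hQ _)
    · intro hw
      have h1 : w = TrivSqZeroExt.inl w.fst + TrivSqZeroExt.inr w.snd :=
        (TrivSqZeroExt.inl_fst_add_inr_snd_eq w).symm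
      rw [h1]
      exact Q.add_mem hw (inr_mem_maximal Q hQ _)
  refine ⟨P, ?_, hiff⟩
  rw [Ideal.isMaximal_iff]
  constructor
  · intro h1
    have h2 : (1 : TrivSqZeroExt A E) ∈ Q := (hiff 1).mpr (by simpa using h1)
    exact hQ.ne_top (Q.eq_top_iff_one.mpr h2)
  · intro I xx hPI hxP hxI
    have hxQ : TrivSqZeroExt.inl xx ∉ Q := fun h => hxP (by simpa using (hiff _).mp h)
    obtain ⟨yy, i, hiQ, hsum⟩ := hQ.exists_inv hxQ
    have hfst : yy.fst * xx + i.fst = 1 := by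
      have := congrArg TrivSqZeroExt.fst hsum
      simpa using this
    have hiP : i.fst ∈ P := (hiff i).mp hiQ
    rw [← hfst]
    exact I.add_mem (I.mul_mem_left yy.fst hxI) (hPI hiP)

def divIdeal (x y : TrivSqZeroExt A E) : Ideal (TrivSqZeroExt A E) where
  carrier := {w | ∃ c, w * y = c * x}
  add_mem' := by
    rintro w1 w2 ⟨c1, h1⟩ ⟨c2, h2⟩
    exact ⟨c1 + c2, by rw [add_mul, h1, h2, add_mul]⟩
  zero_mem' := ⟨0, by rw [zero_mul, zero_mul]⟩
  smul_mem' := by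
    rintro b w ⟨c, h⟩
    exact ⟨b * c, by rw [smul_eq_mul, mul_assoc, h, mul_assoc]⟩

lemma mem_divIdeal {x y w : TrivSqZeroExt A E} : w ∈ divIdeal x y ↔ ∃ c, w * y = c * x :=
  Iff.rfl

end TSZE

section Bridge
variable {A : Type*} [CommRing A] {E : Type*} [AddCommGroup E] [Module A E]
  [Module Aᵐᵒᵖ E] [IsCentralScalar A E]

lemma mul_not_mem {P : Ideal A} [P.IsPrime] {a b : A} (ha : a ∉ P) (hb : b ∉ P) :
    a * b ∉ P := fun h => (‹P.IsPrime›.mem_or_mem h).elim ha hb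

lemma bridge (P : Ideal A) [P.IsPrime] (x y : TrivSqZeroExt A E)
    (c : Localization P.primeCompl) (γ : LocalizedModule P.primeCompl E)
    (h1 : Localization.mk y.fst (1 : P.primeCompl) = c * Localization.mk x.fst 1)
    (h2 : LocalizedModule.mk y.snd (1 : P.primeCompl)
      = c • LocalizedModule.mk x.snd (1 : P.primeCompl)
        + Localization.mk x.fst (1 : P.primeCompl) • γ) :
    ∃ w cg : TrivSqZeroExt A E, w.fst ∉ P ∧ w * y = cg * x := by
  obtain ⟨r, s, rfl⟩ := loc_exists_mk P c
  obtain ⟨ρ, t, rfl⟩ := lm_exists_mk P γ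
  rw [Localization.mk_mul, Localization.mk_eq_mk_iff, Localization.r_iff_exists] at h1
  obtain ⟨u1, hu1⟩ := h1
  push_cast at hu1
  rw [LocalizedModule.mk_smul_mk, LocalizedModule.mk_smul_mk, LocalizedModule.mk_add_mk,
    LocalizedModule.mk_eq] at h2
  obtain ⟨u2, hu2⟩ := h2
  simp only [Submonoid.smul_def, Submonoid.coe_mul, OneMemClass.coe_one, smul_add,
    smul_smul, one_mul, mul_one, one_smul] at hu2
  refine ⟨TrivSqZeroExt.inl ((u2 : A) * u1 * s * t),
    TrivSqZeroExt.inl ((u2 : A) * u1 * t * r)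
      + TrivSqZeroExt.inr (((u2 : A) * u1 * s) • ρ), ?_, ?_⟩
  · exact mul_not_mem (mul_not_mem (mul_not_mem u2.2 u1.2) s.2) t.2
  · apply TrivSqZeroExt.ext
    · simp only [TrivSqZeroExt.fst_mul, TrivSqZeroExt.fst_inl, TrivSqZeroExt.fst_add,
        TrivSqZeroExt.fst_inr, add_zero]
      linear_combination ((u2 : A) * t) * hu1
    · simp only [TrivSqZeroExt.snd_mul, TrivSqZeroExt.fst_inl, TrivSqZeroExt.snd_inl,
        TrivSqZeroExt.fst_add, TrivSqZeroExt.fst_inr, TrivSqZeroExt.snd_add,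
        TrivSqZeroExt.snd_inr, op_smul_eq_smul, smul_zero, add_zero, zero_add]
      have hu2' := congrArg (fun z : E => (u1 : A) • z) hu2
      simp only [smul_add, smul_smul] at hu2'
      rw [show ((u2 : A) * u1 * s * t : A) = (u1 : A) * ((u2 : A) * ((s : A) * t)) by ring,
        show ((u2 : A) * u1 * t * r : A) = (u1 : A) * ((u2 : A) * ((t : A) * r)) by ring,
        smul_smul,
        show (x.fst * ((u2 : A) * u1 * s) : A)
          = (u1 : A) * ((u2 : A) * ((s : A) * x.fst)) by ring]
      exact hu2'
end Bridge

section Witness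
variable {A : Type*} [CommRing A] {E : Type*} [AddCommGroup E] [Module A E]
  [Module Aᵐᵒᵖ E] [IsCentralScalar A E]

lemma witness_trivial (P : Ideal A) [P.IsPrime]
    (hsub : Subsingleton (LocalizedModule P.primeCompl E))
    (hA : ∀ a b : A, ∃ s r u : A, s * b = r * a ∧ (1 - s) * a = u * b)
    (x y : TrivSqZeroExt A E) :
    ∃ w c : TrivSqZeroExt A E, w.fst ∉ P ∧ (w * y = c * x ∨ w * x = c * y) := by
  obtain ⟨t1, ht1, ht1f⟩ := (lm_mk_eq_zero_iff P y.snd 1).mp (Subsingleton.elim _ _)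
  obtain ⟨t2, ht2, ht2e⟩ := (lm_mk_eq_zero_iff P x.snd 1).mp (Subsingleton.elim _ _)
  obtain ⟨s, r, u, h1, h2⟩ := hA x.fst y.fst
  rcases not_mem_or_not_mem P s with hs | hs
  · refine ⟨TrivSqZeroExt.inl (s * t1 * t2), TrivSqZeroExt.inl (r * t1 * t2),
      mul_not_mem (mul_not_mem hs ht1) ht2, Or.inl ?_⟩
    apply TrivSqZeroExt.ext
    · simp only [TrivSqZeroExt.fst_mul, TrivSqZeroExt.fst_inl]
      linear_combination (t1 * t2) * h1
    · simp only [TrivSqZeroExt.snd_mul, TrivSqZeroExt.fst_inl, TrivSqZeroExt.snd_inl,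
        op_smul_eq_smul, smul_zero, add_zero, zero_add]
      rw [show (s * t1 * t2 : A) = (s * t2) * t1 by ring, mul_smul, ht1f, smul_zero,
        show (r * t1 * t2 : A) = (r * t1) * t2 by ring, mul_smul, ht2e, smul_zero]
  · refine ⟨TrivSqZeroExt.inl ((1 - s) * t1 * t2), TrivSqZeroExt.inl (u * t1 * t2),
      mul_not_mem (mul_not_mem hs ht1) ht2, Or.inr ?_⟩
    apply TrivSqZeroExt.ext
    · simp only [TrivSqZeroExt.fst_mul, TrivSqZeroExt.fst_inl]
      linear_combination (t1 * t2) * h2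
    · simp only [TrivSqZeroExt.snd_mul, TrivSqZeroExt.fst_inl, TrivSqZeroExt.snd_inl,
        op_smul_eq_smul, smul_zero, add_zero, zero_add]
      rw [show ((1 - s) * t1 * t2 : A) = ((1 - s) * t1) * t2 by ring, mul_smul, ht2e, smul_zero,
        show (u * t1 * t2 : A) = (u * t2) * t1 by ring, mul_smul, ht1f, smul_zero]

lemma witness_nontrivial (P : Ideal A) [P.IsPrime]
    [IsDomain (Localization P.primeCompl)]
    (hfp : IsFPInjective (Localization P.primeCompl) (LocalizedModule P.primeCompl E))
    (hA : ∀ a b : A, ∃ s r u : A, s * b = r * a ∧ (1 - s) * a = u * b)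
    (hEpair : ∀ e f : E, ∃ s r u : A, s • f = r • e ∧ (1 - s) • e = u • f)
    (x y : TrivSqZeroExt A E) :
    ∃ w c : TrivSqZeroExt A E, w.fst ∉ P ∧ (w * y = c * x ∨ w * x = c * y) := by
  have hdiv : ∀ z : Localization P.primeCompl, z ≠ 0 →
      ∀ φ : LocalizedModule P.primeCompl E, ∃ ψ, z • ψ = φ :=
    fun z hz φ => div_of_fpinj hfp z hz φ
  have hchain := chain_loc P hA
  have huni := uniserial_loc P hEpair
  have hDL : (∃ (c : Localization P.primeCompl) (γ : LocalizedModule P.primeCompl E),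
        Localization.mk y.fst (1 : P.primeCompl) = c * Localization.mk x.fst 1 ∧
        LocalizedModule.mk y.snd (1 : P.primeCompl)
          = c • LocalizedModule.mk x.snd (1 : P.primeCompl)
            + Localization.mk x.fst (1 : P.primeCompl) • γ)
      ∨ (∃ (c : Localization P.primeCompl) (γ : LocalizedModule P.primeCompl E),
        Localization.mk x.fst (1 : P.primeCompl) = c * Localization.mk y.fst 1 ∧
        LocalizedModule.mk x.snd (1 : P.primeCompl)
          = c • LocalizedModule.mk y.snd (1 : P.primeCompl)
            + Localization.mk y.fst (1 : P.primeCompl) • γ) := by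
    by_cases haz : Localization.mk x.fst (1 : P.primeCompl) = 0
    · by_cases hbz : Localization.mk y.fst (1 : P.primeCompl) = 0
      · rcases huni (LocalizedModule.mk x.snd 1) (LocalizedModule.mk y.snd 1) with
          ⟨c, hc⟩ | ⟨c, hc⟩
        · exact Or.inl ⟨c, 0, by rw [hbz, haz, mul_zero],
            by rw [hc, haz]; rw [zero_smul, add_zero]⟩
        · exact Or.inr ⟨c, 0, by rw [hbz, haz, mul_zero],
            by rw [hc, hbz]; rw [zero_smul, add_zero]⟩
      · obtain ⟨γ, hγ⟩ := hdiv _ hbz (LocalizedModule.mk x.snd 1)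
        exact Or.inr ⟨0, γ, by rw [haz, zero_mul], by rw [zero_smul, zero_add, hγ]⟩
    · rcases hchain (Localization.mk x.fst 1) (Localization.mk y.fst 1) with ⟨c, hc⟩ | ⟨c, hc⟩
      · obtain ⟨γ, hγ⟩ := hdiv _ haz
          (LocalizedModule.mk y.snd 1 - c • LocalizedModule.mk x.snd 1)
        refine Or.inl ⟨c, γ, by rw [hc, mul_comm], ?_⟩
        rw [hγ]
        abel
      · have hbz : Localization.mk y.fst (1 : P.primeCompl) ≠ 0 := fun h =>
          haz (by rw [hc, h, zero_mul])
        obtain ⟨γ, hγ⟩ := hdiv _ hbz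
          (LocalizedModule.mk x.snd 1 - c • LocalizedModule.mk y.snd 1)
        refine Or.inr ⟨c, γ, by rw [hc, mul_comm], ?_⟩
        rw [hγ]
        abel
  rcases hDL with ⟨c, γ, h1, h2⟩ | ⟨c, γ, h1, h2⟩
  · obtain ⟨w, cg, hw, hwc⟩ := bridge P x y c γ h1 h2
    exact ⟨w, cg, hw, Or.inl hwc⟩
  · obtain ⟨w, cg, hw, hwc⟩ := bridge P y x c γ h1 h2
    exact ⟨w, cg, hw, Or.inr hwc⟩

end Witness

/-- `R = A ⋉ E` is arithmetical iff `A` is arithmetical, `A_P` is a domain for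
every prime `P ∈ Supp(E)`, `E` is locally FP-injective and `E` has a distributive lattice of
submodules. -/
theorem trivSqZeroExt_arithmetical_iff {A E : Type*} [CommRing A] [AddCommGroup E]
    [Module A E] [Module Aᵐᵒᵖ E] [IsCentralScalar A E] [Nontrivial E] :
    ArithmeticalRing (TrivSqZeroExt A E) ↔
      (ArithmeticalRing A ∧
        (∀ (P : Ideal A) (hP : P.IsPrime),
          Nontrivial (LocalizedModule P.primeCompl E) →
            IsDomain (Localization P.primeCompl)) ∧
        (∀ (P : Ideal A) (hP : P.IsMaximal),
          haveI : P.IsPrime := hP.isPrime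
          IsFPInjective (Localization P.primeCompl) (LocalizedModule P.primeCompl E)) ∧
        (∀ M N P : Submodule A E, (M ⊔ N) ⊓ P = (M ⊓ P) ⊔ (N ⊓ P))) := by
  constructor
  · intro hAr
    have hR := arithmetical_iff_pair.mp hAr
    have hA : ∀ a b : A, ∃ s r u : A, s * b = r * a ∧ (1 - s) * a = u * b := by
      intro a b
      obtain ⟨s, r, u, h1, h2⟩ := hR (TrivSqZeroExt.inl a) (TrivSqZeroExt.inl b)
      refine ⟨s.fst, r.fst, u.fst, ?_, ?_⟩
      · have := congrArg TrivSqZeroExt.fst h1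
        simpa using this
      · have := congrArg TrivSqZeroExt.fst h2
        simpa using this
    have hEpair : ∀ e f : E, ∃ s r u : A, s • f = r • e ∧ (1 - s) • e = u • f := by
      intro e f
      obtain ⟨s, r, u, h1, h2⟩ := hR (TrivSqZeroExt.inr e) (TrivSqZeroExt.inr f)
      refine ⟨s.fst, r.fst, u.fst, ?_, ?_⟩
      · have := congrArg TrivSqZeroExt.snd h1
        simpa [op_smul_eq_smul] using this
      · have := congrArg TrivSqZeroExt.snd h2
        simpa [op_smul_eq_smul] using this
    have hdivE : ∀ (P : Ideal A), P.IsPrime → ∀ a : A, (∀ t, t ∉ P → t * a ≠ 0) →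
        ∀ f : E, ∃ s, s ∉ P ∧ ∃ ρ : E, s • f = a • ρ := by
      intro P hP a ha f
      obtain ⟨s, r, u, h1, h2⟩ := hR (TrivSqZeroExt.inl a) (TrivSqZeroExt.inr f)
      have e1 : s.fst • f = a • r.snd := by
        have := congrArg TrivSqZeroExt.snd h1
        simpa [op_smul_eq_smul] using this
      have e2 : (1 - s.fst) * a = 0 := by
        have := congrArg TrivSqZeroExt.fst h2
        simpa using this
      haveI := hP
      rcases not_mem_or_not_mem P s.fst with hs | hs
      · exact ⟨s.fst, hs, r.snd, e1⟩
      · exact absurd e2 (ha _ hs)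
    have hdomE : ∀ (P : Ideal A), P.IsPrime → (∃ e₀ : E, ∀ t ∉ P, t • e₀ ≠ 0) →
        ∀ a b : A, a * b = 0 → (∃ t, t ∉ P ∧ t * a = 0) ∨ (∃ t, t ∉ P ∧ t * b = 0) := by
      rintro P hP ⟨e₀, he₀⟩ a b hab
      haveI := hP
      by_contra hcon
      push_neg at hcon
      obtain ⟨hca, hcb⟩ := hcon
      obtain ⟨s1, hs1, ρ, hρ⟩ := hdivE P hP a (fun t ht => hca t ht) e₀
      obtain ⟨s2, hs2, ρ2, hρ2⟩ := hdivE P hP b (fun t ht => hcb t ht) ρ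
      refine he₀ (s2 * s1) (fun hmem => ?_) ?_
      · rcases hP.mem_or_mem hmem with h | h
        exacts [hs2 h, hs1 h]
      · calc (s2 * s1) • e₀ = s2 • (s1 • e₀) := mul_smul _ _ _
          _ = s2 • (a • ρ) := by rw [hρ]
          _ = a • (s2 • ρ) := smul_comm _ _ _
          _ = a • (b • ρ2) := by rw [hρ2]
          _ = (a * b) • ρ2 := (mul_smul _ _ _).symm
          _ = 0 := by rw [hab, zero_smul]
    refine ⟨arithmetical_iff_pair.mpr hA, ?_, ?_, distrib_iff_pair.mpr hEpair⟩
    · intro P hP hF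
      haveI := hP
      exact isDomain_loc P (hdomE P hP ((nontrivial_lm_iff P).mp hF))
    · intro P hP
      haveI := hP.isPrime
      by_cases hF : Nontrivial (LocalizedModule P.primeCompl E)
      · haveI := isDomain_loc P (hdomE P hP.isPrime ((nontrivial_lm_iff P).mp hF))
        exact ext_lemma (fun z w hzw => mul_eq_zero.mp hzw) (chain_loc P hA)
          (divisible_loc P (hdivE P hP.isPrime))
      · haveI := not_nontrivial_iff_subsingleton.mp hF
        intro n K hK f
        exact ⟨0, fun k => Subsingleton.elim _ _⟩
  · rintro ⟨hA', hdom, hfp, hEd⟩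
    have hA := arithmetical_iff_pair.mp hA'
    have hEpair := distrib_iff_pair.mp hEd
    rw [arithmetical_iff_pair]
    intro x y
    set J : Ideal (TrivSqZeroExt A E) := divIdeal x y ⊔ divIdeal y x with hJ
    have hJtop : J = ⊤ := by
      by_contra hJt
      obtain ⟨Q, hQmax, hQle⟩ := Ideal.exists_le_maximal J hJt
      obtain ⟨P, hPmax, hPiff⟩ := exists_maximal_comap Q hQmax
      haveI hPp := hPmax.isPrime
      have hw : ∃ w c : TrivSqZeroExt A E, w.fst ∉ P ∧ (w * y = c * x ∨ w * x = c * y) := by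
        by_cases hF : Nontrivial (LocalizedModule P.primeCompl E)
        · haveI := hdom P hPp hF
          exact witness_nontrivial P (hfp P hPmax) hA hEpair x y
        · exact witness_trivial P (not_nontrivial_iff_subsingleton.mp hF) hA x y
      obtain ⟨w, c, hwP, hwc⟩ := hw
      have hwJ : w ∈ J := by
        rcases hwc with h | h
        · exact Ideal.mem_sup_left ⟨c, h⟩
        · exact Ideal.mem_sup_right ⟨c, h⟩
      exact hwP ((hPiff w).mp (hQle hwJ))
    have h1mem : (1 : TrivSqZeroExt A E) ∈ J := hJtop ▸ Submodule.mem_top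
    obtain ⟨j1, hj1, j2, hj2, hsum⟩ := Submodule.mem_sup.mp h1mem
    obtain ⟨c1, hc1⟩ := hj1
    obtain ⟨c2, hc2⟩ := hj2
    refine ⟨j1, c1, c2, hc1, ?_⟩
    rw [show (1 : TrivSqZeroExt A E) - j1 = j2 by rw [← hsum]; abel]
    exact hc2
end

section
/- Let A be a commutative ring with nilradical N, E a nonzero A-module, and suppose the trivial ring extension R = A ⋉ E is arithmetical. Then NE = 0, i.e., E is a module over A/N. -/
open TrivSqZeroExt MulOpposite in
lemma key_lemma {A E : Type*} [CommRing A] [AddCommGroup E]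
    [Module A E] [Module Aᵐᵒᵖ E] [IsCentralScalar A E]
    (h : ArithmeticalRing (TrivSqZeroExt A E)) (a : A) (x : E) :
    ∃ (f : A) (e : E), a * f = 0 ∧ x - f • x = a • e := by
  set R := TrivSqZeroExt A E
  set g₁ : R := ⟨a, 0⟩
  set g₂ : R := ⟨0, x⟩
  set g₃ : R := ⟨a, x⟩
  have hmem : g₃ ∈ (Ideal.span {g₁} ⊔ Ideal.span {g₂}) ⊓ Ideal.span {g₃} := by
    refine ⟨?_, Ideal.subset_span rfl⟩
    have : g₃ = g₁ + g₂ := by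
      show (⟨a, x⟩ : R) = (⟨a, 0⟩ : R) + ⟨0, x⟩
      ext <;> simp
    rw [this]
    exact add_mem (Ideal.mem_sup_left (Ideal.subset_span rfl))
      (Ideal.mem_sup_right (Ideal.subset_span rfl))
  rw [h] at hmem
  obtain ⟨u, hu, v, hv, huv⟩ := Submodule.mem_sup.mp hmem
  obtain ⟨hu1, hu3⟩ := hu
  obtain ⟨hv2, hv3⟩ := hv
  simp only [SetLike.mem_coe] at hu1 hu3 hv2 hv3
  rw [Ideal.mem_span_singleton] at hu1 hu3 hv2 hv3
  obtain ⟨r1, hr1⟩ := hu1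
  obtain ⟨r3, hr3⟩ := hu3
  obtain ⟨r2, hr2⟩ := hv2
  obtain ⟨r4, hr4⟩ := hv3
  -- component equations
  have e1 : u.snd = a • r1.snd := by
    rw [hr1, snd_mul]; simp [g₁]
  have e3f : u.fst = a * r3.fst := by rw [hr3, fst_mul]; simp [g₃]
  have e3 : u.snd = a • r3.snd + r3.fst • x := by
    rw [hr3, snd_mul]; simp [g₃, op_smul_eq_smul]
  have e2f : v.fst = 0 := by rw [hr2, fst_mul]; simp [g₂]
  have e4f : a * r4.fst = 0 := by
    have : v.fst = a * r4.fst := by rw [hr4, fst_mul]; simp [g₃]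
    rw [e2f] at this; exact this.symm
  have e4 : v.snd = a • r4.snd + r4.fst • x := by
    rw [hr4, snd_mul]; simp [g₃, op_smul_eq_smul]
  have hsnd : u.snd + v.snd = x := by
    have := congrArg TrivSqZeroExt.snd huv
    rw [snd_add] at this; simpa [g₃] using this
  refine ⟨r4.fst, r1.snd + r4.snd, e4f, ?_⟩
  have hdx : r3.fst • x = a • r1.snd - a • r3.snd := by
    rw [← e1, e3]; abel
  rw [e3, e4, hdx] at hsnd
  rw [smul_add]
  linear_combination (norm := abel) -hsnd

/-- if `R = A ⋉ E` is arithmetical then `N E = 0`, where `N` is the nilradical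
of `A`; that is, `E` is a module over `A/N`. -/
theorem nilradical_smul_eq_zero_of_arithmetical {A E : Type*} [CommRing A] [AddCommGroup E]
    [Module A E] [Module Aᵐᵒᵖ E] [IsCentralScalar A E] [Nontrivial E]
    (h : ArithmeticalRing (TrivSqZeroExt A E)) :
    ∀ a ∈ nilradical A, ∀ x : E, a • x = 0 := by
  intro a ha x
  obtain ⟨n, hn⟩ := ha
  -- a • y ∈ a^(k+1) E for all k
  have claim : ∀ k : ℕ, ∀ y : E, ∃ z : E, a • y = a ^ (k + 1) • z := by
    intro k
    induction k with
    | zero => intro y; exact ⟨y, by simp⟩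
    | succ k ih =>
      intro y
      obtain ⟨z, hz⟩ := ih y
      obtain ⟨f, e, hf, he⟩ := key_lemma h a z
      have hz2 : a • z = a ^ 2 • e := by
        have : a • (z - f • z) = a • (a • e) := by rw [he]
        rw [smul_sub, smul_smul, smul_smul, hf] at this
        rw [pow_two, mul_smul]
        simpa [mul_smul] using this
      refine ⟨e, ?_⟩
      rw [hz, pow_succ, mul_smul, hz2, smul_smul, ← pow_add]
  rcases Nat.eq_zero_or_pos n with h0 | hpos
  · subst h0; simp at hn
    have : (1 : A) = 0 := hn
    have : (x : E) = 0 := by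
      calc x = (1:A) • x := (one_smul A x).symm
        _ = (0:A) • x := by rw [this]
        _ = 0 := zero_smul A x
    obtain ⟨m, hm⟩ := claim 0 x
    simp [this]
  · obtain ⟨z, hz⟩ := claim (n - 1) x
    rw [hz, show n - 1 + 1 = n from Nat.succ_pred_eq_of_pos hpos, hn, zero_smul]
end

section
/- Let A be a valuation domain in which every nonzero prime ideal is branched. For an A-module E, aE = a²E holds for every a ∈ A if and only if for every prime ideal L of A, the quotient LE/L'E is a divisible A/L'-module, where L' is the union of all prime ideals properly contained in L. -/
/-- The union of the prime ideals properly contained in `L` (in a valuation domain the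
primes form a chain, so this supremum is the set-theoretic union). -/
def primeUnionBelow {A : Type*} [CommRing A] (L : Ideal A) : Ideal A :=
  sSup {P : Ideal A | P.IsPrime ∧ P < L}

lemma le_primeUnionBelow {A : Type*} [CommRing A] {P L : Ideal A}
    (h1 : P.IsPrime) (h2 : P < L) : P ≤ primeUnionBelow L :=
  le_sSup (Set.mem_setOf.2 ⟨h1, h2⟩)

section Aux

variable {A : Type*} [CommRing A] [IsDomain A]

lemma mem_primeUnionBelow_aux {L : Ideal A} (hchain : ChainRing A) {x : A}
    (hx : x ∈ primeUnionBelow L) (hx0 : x ≠ 0) :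
    ∃ P : Ideal A, P.IsPrime ∧ P < L ∧ x ∈ P := by
  rcases Set.eq_empty_or_nonempty {P : Ideal A | P.IsPrime ∧ P < L} with h | h
  · rw [primeUnionBelow, h, sSup_empty] at hx
    exact absurd ((Ideal.mem_bot).1 hx) hx0
  · have hdir : DirectedOn (· ≤ ·) {P : Ideal A | P.IsPrime ∧ P < L} := fun P hP Q hQ =>
      (hchain P Q).elim (fun hh => ⟨Q, hQ, hh, le_rfl⟩) (fun hh => ⟨P, hP, le_rfl, hh⟩)
    obtain ⟨P, hP, hxP⟩ := (Submodule.mem_sSup_of_directed h hdir).1 hx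
    exact ⟨P, hP.1, hP.2, hxP⟩

lemma iInf_pow_isPrime_aux (hchain : ChainRing A) {a : A} (haU : ¬ IsUnit a) (ha0 : a ≠ 0) :
    (⨅ n : ℕ, Ideal.span {a ^ n}).IsPrime := by
  constructor
  · intro htop
    have h1 : (1 : A) ∈ ⨅ n : ℕ, Ideal.span {a ^ n} := htop ▸ Submodule.mem_top
    have h2 := Ideal.mem_iInf.1 h1 1
    rw [pow_one, Ideal.mem_span_singleton] at h2
    exact haU (isUnit_of_dvd_one h2)
  · intro x y hxy
    by_contra hcon
    push_neg at hcon
    obtain ⟨hx, hy⟩ := hcon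
    rw [Ideal.mem_iInf] at hx hy
    push_neg at hx hy
    obtain ⟨m, hm⟩ := hx
    obtain ⟨k, hk⟩ := hy
    have hxm : x ∣ a ^ m := by
      rcases hchain (Ideal.span {x}) (Ideal.span {a ^ m}) with h | h
      · exact absurd (h (Ideal.mem_span_singleton_self x)) hm
      · exact Ideal.mem_span_singleton.1 (h (Ideal.mem_span_singleton_self _))
    have hyk : y ∣ a ^ k := by
      rcases hchain (Ideal.span {y}) (Ideal.span {a ^ k}) with h | h
      · exact absurd (h (Ideal.mem_span_singleton_self y)) hk
      · exact Ideal.mem_span_singleton.1 (h (Ideal.mem_span_singleton_self _))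
    obtain ⟨u, hu⟩ := hxm
    obtain ⟨v, hv⟩ := hyk
    have hd : a ^ (m + k + 1) ∣ x * y :=
      Ideal.mem_span_singleton.1 (Ideal.mem_iInf.1 hxy (m + k + 1))
    obtain ⟨d, hdd⟩ := hd
    have key : a ^ (m + k) * 1 = a ^ (m + k) * (a * (d * (u * v))) := by
      rw [mul_one]
      calc a ^ (m + k) = a ^ m * a ^ k := by rw [pow_add]
        _ = (x * u) * (y * v) := by rw [hu, hv]
        _ = (x * y) * (u * v) := by ring
        _ = (a ^ (m + k + 1) * d) * (u * v) := by rw [hdd]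
        _ = a ^ (m + k) * (a * (d * (u * v))) := by rw [pow_succ]; ring
    have h1 : (1 : A) = a * (d * (u * v)) :=
      mul_left_cancel₀ (pow_ne_zero _ ha0) key
    exact haU (IsUnit.of_mul_eq_one _ h1.symm)

lemma exists_pow_eq_aux (hchain : ChainRing A) {L : Ideal A} (hL : L.IsPrime) {a s : A}
    (haL : a ∈ L) (ha : a ∉ primeUnionBelow L) (hs : s ∉ primeUnionBelow L) :
    ∃ c ∈ L, ∃ n : ℕ, a ^ (n + 1) = s * c := by
  have ha0 : a ≠ 0 := fun h => ha (h ▸ (primeUnionBelow L).zero_mem)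
  have haU : ¬ IsUnit a := fun h => hL.ne_top (Ideal.eq_top_of_isUnit_mem _ haL h)
  set P := ⨅ n : ℕ, Ideal.span {a ^ n} with hPdef
  have hPp := iInf_pow_isPrime_aux hchain haU ha0
  have hPle : P ≤ L := by
    refine le_trans (iInf_le _ 1) ?_
    rw [pow_one]
    exact (Ideal.span_singleton_le_iff_mem _).2 haL
  have haP : a ∉ P := by
    intro h
    have h2 := Ideal.mem_iInf.1 h 2
    rw [Ideal.mem_span_singleton] at h2
    obtain ⟨t, ht⟩ := h2
    have : a * 1 = a * (a * t) := by
      calc a * 1 = a := mul_one a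
        _ = a ^ 2 * t := ht
        _ = a * (a * t) := by ring
    exact haU (IsUnit.of_mul_eq_one _ (mul_left_cancel₀ ha0 this).symm)
  have hPL : P < L := lt_of_le_of_ne hPle (fun h => haP (h ▸ haL))
  have hsP : s ∉ P := fun h => hs (le_primeUnionBelow hPp hPL h)
  rw [hPdef, Ideal.mem_iInf] at hsP
  push_neg at hsP
  obtain ⟨n, hn⟩ := hsP
  have hdvd : s ∣ a ^ n := by
    rcases hchain (Ideal.span {a ^ n}) (Ideal.span {s}) with h | h
    · exact Ideal.mem_span_singleton.1 (h (Ideal.mem_span_singleton_self _))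
    · exact absurd (h (Ideal.mem_span_singleton_self _)) hn
  obtain ⟨c, hc⟩ := hdvd
  cases n with
  | zero =>
    have : s ∈ Ideal.span {a ^ 0} := by
      rw [pow_zero, Ideal.span_singleton_one]; exact Submodule.mem_top
    exact absurd this hn
  | succ m =>
    refine ⟨c * a, Ideal.mul_mem_left _ c haL, m + 1, ?_⟩
    calc a ^ (m + 1 + 1) = a ^ (m + 1) * a := by rw [pow_succ]
      _ = (s * c) * a := by rw [hc]
      _ = s * (c * a) := by ring

lemma smul_eq_pow_smul_aux {E : Type*} [AddCommGroup E] [Module A E]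
    (h : ∀ (a : A) (x : E), ∃ y : E, a • x = (a * a) • y) (a : A) (m : E) (k : ℕ) :
    ∃ m' : E, a • m = a ^ (k + 1) • m' := by
  induction k with
  | zero => exact ⟨m, by rw [pow_one]⟩
  | succ k ih =>
    obtain ⟨m', hm'⟩ := ih
    obtain ⟨m'', hm''⟩ := h a m'
    refine ⟨m'', ?_⟩
    have hsc : a ^ k * (a * a) = a ^ (k + 1 + 1) := by ring
    calc a • m = a ^ (k + 1) • m' := hm'
      _ = a ^ k • (a • m') := by rw [pow_succ, mul_smul]
      _ = a ^ k • ((a * a) • m'') := by rw [hm'']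
      _ = (a ^ k * (a * a)) • m'' := by rw [smul_smul]
      _ = a ^ (k + 1 + 1) • m'' := by rw [hsc]

lemma mem_span_smul_aux {E : Type*} [AddCommGroup E] [Module A E] {r : A} {z : E}
    (hz : z ∈ Ideal.span {r} • (⊤ : Submodule A E)) : ∃ w : E, z = r • w := by
  refine Submodule.smul_induction_on hz (fun b hb m _ => ?_) ?_
  · obtain ⟨c, hcc⟩ := Ideal.mem_span_singleton.1 hb
    exact ⟨c • m, by rw [hcc, mul_smul]⟩
  · rintro u v ⟨w1, h1⟩ ⟨w2, h2⟩
    exact ⟨w1 + w2, by rw [smul_add, ← h1, ← h2]⟩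

lemma radical_isPrime_aux (hchain : ChainRing A) {a : A} (haU : ¬ IsUnit a) :
    (Ideal.span {a}).radical.IsPrime := by
  constructor
  · intro htop
    have h1 : (1 : A) ∈ (Ideal.span {a}).radical := htop ▸ Submodule.mem_top
    obtain ⟨n, hn⟩ := h1
    rw [one_pow, Ideal.mem_span_singleton] at hn
    exact haU (isUnit_of_dvd_one hn)
  · intro x y hxy
    obtain ⟨n, hn⟩ := hxy
    rcases hchain (Ideal.span {x}) (Ideal.span {y}) with hle | hle
    · left
      obtain ⟨t, ht⟩ := Ideal.span_singleton_le_span_singleton.1 hle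
      refine ⟨2 * n, ?_⟩
      have : x ^ (2 * n) = (x * y) ^ n * t ^ n := by rw [ht]; ring
      rw [this]
      exact Ideal.mul_mem_right _ _ hn
    · right
      obtain ⟨t, ht⟩ := Ideal.span_singleton_le_span_singleton.1 hle
      refine ⟨2 * n, ?_⟩
      have : y ^ (2 * n) = (x * y) ^ n * t ^ n := by rw [ht]; ring
      rw [this]
      exact Ideal.mul_mem_right _ _ hn

end Aux

/-- over a valuation domain in which every nonzero prime is branched,
`aE = a²E` holds for every `a` iff for every prime `L`, `LE/L'E` is divisible over `A/L'`,
where `L'` is the union of the primes properly contained in `L`. -/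
theorem smul_sq_iff_quotients_divisible {A E : Type*} [CommRing A] [IsDomain A]
    (hchain : ChainRing A)
    (hbranched : ∀ L : Ideal A, L.IsPrime → L ≠ ⊥ → primeUnionBelow L ≠ L)
    [AddCommGroup E] [Module A E] :
    (∀ (a : A) (x : E), ∃ y : E, a • x = (a * a) • y) ↔
      (∀ L : Ideal A, L.IsPrime →
        ∀ s : A, s ∉ primeUnionBelow L →
          ∀ x ∈ L • (⊤ : Submodule A E),
            ∃ y ∈ L • (⊤ : Submodule A E),
              x - s • y ∈ (primeUnionBelow L) • (⊤ : Submodule A E)) := by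
  constructor
  · intro h L hL s hs x hx
    refine Submodule.smul_induction_on hx ?_ ?_
    · intro a haL m _
      by_cases haL' : a ∈ primeUnionBelow L
      · refine ⟨0, Submodule.zero_mem _, ?_⟩
        simpa using Submodule.smul_mem_smul haL' (Submodule.mem_top : m ∈ ⊤)
      · obtain ⟨c, hcL, n, hnc⟩ := exists_pow_eq_aux hchain hL haL haL' hs
        obtain ⟨m', hm'⟩ := smul_eq_pow_smul_aux h a m n
        refine ⟨c • m', Submodule.smul_mem_smul hcL Submodule.mem_top, ?_⟩
        have heq : a • m = s • (c • m') := by rw [hm', hnc, mul_smul]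
        rw [heq, sub_self]
        exact Submodule.zero_mem _
    · rintro u v ⟨y1, hy1, h1⟩ ⟨y2, hy2, h2⟩
      refine ⟨y1 + y2, Submodule.add_mem _ hy1 hy2, ?_⟩
      have heq : u + v - s • (y1 + y2) = (u - s • y1) + (v - s • y2) := by
        rw [smul_add]; abel
      rw [heq]
      exact Submodule.add_mem _ h1 h2
  · intro h a x
    by_cases ha0 : a = 0
    · exact ⟨0, by simp [ha0]⟩
    by_cases haU : IsUnit a
    · obtain ⟨u, hu⟩ := haU
      refine ⟨((u⁻¹ : Aˣ) : A) • x, ?_⟩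
      rw [← hu, smul_smul, mul_assoc, Units.mul_inv, mul_one]
    · set L := (Ideal.span {a}).radical with hLdef
      have hLp : L.IsPrime := radical_isPrime_aux hchain haU
      have haL : a ∈ L := Ideal.le_radical (Ideal.mem_span_singleton_self a)
      have haL' : a ∉ primeUnionBelow L := by
        intro hmem
        obtain ⟨P, hPp, hPL, haP⟩ := mem_primeUnionBelow_aux hchain hmem ha0
        have hle : L ≤ P := hPp.radical_le_iff.2 ((Ideal.span_singleton_le_iff_mem _).2 haP)
        exact absurd (lt_of_le_of_lt hle hPL) (lt_irrefl L)
      have hL'le : primeUnionBelow L ≤ Ideal.span {a * a} := by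
        rcases hchain (primeUnionBelow L) (Ideal.span {a * a}) with hle | hle
        · exact hle
        · exfalso
          have hmem : a * a ∈ primeUnionBelow L := hle (Ideal.mem_span_singleton_self _)
          obtain ⟨P, hPp, hPL, hP⟩ :=
            mem_primeUnionBelow_aux hchain hmem (mul_ne_zero ha0 ha0)
          have haP : a ∈ P := (hPp.mem_or_mem hP).elim id id
          exact haL' (le_primeUnionBelow hPp hPL haP)
      obtain ⟨y, hy, hxy⟩ :=
        h L hLp a haL' (a • x) (Submodule.smul_mem_smul haL Submodule.mem_top)
      obtain ⟨y2, _, hyy2⟩ := h L hLp a haL' y hy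
      obtain ⟨w1, hw1⟩ := mem_span_smul_aux (Submodule.smul_mono_left hL'le hxy)
      obtain ⟨w2, hw2⟩ := mem_span_smul_aux (Submodule.smul_mono_left hL'le hyy2)
      refine ⟨y2 + a • w2 + w1, ?_⟩
      have hy' : y = a • y2 + (a * a) • w2 := by
        have := hw2
        rw [sub_eq_iff_eq_add] at this
        rw [this]; abel
      have hx' : a • x = a • y + (a * a) • w1 := by
        have := hw1
        rw [sub_eq_iff_eq_add] at this
        rw [this]; abel
      rw [hx', hy']
      module
end

section
/- Let A be a coherent reduced commutative ring, E a nonzero A-module, and R = A ⋉ E. Then the following are equivalent: (1) R is Hermite; (2) R is Bézout; (3) A is Bézout, E is FP-injective, and every finitely generated submodule of E is cyclic. -/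
/-- A ring is Hermite if for every `a, b` there are `d, a', b'` with `a = d a'`, `b = d b'`
and `R a' + R b' = R`. -/
def HermiteRing (R : Type*) [CommRing R] : Prop :=
  ∀ a b : R, ∃ d a' b' : R, a = d * a' ∧ b = d * b' ∧
    Ideal.span {a'} ⊔ Ideal.span {b'} = ⊤

/-- A ring is coherent if every finitely generated ideal is finitely presented. -/
def CoherentRing (R : Type*) [CommRing R] : Prop :=
  ∀ I : Ideal R, I.FG → Module.FinitePresentation R I

namespace Stmt15

/-- comaximality via an explicit Bezout identity -/
lemma span_sup_eq_top_iff {S : Type*} [CommRing S] {a b : S} :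
    Ideal.span {a} ⊔ Ideal.span {b} = ⊤ ↔ ∃ p q : S, p * a + q * b = 1 := by
  rw [Ideal.eq_top_iff_one]
  constructor
  · intro h
    obtain ⟨u, hu, v, hv, huv⟩ := Submodule.mem_sup.mp h
    obtain ⟨p, hp⟩ := Ideal.mem_span_singleton'.mp hu
    obtain ⟨q, hq⟩ := Ideal.mem_span_singleton'.mp hv
    exact ⟨p, q, by rw [hp, hq, huv]⟩
  · rintro ⟨p, q, h⟩
    exact Submodule.mem_sup.mpr ⟨p * a, Ideal.mem_span_singleton'.mpr ⟨p, rfl⟩,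
      q * b, Ideal.mem_span_singleton'.mpr ⟨q, rfl⟩, h⟩

lemma bezout_of_hermite {S : Type*} [CommRing S] (h : HermiteRing S) : IsBezout S := by
  rw [IsBezout.iff_span_pair_isPrincipal]
  intro x y
  obtain ⟨d, a', b', hx, hy, hcom⟩ := h x y
  obtain ⟨p, q, hpq⟩ := span_sup_eq_top_iff.mp hcom
  refine ⟨⟨d, le_antisymm ?_ ?_⟩⟩
  · rw [Ideal.span_le]
    rintro z (rfl | rfl)
    · exact Ideal.mem_span_singleton'.mpr ⟨a', by rw [hx, mul_comm]⟩
    · exact Ideal.mem_span_singleton'.mpr ⟨b', by rw [hy, mul_comm]⟩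
  · rw [Ideal.submodule_span_eq, Ideal.span_le, Set.singleton_subset_iff]
    refine Ideal.mem_span_pair.mpr ⟨p, q, ?_⟩
    calc p * x + q * y = (p * a' + q * b') * d := by rw [hx, hy]; ring
    _ = d := by rw [hpq, one_mul]

/-- gcd data from Bezout -/
lemma exists_gcd {S : Type*} [CommRing S] (h : IsBezout S) (a b : S) :
    ∃ d a₁ b₁ s t : S, a = d * a₁ ∧ b = d * b₁ ∧ s * a + t * b = d := by
  obtain ⟨d, hd⟩ := (h.isPrincipal_of_FG (Ideal.span {a, b})
    (Submodule.fg_span (Set.toFinite _))).principal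
  rw [Ideal.submodule_span_eq] at hd
  have ha : a ∈ Ideal.span ({d} : Set S) := hd ▸ Ideal.subset_span (by simp)
  have hb : b ∈ Ideal.span ({d} : Set S) := hd ▸ Ideal.subset_span (by simp)
  have hdm : d ∈ Ideal.span ({a, b} : Set S) := hd ▸ Ideal.subset_span rfl
  obtain ⟨a₁, ha₁⟩ := Ideal.mem_span_singleton'.mp ha
  obtain ⟨b₁, hb₁⟩ := Ideal.mem_span_singleton'.mp hb
  obtain ⟨s, t, hst⟩ := Ideal.mem_span_pair.mp hdm
  exact ⟨d, a₁, b₁, s, t, by rw [← ha₁, mul_comm], by rw [← hb₁, mul_comm], hst⟩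


lemma ann_principal {A : Type*} [CommRing A] (hcoh : CoherentRing A) (hb : IsBezout A) (d : A) :
    ∃ c : A, ∀ z : A, z * d = 0 ↔ c ∣ z := by
  have hIfg : (Ideal.span ({d} : Set A)).FG := ⟨{d}, by simp⟩
  haveI := hcoh _ hIfg
  set ν : A →ₗ[A] (Ideal.span ({d} : Set A)) :=
    LinearMap.toSpanSingleton A _ ⟨d, Ideal.subset_span rfl⟩ with hν
  have hsurj : Function.Surjective ν := by
    rintro ⟨x, hx⟩
    obtain ⟨z, hz⟩ := Ideal.mem_span_singleton'.mp hx
    exact ⟨z, Subtype.ext (by simpa [ν, LinearMap.toSpanSingleton_apply, smul_eq_mul] using hz)⟩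
  have hker : (LinearMap.ker ν).FG := Module.FinitePresentation.fg_ker ν hsurj
  obtain ⟨c, hc⟩ := (hb.isPrincipal_of_FG (LinearMap.ker ν) hker).principal
  refine ⟨c, fun z => ?_⟩
  have h1 : z * d = 0 ↔ z ∈ LinearMap.ker ν := by
    rw [LinearMap.mem_ker]
    constructor
    · intro h; exact Subtype.ext (by simpa [ν, LinearMap.toSpanSingleton_apply, smul_eq_mul])
    · intro h
      have := congrArg Subtype.val h
      simpa [ν, LinearMap.toSpanSingleton_apply, smul_eq_mul] using this
  rw [h1, hc, Ideal.submodule_span_eq, Ideal.mem_span_singleton]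

/-- The key structural lemma in a reduced coherent Bezout ring. -/
lemma key {A : Type*} [CommRing A] [IsReduced A] (hcoh : CoherentRing A) (hb : IsBezout A)
    (a b : A) :
    ∃ d e a₁ b₁ s t : A, a = d * a₁ ∧ b = d * b₁ ∧ e * e = e ∧ d * (1 - e) = 0 ∧
      e * (a₁ * s + b₁ * t) = e ∧ (∀ z : A, z * d = 0 → z * e = 0) := by
  obtain ⟨d, a₁, b₁, s, t, ha, hb', hst⟩ := exists_gcd hb a b
  have hd0 : (1 - (a₁ * s + b₁ * t)) * d = 0 := by linear_combination s * ha + t * hb' - hst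
  obtain ⟨c, annc⟩ := ann_principal hcoh hb d
  obtain ⟨r, hcr⟩ := (annc _).mp hd0
  have hcd : c * d = 0 := (annc c).mpr dvd_rfl
  obtain ⟨c', annc'⟩ := ann_principal hcoh hb c
  obtain ⟨δ, hδ⟩ := (annc' d).mp (by linear_combination hcd)
  obtain ⟨m, γ, γ', σ, τ, hc, hc', hm⟩ := exists_gcd hb c c'
  have hcc' : c' * c = 0 := (annc' c').mpr dvd_rfl
  have hmg : m * γ * γ' = 0 := by
    have h2 : (m * γ * γ') ^ 2 = 0 := by
      linear_combination (γ * γ') * hcc' - (γ * γ' * c') * hc - (γ * γ' * m * γ) * hc'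
    exact IsNilpotent.eq_zero ⟨2, h2⟩
  obtain ⟨nn, annm⟩ := ann_principal hcoh hb m
  have hm0 : (1 - (γ * σ + γ' * τ)) * m = 0 := by linear_combination σ * hc + τ * hc' - hm
  obtain ⟨ν, hν⟩ := (annm _).mp hm0
  have hnnm : nn * m = 0 := (annm nn).mpr dvd_rfl
  set α : A := γ' * τ + nn * ν with hα
  have hαc : α * c = 0 := by
    linear_combination τ * hmg + (ν * γ) * hnnm + (γ' * τ + nn * ν) * hc
  obtain ⟨μ, hμ⟩ := (annc' α).mp hαc
  have hβc' : γ * σ * c' = 0 := by linear_combination σ * hmg + (γ * σ) * hc'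
  have hone : γ * σ + α = 1 := by linear_combination -hν
  refine ⟨d, α, a₁, b₁, s, t, ha, hb', ?_, ?_, ?_, ?_⟩
  · linear_combination (-(γ * σ)) * hμ + α * hone - μ * hβc'
  · linear_combination (-d) * hone + (γ * σ) * hδ + δ * hβc'
  · have hce : c * α = 0 := by linear_combination hαc
    linear_combination (-α) * hcr - r * hce
  · intro z hz
    obtain ⟨w, hw⟩ := (annc z).mp hz
    have hce : c * α = 0 := by linear_combination hαc
    linear_combination α * hw + w * hce

/-- A reduced coherent Bezout ring is Hermite (with explicit Bezout identity). -/
lemma hermite_aux {A : Type*} [CommRing A] [IsReduced A] (hcoh : CoherentRing A)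
    (hb : IsBezout A) (a b : A) :
    ∃ d a' b' p q : A, a = d * a' ∧ b = d * b' ∧ p * a' + q * b' = 1 := by
  obtain ⟨d, e, a₁, b₁, s, t, ha, hb', he, hde, hecom, -⟩ := key hcoh hb a b
  refine ⟨d, a₁ * e + (1 - e), b₁ * e, s * e + (1 - e), t * e, ?_, ?_, ?_⟩
  · linear_combination ha + (a₁ - 1) * hde
  · linear_combination hb' + b₁ * hde
  · linear_combination (s * a₁ - s - a₁ + 1 + t * b₁) * he + hecom


/-- the key divisibility property: `Ann(d) x = 0` implies `x ∈ dE`. -/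
def Star (A E : Type*) [CommRing A] [AddCommGroup E] [Module A E] : Prop :=
  ∀ (d : A) (x : E), (∀ z : A, z * d = 0 → z • x = 0) → ∃ y : E, x = d • y

lemma star_of_fpInjective {A E : Type*} [CommRing A] [AddCommGroup E] [Module A E]
    (h : IsFPInjective A E) : Star A E := by
  intro d x hx
  set v : Fin 1 → A := fun _ => d with hv
  set μ : A →ₗ[A] (Fin 1 → A) := LinearMap.toSpanSingleton A _ v with hμ
  have hK : Submodule.span A {v} = LinearMap.range μ := LinearMap.span_singleton_eq_range A _ v
  have hfg : (LinearMap.range μ).FG := hK ▸ Submodule.fg_span_singleton v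
  set ψ : A →ₗ[A] E := LinearMap.toSpanSingleton A E x with hψ
  have hle : LinearMap.ker μ ≤ LinearMap.ker ψ := by
    intro z hz
    rw [LinearMap.mem_ker] at hz ⊢
    have hzd : z * d = 0 := by
      have := congrFun hz 0
      simpa [μ, v, LinearMap.toSpanSingleton_apply, smul_eq_mul] using this
    simpa [ψ, LinearMap.toSpanSingleton_apply] using hx z hzd
  set f : (LinearMap.range μ) →ₗ[A] E :=
    (Submodule.liftQ (LinearMap.ker μ) ψ hle).comp μ.quotKerEquivRange.symm.toLinearMap with hf
  obtain ⟨g, hg⟩ := h 1 (LinearMap.range μ) hfg f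
  refine ⟨g (fun _ => 1), ?_⟩
  have h1 : f ⟨μ 1, LinearMap.mem_range_self μ 1⟩ = x := by
    have heq : (μ.quotKerEquivRange.symm ⟨μ 1, LinearMap.mem_range_self μ 1⟩)
        = Submodule.Quotient.mk 1 := by
      rw [LinearEquiv.symm_apply_eq]
      exact Subtype.ext (LinearMap.quotKerEquivRange_apply_mk μ 1).symm
    rw [hf]; simp only [LinearMap.comp_apply, LinearEquiv.coe_toLinearMap]
    rw [heq, Submodule.liftQ_apply]
    simp [ψ, LinearMap.toSpanSingleton_apply]
  have h2 : g (μ 1) = x := by rw [← h1]; exact hg ⟨μ 1, LinearMap.mem_range_self μ 1⟩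
  have h3 : μ 1 = d • (fun _ => (1 : A)) := by
    funext i
    simp [μ, v, LinearMap.toSpanSingleton_apply, smul_eq_mul]
  rw [← h2, h3, map_smul]

section TSZE
variable {A E : Type*} [CommRing A] [AddCommGroup E] [Module A E] [Module Aᵐᵒᵖ E]
  [IsCentralScalar A E]

open TrivSqZeroExt

lemma star_of_bezout_tsze (hb : IsBezout (TrivSqZeroExt A E)) : Star A E := by
  intro d x hz
  obtain ⟨G, hG⟩ := (hb.isPrincipal_of_FG (Ideal.span {inl d, inr x})
    (Submodule.fg_span (Set.toFinite _))).principal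
  rw [Ideal.submodule_span_eq] at hG
  have h1 : (inl d : TrivSqZeroExt A E) ∈ Ideal.span {G} := hG ▸ Ideal.subset_span (by simp)
  have h2 : (inr x : TrivSqZeroExt A E) ∈ Ideal.span {G} := hG ▸ Ideal.subset_span (by simp)
  have h3 : G ∈ Ideal.span {(inl d : TrivSqZeroExt A E), inr x} := hG ▸ Ideal.subset_span rfl
  obtain ⟨r₁, hr₁⟩ := Ideal.mem_span_singleton'.mp h1
  obtain ⟨r₂, hr₂⟩ := Ideal.mem_span_singleton'.mp h2
  obtain ⟨q₁, q₂, hq⟩ := Ideal.mem_span_pair.mp h3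
  have ec : q₁.fst * d = G.fst := by
    have := congrArg TrivSqZeroExt.fst hq; simpa using this
  have eg : d • q₁.snd + q₂.fst • x = G.snd := by
    have := congrArg TrivSqZeroExt.snd hq
    simpa [op_smul_eq_smul] using this
  have e1 : r₁.fst * G.fst = d := by
    have := congrArg TrivSqZeroExt.fst hr₁; simpa using this
  have e2 : r₂.fst * G.fst = 0 := by
    have := congrArg TrivSqZeroExt.fst hr₂; simpa using this
  have e4 : r₂.fst • G.snd + G.fst • r₂.snd = x := by
    have := congrArg TrivSqZeroExt.snd hr₂
    simpa [op_smul_eq_smul] using this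
  have hx1 : x = (r₁.fst * q₁.fst) • x := by
    have h := hz (1 - r₁.fst * q₁.fst) (by linear_combination - e1 - r₁.fst * ec)
    rw [sub_smul, one_smul, sub_eq_zero] at h
    exact h
  have hx2 : (r₂.fst * q₁.fst) • x = 0 :=
    hz _ (by linear_combination e2 + r₂.fst * ec)
  have main : x = d • ((r₁.fst * q₁.fst * r₂.fst) • q₁.snd
      + (r₁.fst * q₁.fst * q₁.fst) • r₂.snd)
      + (r₁.fst * q₂.fst) • ((r₂.fst * q₁.fst) • x) := by
    calc x = (r₁.fst * q₁.fst) • x := hx1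
    _ = (r₁.fst * q₁.fst) • (r₂.fst • G.snd + G.fst • r₂.snd) := by rw [e4]
    _ = (r₁.fst * q₁.fst) • (r₂.fst • (d • q₁.snd + q₂.fst • x)
        + (q₁.fst * d) • r₂.snd) := by rw [eg, ← ec]
    _ = _ := by module
  rw [hx2, smul_zero, add_zero] at main
  exact ⟨_, main⟩


lemma bezoutA_of_tsze (hb : IsBezout (TrivSqZeroExt A E)) : IsBezout A := by
  haveI := hb
  exact Function.Surjective.isBezout (TrivSqZeroExt.fstHom A A E).toRingHom
    (fun a => ⟨inl a, rfl⟩)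

lemma cyclic_of_tsze (hb : IsBezout (TrivSqZeroExt A E)) (M : Submodule A E) (hM : M.FG) :
    ∃ x : E, M = Submodule.span A {x} := by
  obtain ⟨S, hS⟩ := hM
  set J : Ideal (TrivSqZeroExt A E) := Ideal.span (TrivSqZeroExt.inr '' (S : Set E)) with hJdef
  have hfg : J.FG := Submodule.fg_span (Set.toFinite _)
  obtain ⟨G, hG⟩ := (hb.isPrincipal_of_FG J hfg).principal
  rw [Ideal.submodule_span_eq] at hG
  have hstruct : ∀ r ∈ J, r.fst = 0 ∧ r.snd ∈ M := by
    intro r hr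
    induction hr using Submodule.span_induction with
    | mem r hrm =>
      obtain ⟨m, hm, rfl⟩ := hrm
      refine ⟨fst_inr A m, ?_⟩
      rw [snd_inr, ← hS]
      exact Submodule.subset_span hm
    | zero => exact ⟨fst_zero (M := E), M.zero_mem⟩
    | add r r' _ _ h1 h2 => exact ⟨by rw [fst_add, h1.1, h2.1, add_zero],
        by rw [snd_add]; exact M.add_mem h1.2 h2.2⟩
    | smul c r _ h1 =>
      constructor
      · rw [smul_eq_mul, fst_mul, h1.1, mul_zero]
      · rw [smul_eq_mul, snd_mul, h1.1, op_smul_eq_smul]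
        simpa using M.smul_mem c.fst h1.2
  have hGJ : G ∈ J := hG ▸ Ideal.subset_span rfl
  obtain ⟨hGfst, hGsnd⟩ := hstruct G hGJ
  refine ⟨G.snd, le_antisymm ?_ ?_⟩
  · rw [← hS, Submodule.span_le]
    intro m hm
    have hmJ : (inr m : TrivSqZeroExt A E) ∈ J := Ideal.subset_span ⟨m, hm, rfl⟩
    rw [hG] at hmJ
    obtain ⟨r, hr⟩ := Ideal.mem_span_singleton'.mp hmJ
    have := congrArg TrivSqZeroExt.snd hr
    rw [snd_mul, snd_inr, op_smul_eq_smul, hGfst] at this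
    simp only [zero_smul, add_zero] at this
    exact Submodule.mem_span_singleton.mpr ⟨r.fst, this⟩
  · rw [Submodule.span_le, Set.singleton_subset_iff]
    exact hGsnd


lemma hermite_tsze [IsReduced A] (hcoh : CoherentRing A) (hbA : IsBezout A)
    (hstar : Star A E)
    (hcyc : ∀ M : Submodule A E, M.FG → ∃ x : E, M = Submodule.span A {x}) :
    HermiteRing (TrivSqZeroExt A E) := by
  intro X Y
  obtain ⟨d, e, a₁, b₁, s, t, ha, hb', he, hde, hecom, hP⟩ := key hcoh hbA X.fst Y.fst
  set x : E := X.snd with hxdef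
  set y : E := Y.snd with hydef
  set w : E := e • (b₁ • x - a₁ • y) with hwdef
  have hwann : ∀ z : A, z * d = 0 → z • w = 0 := by
    intro z hz
    rw [hwdef, ← mul_smul, hP z hz, zero_smul]
  obtain ⟨η, hη⟩ := hstar d w hwann
  obtain ⟨h0, hM⟩ := hcyc (Submodule.span A {(1-e) • x, (1-e) • y})
    (Submodule.fg_span (Set.toFinite _))
  have hx2 : (1-e) • x ∈ Submodule.span A {h0} := by
    rw [← hM]; exact Submodule.subset_span (by simp)
  have hy2 : (1-e) • y ∈ Submodule.span A {h0} := by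
    rw [← hM]; exact Submodule.subset_span (by simp)
  obtain ⟨α, hα⟩ := Submodule.mem_span_singleton.mp hx2
  obtain ⟨β, hβ⟩ := Submodule.mem_span_singleton.mp hy2
  have hh0 : h0 ∈ Submodule.span A {(1-e) • x, (1-e) • y} := by
    rw [hM]; exact Submodule.mem_span_singleton_self h0
  have heh0 : e • h0 = 0 := by
    obtain ⟨p0, q0, hpq⟩ := Submodule.mem_span_pair.mp hh0
    have c1 : e * (p0 * (1-e)) = 0 := by linear_combination (-p0) * he
    have c2 : e * (q0 * (1-e)) = 0 := by linear_combination (-q0) * he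
    calc e • h0 = e • (p0 • ((1-e) • x) + q0 • ((1-e) • y)) := by rw [hpq]
    _ = (e * (p0 * (1-e))) • x + (e * (q0 * (1-e))) • y := by module
    _ = 0 := by rw [c1, c2, zero_smul, zero_smul, add_zero]
  obtain ⟨δ, α', β', p2, q2, hαδ, hβδ, hcom2⟩ := hermite_aux hcoh hbA α β
  set g₁ : E := e • (s • x + t • y) with hg₁def
  set g₂ : E := δ • h0 with hg₂def
  set a' : A := a₁ * e + (1 - e) * α' with ha'def
  set b' : A := b₁ * e + (1 - e) * β' with hb'def
  set p : A := s * e + (1 - e) * p2 with hpdef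
  set q : A := t * e + (1 - e) * q2 with hqdef
  have hcomA : p * a' + q * b' = 1 := by
    rw [hpdef, hqdef, ha'def, hb'def]
    linear_combination (s*a₁ + t*b₁ - s*α' - p2*a₁ - t*β' - q2*b₁ + p2*α' + q2*β') * he
      + hecom + (1-e) * hcom2
  have hfa : X.fst = d * a' := by rw [ha'def]; linear_combination ha + (a₁ - α') * hde
  have hfb : Y.fst = d * b' := by rw [hb'def]; linear_combination hb' + (b₁ - β') * hde
  -- second-coordinate identities
  have hg2x : a' • g₂ = (1-e) • x := by
    have h1 : a' • g₂ = (a₁*δ) • (e • h0) + (α'*δ) • h0 - (α'*δ) • (e • h0) := by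
      rw [hg₂def, ha'def]; module
    rw [heh0, smul_zero, smul_zero, zero_add, sub_zero] at h1
    rw [h1, show α' * δ = α by linear_combination -hαδ, hα]
  have hg2y : b' • g₂ = (1-e) • y := by
    have h1 : b' • g₂ = (b₁*δ) • (e • h0) + (β'*δ) • h0 - (β'*δ) • (e • h0) := by
      rw [hg₂def, hb'def]; module
    rw [heh0, smul_zero, smul_zero, zero_add, sub_zero] at h1
    rw [h1, show β' * δ = β by linear_combination -hβδ, hβ]
  have hc1 : a'*(e*s) + t*(e*b₁) = e := by
    rw [ha'def]; linear_combination (a₁*s - α'*s) * he + hecom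
  have hc2 : a'*(e*t) - t*(e*a₁) = 0 := by
    rw [ha'def]; linear_combination (a₁*t - α'*t) * he
  have hg1x : a' • g₁ + d • (t • η) = e • x := by
    have h1 : d • (t • η) = t • w := by rw [hη]; module
    rw [h1, hg₁def, hwdef]
    calc a' • (e • (s • x + t • y)) + t • (e • (b₁ • x - a₁ • y))
        = (a'*(e*s) + t*(e*b₁)) • x + (a'*(e*t) - t*(e*a₁)) • y := by module
    _ = e • x := by rw [hc1, hc2, zero_smul, add_zero]
  have hd1 : b'*(e*s) - s*(e*b₁) = 0 := by
    rw [hb'def]; linear_combination (b₁*s - β'*s) * he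
  have hd2 : b'*(e*t) + s*(e*a₁) = e := by
    rw [hb'def]; linear_combination (b₁*t - β'*t) * he + hecom
  have hg1y : b' • g₁ + d • (-(s • η)) = e • y := by
    have h1 : d • (-(s • η)) = (-s) • w := by rw [hη]; module
    rw [h1, hg₁def, hwdef]
    calc b' • (e • (s • x + t • y)) + (-s) • (e • (b₁ • x - a₁ • y))
        = (b'*(e*s) - s*(e*b₁)) • x + (b'*(e*t) + s*(e*a₁)) • y := by module
    _ = e • y := by rw [hd1, hd2, zero_smul, zero_add]
  have hsx : d • (t • η) + a' • (g₁ + g₂) = x := by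
    rw [smul_add]
    calc d • (t • η) + (a' • g₁ + a' • g₂)
        = (a' • g₁ + d • (t • η)) + a' • g₂ := by abel
    _ = e • x + (1-e) • x := by rw [hg1x, hg2x]
    _ = x := by module
  have hsy : d • (-(s • η)) + b' • (g₁ + g₂) = y := by
    rw [smul_add]
    calc d • (-(s • η)) + (b' • g₁ + b' • g₂)
        = (b' • g₁ + d • (-(s • η))) + b' • g₂ := by abel
    _ = e • y + (1-e) • y := by rw [hg1y, hg2y]
    _ = y := by module
  -- the R-elements
  set D : TrivSqZeroExt A E := inl d + inr (g₁ + g₂) with hDdef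
  set A' : TrivSqZeroExt A E := inl a' + inr (t • η) with hA'def
  set B' : TrivSqZeroExt A E := inl b' + inr (-(s • η)) with hB'def
  refine ⟨D, A', B', ?_, ?_, ?_⟩
  · apply TrivSqZeroExt.ext
    · simp only [hDdef, hA'def, fst_mul, fst_add, fst_inl, fst_inr, add_zero]
      exact hfa
    · simp only [hDdef, hA'def, snd_mul, snd_add, snd_inl, snd_inr, fst_add, fst_inl,
        fst_inr, add_zero, zero_add, op_smul_eq_smul]
      exact hsx.symm
  · apply TrivSqZeroExt.ext
    · simp only [hDdef, hB'def, fst_mul, fst_add, fst_inl, fst_inr, add_zero]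
      exact hfb
    · simp only [hDdef, hB'def, snd_mul, snd_add, snd_inl, snd_inr, fst_add, fst_inl,
        fst_inr, add_zero, zero_add, op_smul_eq_smul]
      exact hsy.symm
  · -- comaximality
    set ζ : E := q • (s • η) - p • (t • η) with hζdef
    set P : TrivSqZeroExt A E := inl p + inr (p • ζ) with hPdef
    set Q : TrivSqZeroExt A E := inl q + inr (q • ζ) with hQdef
    have hone : P * A' + Q * B' = 1 := by
      apply TrivSqZeroExt.ext
      · simp only [hPdef, hQdef, hA'def, hB'def, fst_mul, fst_add, fst_inl, fst_inr,
          add_zero, fst_one]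
        exact hcomA
      · simp only [hPdef, hQdef, hA'def, hB'def, snd_mul, snd_add, snd_inl, snd_inr,
          fst_add, fst_inl, fst_inr, add_zero, zero_add, op_smul_eq_smul, snd_one]
        have hz1 : a' • (p • ζ) + b' • (q • ζ) = (p * a' + q * b') • ζ := by module
        calc p • (t • η) + a' • (p • ζ) + (q • (-(s • η)) + b' • (q • ζ))
            = (p • (t • η) + q • (-(s • η))) + (a' • (p • ζ) + b' • (q • ζ)) := by abel
        _ = (p • (t • η) + q • (-(s • η))) + ζ := by rw [hz1, hcomA, one_smul]
        _ = 0 := by rw [hζdef]; module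
    rw [Ideal.eq_top_iff_one]
    refine Submodule.mem_sup.mpr ⟨P * A', Ideal.mem_span_singleton'.mpr ⟨P, rfl⟩,
      Q * B', Ideal.mem_span_singleton'.mpr ⟨Q, rfl⟩, hone⟩

end TSZE


lemma fpInjective_of_star {A E : Type*} [CommRing A] [AddCommGroup E] [Module A E]
    (hcoh : CoherentRing A) (hbA : IsBezout A) (hstar : Star A E) : IsFPInjective A E := by
  intro n
  induction n with
  | zero =>
    intro K hK f
    refine ⟨0, fun k => ?_⟩
    have hk : k = 0 := Subtype.ext (Subsingleton.elim _ _)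
    rw [hk]
    simp
  | succ n ih =>
    intro K hK f
    classical
    set π : (Fin (n+1) → A) →ₗ[A] A := LinearMap.proj (Fin.last n) with hπdef
    set pr : (Fin (n+1) → A) →ₗ[A] (Fin n → A) := LinearMap.funLeft A A Fin.castSucc with hprdef
    have hIfg : (K.map π).FG := hK.map π
    obtain ⟨d, hd⟩ := (hbA.isPrincipal_of_FG (K.map π) hIfg).principal
    rw [Ideal.submodule_span_eq] at hd
    have hdmem : d ∈ K.map π := by rw [hd]; exact Ideal.subset_span rfl
    obtain ⟨kstar, hkK, hkd⟩ := hdmem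
    set K₀ : Submodule A (Fin (n+1) → A) := K ⊓ LinearMap.ker π with hK₀def
    have hK₀fg : K₀.FG := by
      haveI : Module.Finite A K := Module.Finite.iff_fg.mpr hK
      set φ : K →ₗ[A] A := π.domRestrict K with hφdef
      have hrφ : LinearMap.range φ = K.map π := LinearMap.range_domRestrict K π
      haveI : Module.FinitePresentation A (LinearMap.range φ) := by
        rw [hrφ]; exact hcoh _ hIfg
      have hker : (LinearMap.ker φ.rangeRestrict).FG :=
        Module.FinitePresentation.fg_ker _ φ.surjective_rangeRestrict
      rw [LinearMap.ker_rangeRestrict] at hker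
      have hKeq : K₀ = (LinearMap.ker φ).map K.subtype := by
        ext v
        constructor
        · rintro hv
          obtain ⟨hvK, hvker⟩ := Submodule.mem_inf.mp hv
          exact ⟨⟨v, hvK⟩, by simpa [φ] using hvker, rfl⟩
        · rintro ⟨⟨w, hw⟩, hwker, rfl⟩
          exact Submodule.mem_inf.mpr ⟨hw, by simpa [φ] using hwker⟩
      rw [hKeq]
      exact hker.map _
    set K₁ : Submodule A (Fin n → A) := K₀.map pr with hK₁def
    have hK₁fg : K₁.FG := hK₀fg.map pr
    have hmem : ∀ v ∈ K₀, pr v ∈ K₁ := fun v hv => Submodule.mem_map_of_mem hv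
    set τ : K₀ →ₗ[A] K₁ := pr.restrict hmem with hτdef
    have hτsurj : Function.Surjective τ := by
      rintro ⟨w, v, hv, rfl⟩
      exact ⟨⟨v, hv⟩, rfl⟩
    have hlast : ∀ v : K₀, (v : Fin (n+1) → A) (Fin.last n) = 0 := by
      intro v
      have := (Submodule.mem_inf.mp v.2).2
      simpa [π] using this
    have hτinj : Function.Injective τ := by
      intro v w hvw
      have h1 : pr (v : Fin (n+1) → A) = pr (w : Fin (n+1) → A) := congrArg Subtype.val hvw
      apply Subtype.ext
      funext i
      refine Fin.lastCases ?_ ?_ i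
      · rw [hlast v, hlast w]
      · intro j
        have := congrFun h1 j
        simpa [pr, LinearMap.funLeft_apply] using this
    set eK : K₀ ≃ₗ[A] K₁ := LinearEquiv.ofBijective τ ⟨hτinj, hτsurj⟩ with heKdef
    set ι : K₀ →ₗ[A] K := Submodule.inclusion inf_le_left with hιdef
    set f₁ : K₁ →ₗ[A] E := (f.comp ι).comp eK.symm.toLinearMap with hf₁def
    obtain ⟨g₁, hg₁⟩ := ih K₁ hK₁fg f₁
    have hg₁' : ∀ v : K₀, g₁ (pr (v : Fin (n+1) → A)) = f (ι v) := by
      intro v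
      have h2 : eK.symm (τ v) = v := by
        have h3 := eK.symm_apply_apply v
        rwa [show eK v = τ v from rfl] at h3
      have h4 : g₁ ((τ v : Fin n → A)) = f₁ (τ v) := hg₁ (τ v)
      rw [show ((τ v : Fin n → A)) = pr (v : Fin (n+1) → A) from rfl] at h4
      rw [h4, hf₁def]
      simp only [LinearMap.comp_apply, LinearEquiv.coe_toLinearMap]
      rw [h2]
    set h : E := f ⟨kstar, hkK⟩ - g₁ (pr kstar) with hhdef
    have hann : ∀ z : A, z * d = 0 → z • h = 0 := by
      intro z hzd
      have hmem0 : z • kstar ∈ K₀ := by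
        refine Submodule.mem_inf.mpr ⟨K.smul_mem z hkK, ?_⟩
        rw [LinearMap.mem_ker, map_smul, hkd, smul_eq_mul, hzd]
      have h5 := hg₁' ⟨z • kstar, hmem0⟩
      have h6 : ι ⟨z • kstar, hmem0⟩ = z • (⟨kstar, hkK⟩ : K) := Subtype.ext rfl
      rw [h6, map_smul, map_smul, map_smul] at h5
      show z • h = 0
      rw [hhdef, smul_sub, h5, sub_self]
    obtain ⟨η, hη⟩ := hstar d h hann
    set g : (Fin (n+1) → A) →ₗ[A] E := g₁.comp pr + LinearMap.smulRight π η with hgdef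
    refine ⟨g, fun k => ?_⟩
    have hπk : π (k : Fin (n+1) → A) ∈ Ideal.span ({d} : Set A) := by
      rw [← hd]; exact ⟨(k : Fin (n+1) → A), k.2, rfl⟩
    obtain ⟨a, ha⟩ := Ideal.mem_span_singleton'.mp hπk
    have hmem0 : (k : Fin (n+1) → A) - a • kstar ∈ K₀ := by
      refine Submodule.mem_inf.mpr ⟨K.sub_mem k.2 (K.smul_mem a hkK), ?_⟩
      rw [LinearMap.mem_ker, map_sub, map_smul, hkd, smul_eq_mul, ha, sub_self]
    have hmemK : (k : Fin (n+1) → A) - a • kstar ∈ K := (Submodule.mem_inf.mp hmem0).1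
    have key0 : g₁ (pr ((k : Fin (n+1) → A) - a • kstar)) = f ⟨_, hmemK⟩ := by
      have := hg₁' ⟨_, hmem0⟩
      rw [show (ι ⟨(k : Fin (n+1) → A) - a • kstar, hmem0⟩) = ⟨_, hmemK⟩ from Subtype.ext rfl]
        at this
      exact this
    have hfk : f k = g₁ (pr ((k : Fin (n+1) → A) - a • kstar)) + a • f ⟨kstar, hkK⟩ := by
      have hsum : k = (⟨(k : Fin (n+1) → A) - a • kstar, hmemK⟩ : K) + a • ⟨kstar, hkK⟩ := by
        apply Subtype.ext
        show (k : Fin (n+1) → A) = ((k : Fin (n+1) → A) - a • kstar) + a • kstar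
        abel
      rw [key0]
      conv_lhs => rw [hsum]
      rw [map_add, map_smul]
    have hgk : g (k : Fin (n+1) → A)
        = g₁ (pr ((k : Fin (n+1) → A) - a • kstar)) + a • g₁ (pr kstar) + a • (d • η) := by
      have h5 : pr (k : Fin (n+1) → A)
          = pr ((k : Fin (n+1) → A) - a • kstar) + a • pr kstar := by
        rw [← map_smul, ← map_add]
        congr 1
        abel
      rw [hgdef]
      simp only [LinearMap.add_apply, LinearMap.comp_apply, LinearMap.smulRight_apply]
      rw [h5, map_add, map_smul, ← ha, mul_smul]
    rw [hgk, hfk, ← hη, hhdef, smul_sub]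
    abel

end Stmt15



/-- for `A` coherent and reduced and `E ≠ 0`, the trivial extension
`R = A ⋉ E` is Hermite iff it is Bézout iff `A` is Bézout, `E` is FP-injective and every
finitely generated submodule of `E` is cyclic. -/
theorem trivSqZeroExt_hermite_iff_bezout_of_coherent_reduced {A E : Type*} [CommRing A]
    [IsReduced A] (hcoh : CoherentRing A)
    [AddCommGroup E] [Module A E] [Module Aᵐᵒᵖ E] [IsCentralScalar A E] [Nontrivial E] :
    (HermiteRing (TrivSqZeroExt A E) ↔ IsBezout (TrivSqZeroExt A E)) ∧
    (IsBezout (TrivSqZeroExt A E) ↔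
      (IsBezout A ∧ IsFPInjective A E ∧
        (∀ M : Submodule A E, M.FG → ∃ x : E, M = Submodule.span A {x}))) := by
  have h23 : IsBezout (TrivSqZeroExt A E) →
      (IsBezout A ∧ IsFPInjective A E ∧
        (∀ M : Submodule A E, M.FG → ∃ x : E, M = Submodule.span A {x})) := by
    intro hb
    have hbA := Stmt15.bezoutA_of_tsze hb
    exact ⟨hbA, Stmt15.fpInjective_of_star hcoh hbA (Stmt15.star_of_bezout_tsze hb),
      Stmt15.cyclic_of_tsze hb⟩
  have h31 : (IsBezout A ∧ IsFPInjective A E ∧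
      (∀ M : Submodule A E, M.FG → ∃ x : E, M = Submodule.span A {x})) →
      HermiteRing (TrivSqZeroExt A E) := by
    rintro ⟨hbA, hfp, hcyc⟩
    exact Stmt15.hermite_tsze hcoh hbA (Stmt15.star_of_fpInjective hfp) hcyc
  exact ⟨⟨Stmt15.bezout_of_hermite, fun hb => h31 (h23 hb)⟩,
    ⟨h23, fun h3 => Stmt15.bezout_of_hermite (h31 h3)⟩⟩
end

section
/- Let A be a coherent reduced Bézout ring and E a nonzero FP-injective A-module all of whose finitely generated submodules are cyclic. Then for any x, y ∈ E there exist z ∈ E and an invertible 2×2 matrix B over A with B·(x, y)ᵀ = (z, 0)ᵀ. -/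
section aux
variable {A : Type*} [CommRing A]

/-- Over a coherent Bézout ring, the annihilator of an element is principal. -/
lemma ann_principal_aux [IsBezout A] (hcoh : CoherentRing A) (d : A) :
    ∃ c : A, ∀ r : A, r * d = 0 ↔ ∃ γ : A, r = γ * c := by
  have hfg : (Ideal.span {d}).FG := ⟨{d}, by simp⟩
  have hfp := hcoh _ hfg
  set f : A →ₗ[A] (Ideal.span {d} : Ideal A) :=
    LinearMap.toSpanSingleton A _ ⟨d, Ideal.subset_span rfl⟩ with hf
  have hsurj : Function.Surjective f := by
    rintro ⟨z, hz⟩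
    obtain ⟨a, ha⟩ := Ideal.mem_span_singleton'.mp hz
    exact ⟨a, Subtype.ext (by simpa [f, LinearMap.toSpanSingleton, smul_eq_mul] using ha)⟩
  have hker : (LinearMap.ker f).FG := Module.FinitePresentation.fg_ker f hsurj
  obtain ⟨c, hc⟩ := (IsBezout.isPrincipal_of_FG _ hker).1
  refine ⟨c, fun r => ?_⟩
  have hmem : r * d = 0 ↔ r ∈ LinearMap.ker f := by
    simp only [LinearMap.mem_ker, hf, LinearMap.toSpanSingleton_apply]
    constructor
    · intro h; exact Subtype.ext (by simpa [smul_eq_mul] using h)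
    · intro h; simpa [smul_eq_mul] using congrArg Subtype.val h
  rw [hmem, hc, Submodule.mem_span_singleton]
  constructor
  · rintro ⟨γ, hγ⟩; exact ⟨γ, by simpa [smul_eq_mul] using hγ.symm⟩
  · rintro ⟨γ, hγ⟩; exact ⟨γ, by simpa [smul_eq_mul] using hγ.symm⟩

/-- Key lemma: in a reduced coherent Bézout ring, for every `d` there is an idempotent `e`
with `d * e = 0` and `r * e = r` for every `r` annihilating `d` (i.e. the annihilator of `d`
is generated by the idempotent `e`). -/
lemma exists_idem_aux [IsReduced A] [IsBezout A] (hcoh : CoherentRing A) (d : A) :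
    ∃ e : A, e * e = e ∧ d * e = 0 ∧ ∀ r : A, r * d = 0 → r * e = r := by
  obtain ⟨c, hc⟩ := ann_principal_aux hcoh d
  obtain ⟨ct, hct⟩ := ann_principal_aux hcoh c
  have hcd : c * d = 0 := (hc c).mpr ⟨1, (one_mul c).symm⟩
  have hctc : ct * c = 0 := (hct ct).mpr ⟨1, (one_mul ct).symm⟩
  -- c + ct is regular
  have reg : ∀ r : A, r * (c + ct) = 0 → r = 0 := by
    intro r hr
    have hrc : r * c = 0 := by
      have hsq : (r * c) * (r * c) = 0 := by linear_combination (r * c) * hr - r * r * hctc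
      exact IsNilpotent.eq_zero ⟨2, by rw [pow_two]; exact hsq⟩
    have hrct : r * ct = 0 := by linear_combination hr - hrc
    obtain ⟨μ, hμ⟩ := (hct r).mp hrc
    have hsq : r * r = 0 := by linear_combination r * hμ + μ * hrct
    exact IsNilpotent.eq_zero ⟨2, by rw [pow_two]; exact hsq⟩
  -- Bezout on (c, ct)
  have hfg : (Ideal.span ({c, ct} : Set A)).FG := Submodule.fg_span (Set.toFinite _)
  obtain ⟨h, hh⟩ := (IsBezout.isPrincipal_of_FG _ hfg).1
  have hcmem : c ∈ Ideal.span ({h} : Set A) := by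
    rw [show Ideal.span ({h} : Set A) = Submodule.span A {h} from rfl, ← hh]
    exact Ideal.subset_span (by simp)
  have hctmem : ct ∈ Ideal.span ({h} : Set A) := by
    rw [show Ideal.span ({h} : Set A) = Submodule.span A {h} from rfl, ← hh]
    exact Ideal.subset_span (by simp)
  obtain ⟨c₁, hc₁⟩ := Ideal.mem_span_singleton'.mp hcmem
  obtain ⟨ct₁, hct₁⟩ := Ideal.mem_span_singleton'.mp hctmem
  have hhmem : h ∈ Ideal.span ({c, ct} : Set A) := by
    rw [hh]; exact Submodule.subset_span rfl
  obtain ⟨xx, yy, hxy⟩ := Submodule.mem_span_pair.mp hhmem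
  simp only [smul_eq_mul] at hxy
  -- h is regular
  have hreg : ∀ r : A, r * h = 0 → r = 0 := by
    intro r hr
    apply reg
    linear_combination (c₁ + ct₁) * hr - r * hc₁ - r * hct₁
  have hone : xx * c₁ + yy * ct₁ = 1 := by
    have hk : xx * c₁ + yy * ct₁ - 1 = 0 :=
      hreg _ (by linear_combination xx * hc₁ + yy * hct₁ + hxy)
    linear_combination hk
  have hc₁ct₁ : c₁ * ct₁ = 0 := by
    apply hreg; apply hreg
    linear_combination (ct₁ * h) * hc₁ + c * hct₁ + hctc
  have hc₁sq : xx * (c₁ * c₁) = c₁ := by linear_combination c₁ * hone - yy * hc₁ct₁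
  have hce : c * (xx * c₁) = c := by linear_combination h * hc₁sq - (xx * c₁ - 1) * hc₁
  refine ⟨xx * c₁, by linear_combination xx * hc₁sq, ?_, ?_⟩
  · obtain ⟨δ, hδ⟩ := (hct d).mp (by linear_combination hcd)
    have hctc₁ : ct * c₁ = 0 := hreg _ (by linear_combination ct * hc₁ + hctc)
    linear_combination (xx * c₁) * hδ + δ * xx * hctc₁
  · intro r hr
    obtain ⟨γ, hγ⟩ := (hc r).mp hr
    linear_combination (xx * c₁) * hγ + γ * hce - hγ

end aux

/-- over a coherent reduced Bézout ring `A`, if `E ≠ 0` is FP-injective with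
all finitely generated submodules cyclic, then any pair `(x, y)` in `E` can be carried to a
pair `(z, 0)` by an invertible `2 × 2` matrix over `A`. -/
theorem exists_invertible_matrix_diagonalizing {A E : Type*} [CommRing A] [IsReduced A]
    [IsBezout A] (hcoh : CoherentRing A)
    [AddCommGroup E] [Module A E] [Nontrivial E]
    (hfp : IsFPInjective A E)
    (hcyc : ∀ M : Submodule A E, M.FG → ∃ x : E, M = Submodule.span A {x}) :
    ∀ x y : E, ∃ (z : E) (B : Matrix (Fin 2) (Fin 2) A), IsUnit B ∧
      B 0 0 • x + B 0 1 • y = z ∧ B 1 0 • x + B 1 1 • y = 0 := by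
  intro x y
  -- the span of {x, y} is cyclic, generated by z₀
  obtain ⟨z₀, hz₀⟩ := hcyc (Submodule.span A {x, y}) (Submodule.fg_span (Set.toFinite _))
  have hx : x ∈ Submodule.span A ({z₀} : Set E) := by
    rw [← hz₀]; exact Submodule.subset_span (by simp)
  have hy : y ∈ Submodule.span A ({z₀} : Set E) := by
    rw [← hz₀]; exact Submodule.subset_span (by simp)
  obtain ⟨s, hs⟩ := Submodule.mem_span_singleton.mp hx
  obtain ⟨t, ht⟩ := Submodule.mem_span_singleton.mp hy
  -- Bezout: (s, t) = (d)
  obtain ⟨d, hd⟩ := (IsBezout.isPrincipal_of_FG (Ideal.span ({s, t} : Set A))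
    (Submodule.fg_span (Set.toFinite _))).1
  have hsmem : s ∈ Ideal.span ({d} : Set A) := by
    rw [show Ideal.span ({d} : Set A) = Submodule.span A {d} from rfl, ← hd]
    exact Ideal.subset_span (by simp)
  have htmem : t ∈ Ideal.span ({d} : Set A) := by
    rw [show Ideal.span ({d} : Set A) = Submodule.span A {d} from rfl, ← hd]
    exact Ideal.subset_span (by simp)
  obtain ⟨s', hs'⟩ := Ideal.mem_span_singleton'.mp hsmem
  obtain ⟨t', ht'⟩ := Ideal.mem_span_singleton'.mp htmem
  have hdmem : d ∈ Ideal.span ({s, t} : Set A) := by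
    rw [hd]; exact Submodule.subset_span rfl
  obtain ⟨α, β, hαβ⟩ := Submodule.mem_span_pair.mp hdmem
  simp only [smul_eq_mul] at hαβ
  -- the idempotent generating the annihilator of d
  obtain ⟨e, hee, hde, habs⟩ := exists_idem_aux hcoh d
  have ha : (1 - (α * s' + β * t')) * e = 1 - (α * s' + β * t') := by
    apply habs
    linear_combination -α * hs' - β * ht' - hαβ
  -- the matrix entries
  set p : A := -(t' * (1 - e)) with hp
  set q : A := s' * (1 - e) + e with hq
  set u : A := -(β * (1 - e)) with hu
  set v : A := α * (1 - e) + e with hv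
  have key1 : u * p + v * q = 1 := by
    rw [hp, hq, hu, hv]
    linear_combination ((α * s' + β * t') - α - s' + 1) * hee + ha
  have key2 : p * s + q * t = 0 := by
    rw [hp, hq]
    linear_combination (-(t' * (1 - e))) * hs'.symm + (s' * (1 - e) + e) * ht'.symm + t' * hde
  refine ⟨v • x + (-u) • y, !![v, -u; p, q], ?_, by simp, ?_⟩
  · rw [Matrix.isUnit_iff_isUnit_det, Matrix.det_fin_two_of]
    exact (show v * q - -u * p = 1 by linear_combination key1) ▸ isUnit_one
  · show p • x + q • y = 0
    rw [← hs, ← ht, smul_smul, smul_smul, ← add_smul, key2, zero_smul]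
end

section
/- Let A be a commutative local ring with nilradical N. Then A is an fqp-ring (every finitely generated ideal is quasi-projective) if and only if either A is a chain ring, or A/N is a valuation domain and N is a divisible torsion-free A/N-module (in particular N² = 0 when A is not a chain ring). -/
set_option linter.unusedSectionVars false
set_option linter.unusedVariables false
set_option maxHeartbeats 1600000

/-- A module `V` is quasi-projective if `Hom(V, V) → Hom(V, V/X)` is surjective for every
submodule `X` of `V`. -/
def QuasiProjective (R V : Type*) [CommRing R] [AddCommGroup V] [Module R V] : Prop :=
  ∀ (X : Submodule R V) (f : V →ₗ[R] V ⧸ X), ∃ g : V →ₗ[R] V, X.mkQ.comp g = f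

/-- An fqp-ring is a commutative ring all of whose finitely generated ideals are
quasi-projective. -/
def IsFqpRing (R : Type*) [CommRing R] : Prop :=
  ∀ I : Ideal R, I.FG → QuasiProjective R I


private lemma lift_helper {A M P Q : Type*} [CommRing A] [AddCommGroup M] [Module A M]
    [AddCommGroup P] [Module A P] [AddCommGroup Q] [Module A Q]
    (ℓ : M →ₗ[A] P) (hsur : Function.Surjective ℓ) (G : M →ₗ[A] Q)
    (h : ∀ c, ℓ c = 0 → G c = 0) :
    ∃ g : P →ₗ[A] Q, ∀ c, g (ℓ c) = G c := by
  have hle : LinearMap.ker ℓ ≤ LinearMap.ker G := fun c hc => h c hc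
  let e := ℓ.quotKerEquivOfSurjective hsur
  refine ⟨(Submodule.liftQ _ G hle).comp e.symm.toLinearMap, fun c => ?_⟩
  have he : e (Submodule.Quotient.mk c) = ℓ c := rfl
  have : e.symm (ℓ c) = Submodule.Quotient.mk c := by
    rw [← he, LinearEquiv.symm_apply_apply]
  simp [this]

section
variable {A : Type*} [CommRing A] [IsLocalRing A]

/-- incomparability of principal ideals -/
def Incomp (u v : A) : Prop := u ∉ Ideal.span {v} ∧ v ∉ Ideal.span {u}

lemma Incomp.symm {u v : A} (h : Incomp u v) : Incomp v u := ⟨h.2, h.1⟩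

lemma Incomp.ne_zero {u v : A} (h : Incomp u v) : u ≠ 0 := by
  rintro rfl; exact h.1 (Submodule.zero_mem _)

section pair
variable (u v : A)

lemma mem_pair_left : u ∈ (Ideal.span {u, v} : Ideal A) :=
  Ideal.subset_span (Set.mem_insert _ _)

lemma mem_pair_right : v ∈ (Ideal.span {u, v} : Ideal A) :=
  Ideal.subset_span (Set.mem_insert_of_mem _ rfl)

noncomputable def pairMap : (A × A) →ₗ[A] ↥(Ideal.span {u, v} : Ideal A) :=
  LinearMap.codRestrict (Ideal.span {u, v} : Ideal A)
    ((LinearMap.fst A A A).smulRight u + (LinearMap.snd A A A).smulRight v)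
    (fun c => Submodule.add_mem _ (Ideal.mul_mem_left _ _ (mem_pair_left u v))
      (Ideal.mul_mem_left _ _ (mem_pair_right u v)))

lemma pairMap_apply (c : A × A) : (pairMap u v c : A) = c.1 * u + c.2 * v := by
  simp [pairMap, smul_eq_mul]

lemma pairMap_surjective : Function.Surjective (pairMap u v) := by
  rintro ⟨w, hw⟩
  rw [Ideal.mem_span_pair] at hw
  obtain ⟨m, n, hmn⟩ := hw
  exact ⟨(m, n), Subtype.ext (by rw [pairMap_apply]; exact hmn)⟩

end pair
end

section main
variable {A : Type*} [CommRing A] [IsLocalRing A]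

lemma unit_of_mem_m {x y : A} (hx : ¬IsUnit x) (hy : ¬IsUnit y) :
    IsUnit (1 + x - y) := by
  by_contra h
  have hx' : x ∈ IsLocalRing.maximalIdeal A := hx
  have hy' : y ∈ IsLocalRing.maximalIdeal A := hy
  have h' : (1 + x - y) ∈ IsLocalRing.maximalIdeal A := h
  have hone : (1 : A) ∈ IsLocalRing.maximalIdeal A := by
    have h2 := Submodule.add_mem _ (Submodule.sub_mem _ h' hx') hy'
    have h3 : (1 + x - y) - x + y = 1 := by ring
    rwa [h3] at h2
  exact (IsLocalRing.maximalIdeal.isMaximal A).ne_top ((Ideal.eq_top_iff_one _).mpr hone)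

lemma span_pair_fg (u v : A) : (Ideal.span {u, v} : Ideal A).FG := by
  classical
  exact ⟨{u, v}, by simp⟩

/-- Lemma D : for incomparable u v, span{u} ⊓ span{v} = 0. -/
lemma eq_zero_of_mem_inf (hQP : ∀ I : Ideal A, I.FG → QuasiProjective A I)
    {u v : A} (huv : Incomp u v) {w : A}
    (hwu : w ∈ Ideal.span ({u} : Set A)) (hwv : w ∈ Ideal.span ({v} : Set A)) : w = 0 := by
  classical
  set I : Ideal A := Ideal.span {u, v} with hI
  set X : Submodule A ↥I :=
    Submodule.comap I.subtype ((Ideal.span {u} ⊓ Ideal.span {v} : Ideal A)) with hX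
  set G : (A × A) →ₗ[A] (↥I ⧸ X) := X.mkQ.comp
    (LinearMap.codRestrict I ((LinearMap.fst A A A).smulRight u)
      (fun c => Ideal.mul_mem_left _ _ (mem_pair_left u v))) with hG
  have hGapply : ∀ c : A × A,
      G c = X.mkQ ⟨c.1 * u, Ideal.mul_mem_left _ _ (mem_pair_left u v)⟩ := by
    intro c
    rfl
  have hker : ∀ c : A × A, pairMap u v c = 0 → G c = 0 := by
    intro c hc
    have hc' : c.1 * u + c.2 * v = 0 := by
      have := congrArg (Subtype.val) hc
      rwa [pairMap_apply] at this
    have h1 : c.1 * u ∈ Ideal.span ({u} : Set A) :=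
      Ideal.mem_span_singleton.mpr (dvd_mul_left u c.1)
    have h2 : c.1 * u ∈ Ideal.span ({v} : Set A) := by
      have h3 : c.1 * u = -(c.2 * v) := by linear_combination hc'
      rw [h3]
      exact Submodule.neg_mem _ (Ideal.mem_span_singleton.mpr (dvd_mul_left v c.2))
    rw [hGapply, Submodule.mkQ_apply, Submodule.Quotient.mk_eq_zero, hX,
      Submodule.mem_comap, Submodule.subtype_apply]
    exact Submodule.mem_inf.mpr ⟨h1, h2⟩
  obtain ⟨f, hf⟩ := lift_helper (pairMap u v) (pairMap_surjective u v) G hker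
  obtain ⟨g, hg⟩ := hQP I (span_pair_fg u v) X f
  have hgap : ∀ z : ↥I, X.mkQ (g z) = f z := fun z => congrFun (congrArg DFunLike.coe hg) z
  set u' : ↥I := ⟨u, mem_pair_left u v⟩ with hu'
  set v' : ↥I := ⟨v, mem_pair_right u v⟩ with hv'
  have hpu : pairMap u v (1, 0) = u' := by
    apply Subtype.ext
    rw [pairMap_apply, hu']
    simp
  have hpv : pairMap u v (0, 1) = v' := by
    apply Subtype.ext
    rw [pairMap_apply, hv']
    simp
  have hgu : (↑(g u' - u') : A) ∈ (Ideal.span {u} ⊓ Ideal.span {v} : Ideal A) := by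
    have h0 : X.mkQ (g u') = X.mkQ u' := by
      rw [hgap u', ← hpu, hf, hGapply]
      congr 1
      exact Subtype.ext (by simp [pairMap_apply])
    have h1 : g u' - u' ∈ X := by
      have h2 : X.mkQ (g u' - u') = 0 := by rw [map_sub, h0, sub_self]
      rwa [Submodule.mkQ_apply, Submodule.Quotient.mk_eq_zero] at h2
    rw [hX] at h1
    rw [Submodule.mem_comap, Submodule.subtype_apply] at h1
    exact h1
  have hgv : (↑(g v') : A) ∈ (Ideal.span {u} ⊓ Ideal.span {v} : Ideal A) := by
    have h0 : X.mkQ (g v') = 0 := by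
      rw [hgap v', ← hpv, hf, hGapply, Submodule.mkQ_apply, Submodule.Quotient.mk_eq_zero,
        hX, Submodule.mem_comap, Submodule.subtype_apply]
      refine Submodule.mem_inf.mpr ⟨?_, ?_⟩ <;>
        · show ((0,1) : A × A).1 * u ∈ _
          norm_num
    have h1 : g v' ∈ X := by
      rwa [Submodule.mkQ_apply, Submodule.Quotient.mk_eq_zero] at h0
    rw [hX] at h1
    rw [Submodule.mem_comap, Submodule.subtype_apply] at h1
    exact h1
  obtain ⟨p, hp⟩ := Ideal.mem_span_singleton.mp hwu
  obtain ⟨q, hq⟩ := Ideal.mem_span_singleton.mp hwv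
  obtain ⟨p₁, hp₁⟩ := Ideal.mem_span_singleton.mp (Submodule.mem_inf.mp hgu).1
  obtain ⟨q₁, hq₁⟩ := Ideal.mem_span_singleton.mp (Submodule.mem_inf.mp hgu).2
  obtain ⟨p₂, hp₂⟩ := Ideal.mem_span_singleton.mp (Submodule.mem_inf.mp hgv).1
  obtain ⟨q₂, hq₂⟩ := Ideal.mem_span_singleton.mp (Submodule.mem_inf.mp hgv).2
  have hp₁m : ¬IsUnit p₁ := by
    intro hun
    obtain ⟨pu, hpu'⟩ := hun
    have h3 : u * p₁ = v * q₁ := by rw [← hp₁, hq₁]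
    have h4 : p₁ * ↑pu⁻¹ = 1 := by rw [← hpu', Units.mul_inv]
    have h5 : u = v * (q₁ * ↑pu⁻¹) := by
      calc u = u * (p₁ * ↑pu⁻¹) := by rw [h4, mul_one]
      _ = (u * p₁) * ↑pu⁻¹ := by ring
      _ = (v * q₁) * ↑pu⁻¹ := by rw [h3]
      _ = v * (q₁ * ↑pu⁻¹) := by ring
    exact huv.1 (Ideal.mem_span_singleton.mpr ⟨q₁ * ↑pu⁻¹, h5⟩)
  have hq₂m : ¬IsUnit q₂ := by
    intro hun
    obtain ⟨qu, hqu'⟩ := hun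
    have h3 : u * p₂ = v * q₂ := by rw [← hp₂, hq₂]
    have h4 : q₂ * ↑qu⁻¹ = 1 := by rw [← hqu', Units.mul_inv]
    have h5 : v = u * (p₂ * ↑qu⁻¹) := by
      calc v = v * (q₂ * ↑qu⁻¹) := by rw [h4, mul_one]
      _ = (v * q₂) * ↑qu⁻¹ := by ring
      _ = (u * p₂) * ↑qu⁻¹ := by rw [← h3]
      _ = u * (p₂ * ↑qu⁻¹) := by ring
    exact huv.2 (Ideal.mem_span_singleton.mpr ⟨p₂ * ↑qu⁻¹, h5⟩)
  have hwI : w ∈ I := hp ▸ Ideal.mul_mem_right p I (mem_pair_left u v)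
  set w' : ↥I := ⟨w, hwI⟩ with hw'
  have hwu' : w' = p • u' := Subtype.ext (by simp [smul_eq_mul, hw', hu']; rw [hp]; ring)
  have hwv' : w' = q • v' := Subtype.ext (by simp [smul_eq_mul, hw', hv']; rw [hq]; ring)
  have hcoesub : (↑(g u' - u') : A) = ↑(g u') - u := by
    rw [AddSubgroupClass.coe_sub]
  have hcoe1 : (↑(g u') : A) = u + u * p₁ := by
    rw [hcoesub] at hp₁
    linear_combination hp₁
  have hw1 : (↑(g w') : A) = p * (u + u * p₁) := by
    rw [hwu', map_smul, Submodule.coe_smul, hcoe1, smul_eq_mul]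
  have hw2 : (↑(g w') : A) = q * (v * q₂) := by
    rw [hwv', map_smul, Submodule.coe_smul, hq₂, smul_eq_mul]
  have heq2 : (1 + p₁ - q₂) * w = 0 := by
    have h6 : p * (u + u * p₁) = q * (v * q₂) := by rw [← hw1, hw2]
    have e1 : w + p₁ * w = p * (u + u * p₁) := by rw [hp]; ring
    have e2 : q₂ * w = q * (v * q₂) := by rw [hq]; ring
    linear_combination e1 - e2 + h6
  obtain ⟨s, hs⟩ := unit_of_mem_m hp₁m hq₂m
  calc w = ↑s⁻¹ * (↑s * w) := by rw [← mul_assoc, Units.inv_mul, one_mul]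
  _ = ↑s⁻¹ * ((1 + p₁ - q₂) * w) := by rw [hs]
  _ = 0 := by rw [heq2, mul_zero]

/-- diagonality of relations for incomparable pairs -/
lemma diag_rel (hQP : ∀ I : Ideal A, I.FG → QuasiProjective A I)
    {u v : A} (huv : Incomp u v) {x y : A} (h : x * u + y * v = 0) :
    x * u = 0 ∧ y * v = 0 := by
  have h1 : x * u = -(y * v) := by linear_combination h
  have h2 : x * u ∈ Ideal.span ({u} : Set A) := Ideal.mem_span_singleton.mpr (dvd_mul_left u x)
  have h3 : x * u ∈ Ideal.span ({v} : Set A) := by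
    rw [h1]
    exact Submodule.neg_mem _ (Ideal.mem_span_singleton.mpr (dvd_mul_left v y))
  have h4 : x * u = 0 := eq_zero_of_mem_inf hQP huv h2 h3
  exact ⟨h4, by linear_combination h - h4⟩

lemma nonunit_coeff {u v : A} (huv : Incomp u v) {x y : A} (h : x * u + y * v = 0) :
    ¬IsUnit x := by
  intro hun
  obtain ⟨s, hs⟩ := hun
  apply huv.1
  rw [Ideal.mem_span_singleton]
  refine ⟨-(↑s⁻¹ * y), ?_⟩
  have h4 : ↑s⁻¹ * (x * u) = ↑s⁻¹ * -(y * v) := by rw [show x * u = -(y*v) by linear_combination h]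
  calc u = ↑s⁻¹ * (x * u) := by rw [← hs, ← mul_assoc, Units.inv_mul, one_mul]
  _ = v * -(↑s⁻¹ * y) := by rw [h4]; ring

lemma mem_smul_pair {u v w : A}
    (hw : w ∈ (IsLocalRing.maximalIdeal A) * (Ideal.span {u, v} : Ideal A)) :
    ∃ p q, ¬IsUnit p ∧ ¬IsUnit q ∧ w = p * u + q * v := by
  refine Submodule.mul_induction_on hw ?_ ?_
  · intro a ha i hi
    obtain ⟨m, n, hmn⟩ := Ideal.mem_span_pair.mp hi
    refine ⟨a * m, a * n, ?_, ?_, by rw [← hmn]; ring⟩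
    · exact Ideal.mul_mem_right m _ ha
    · exact Ideal.mul_mem_right n _ ha
  · rintro x y ⟨p, q, hp, hq, rfl⟩ ⟨p', q', hp', hq', rfl⟩
    refine ⟨p + p', q + q', ?_, ?_, by ring⟩
    · exact Submodule.add_mem (IsLocalRing.maximalIdeal A) hp hp'
    · exact Submodule.add_mem (IsLocalRing.maximalIdeal A) hq hq'

/-- Lemma A' : annihilator transfer along incomparable pairs. -/
lemma ann_transfer (hQP : ∀ I : Ideal A, I.FG → QuasiProjective A I)
    {u v : A} (huv : Incomp u v) {r : A} (hru : r * u = 0) : r * v = 0 := by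
  classical
  set I : Ideal A := Ideal.span {u, v} with hI
  set X : Submodule A ↥I :=
    Submodule.comap I.subtype ((IsLocalRing.maximalIdeal A) * I) with hX
  have hmemvu : ∀ c : A × A, c.1 * v + c.2 * u ∈ I := fun c =>
    Submodule.add_mem _ (Ideal.mul_mem_left _ _ (mem_pair_right u v))
      (Ideal.mul_mem_left _ _ (mem_pair_left u v))
  set G : (A × A) →ₗ[A] (↥I ⧸ X) := X.mkQ.comp
    (LinearMap.codRestrict I
      ((LinearMap.fst A A A).smulRight v + (LinearMap.snd A A A).smulRight u)
      (fun c => hmemvu c)) with hG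
  have hGapply : ∀ c : A × A, G c = X.mkQ ⟨c.1 * v + c.2 * u, hmemvu c⟩ := by
    intro c; rfl
  have hker : ∀ c : A × A, pairMap u v c = 0 → G c = 0 := by
    intro c hc
    have hc' : c.1 * u + c.2 * v = 0 := by
      have := congrArg (Subtype.val) hc
      rwa [pairMap_apply] at this
    have h1 : ¬IsUnit c.1 := nonunit_coeff huv hc'
    have h2 : ¬IsUnit c.2 := by
      have hc'' : c.2 * v + c.1 * u = 0 := by linear_combination hc'
      exact nonunit_coeff huv.symm hc''
    rw [hGapply, Submodule.mkQ_apply, Submodule.Quotient.mk_eq_zero, hX,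
      Submodule.mem_comap, Submodule.subtype_apply]
    exact Submodule.add_mem _
      (Ideal.mul_mem_mul h1 (mem_pair_right u v))
      (Ideal.mul_mem_mul h2 (mem_pair_left u v))
  obtain ⟨f, hf⟩ := lift_helper (pairMap u v) (pairMap_surjective u v) G hker
  obtain ⟨g, hg⟩ := hQP I (span_pair_fg u v) X f
  have hgap : ∀ z : ↥I, X.mkQ (g z) = f z := fun z => congrFun (congrArg DFunLike.coe hg) z
  set u' : ↥I := ⟨u, mem_pair_left u v⟩ with hu'
  set v' : ↥I := ⟨v, mem_pair_right u v⟩ with hv'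
  have hpu : pairMap u v (1, 0) = u' := by
    apply Subtype.ext
    rw [pairMap_apply, hu']
    simp
  have hgu : (↑(g u' - v') : A) ∈ (IsLocalRing.maximalIdeal A) * I := by
    have h0 : X.mkQ (g u') = X.mkQ v' := by
      rw [hgap u', ← hpu, hf, hGapply]
      congr 1
      exact Subtype.ext (by simp [pairMap_apply, hv'])
    have h1 : g u' - v' ∈ X := by
      have h2 : X.mkQ (g u' - v') = 0 := by rw [map_sub, h0, sub_self]
      rwa [Submodule.mkQ_apply, Submodule.Quotient.mk_eq_zero] at h2
    rw [hX] at h1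
    rwa [Submodule.mem_comap, Submodule.subtype_apply] at h1
  obtain ⟨p, q, hpm, hqm, hpq⟩ := mem_smul_pair hgu
  -- coordinates of g u'
  have hcoe1 : (↑(g u') : A) = v + (p * u + q * v) := by
    have h5 : (↑(g u' - v') : A) = ↑(g u') - v := by rw [AddSubgroupClass.coe_sub]
    rw [h5] at hpq
    linear_combination hpq
  -- apply r
  have hzero : r • u' = (0 : ↥I) := Subtype.ext (by simp [smul_eq_mul, hru, hu'])
  have h6 : (0 : A) = r * (v + (p * u + q * v)) := by
    have h7 : g (r • u') = 0 := by rw [hzero, map_zero]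
    have h8 := congrArg (Subtype.val) h7
    rw [map_smul] at h8
    rw [Submodule.coe_smul, hcoe1, smul_eq_mul] at h8
    rw [h8]
    norm_num
  have h9 : (r * p) * u + (r * (1 + q)) * v = 0 := by linear_combination -h6
  have h10 := (diag_rel hQP huv h9).2
  obtain ⟨s, hs⟩ := unit_of_mem_m hqm (not_isUnit_zero (M₀ := A))
  have hs' : (↑s : A) = 1 + q := by rw [hs]; ring
  calc r * v = ↑s⁻¹ * (↑s * (r * v)) := by rw [← mul_assoc, Units.inv_mul, one_mul]
  _ = ↑s⁻¹ * ((r * (1 + q)) * v) := by rw [hs']; ring_nf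
  _ = 0 := by rw [h10, mul_zero]

lemma chain_of_pairs {R : Type*} [CommRing R]
    (h : ∀ a b : R, a ∈ Ideal.span ({b} : Set R) ∨ b ∈ Ideal.span ({a} : Set R)) :
    ChainRing R := by
  intro I J
  by_cases hIJ : I ≤ J
  · exact Or.inl hIJ
  · right
    rw [SetLike.not_le_iff_exists] at hIJ
    obtain ⟨x, hxI, hxJ⟩ := hIJ
    intro y hy
    rcases h x y with h1 | h1
    · exact absurd (Ideal.span_le.mpr (Set.singleton_subset_iff.mpr hy) h1) hxJ
    · exact Ideal.span_le.mpr (Set.singleton_subset_iff.mpr hxI) h1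

lemma incomp_of_not_chain (hNC : ¬ChainRing A) : ∃ u v : A, Incomp u v := by
  by_contra h
  push_neg at h
  apply hNC
  apply chain_of_pairs
  intro a b
  have := h a b
  unfold Incomp at this
  tauto

lemma mul_zero_of_incomp (hQP : ∀ I : Ideal A, I.FG → QuasiProjective A I)
    {u v : A} (huv : Incomp u v) : u * v = 0 := by
  have h : v * u + (-u) * v = 0 := by ring
  have := (diag_rel hQP huv h).1
  linear_combination this

lemma sq_zero_of_incomp (hQP : ∀ I : Ideal A, I.FG → QuasiProjective A I)
    {u v : A} (huv : Incomp u v) : u * u = 0 := by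
  have h1 : u * v = 0 := mul_zero_of_incomp hQP huv
  exact ann_transfer hQP huv.symm h1

lemma mem_nil_of_incomp (hQP : ∀ I : Ideal A, I.FG → QuasiProjective A I)
    {u v : A} (huv : Incomp u v) : u ∈ nilradical A := by
  rw [mem_nilradical]
  exact ⟨2, by rw [pow_two]; exact sq_zero_of_incomp hQP huv⟩

lemma tricho (a b : A) : Incomp a b ∨ a ∈ Ideal.span ({b} : Set A) ∨ b ∈ Ideal.span ({a} : Set A) := by
  unfold Incomp
  tauto

lemma nilp_sq_zero (hQP : ∀ I : Ideal A, I.FG → QuasiProjective A I)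
    (hNC : ¬ChainRing A) {x : A} (hx : x ∈ nilradical A) : x * x = 0 := by
  by_contra hx2
  obtain ⟨u, v, huv⟩ := incomp_of_not_chain hNC
  obtain ⟨n, hn⟩ := mem_nilradical.mp hx
  have claim : ∀ k : ℕ, ∃ s t : A, Incomp s t ∧
      s ∈ Ideal.span ({x ^ k} : Set A) ∧ t ∈ Ideal.span ({x ^ k} : Set A) := by
    intro k
    induction k with
    | zero =>
      refine ⟨u, v, huv, ?_, ?_⟩ <;>
        · rw [pow_zero, Ideal.span_singleton_one]; trivial
    | succ k ih =>
      obtain ⟨s, t, hst, hs, ht⟩ := ih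
      obtain ⟨e, he⟩ := Ideal.mem_span_singleton.mp hs
      obtain ⟨f, hf⟩ := Ideal.mem_span_singleton.mp ht
      have hef : Incomp e f := by
        constructor
        · intro hmem
          obtain ⟨c, hc⟩ := Ideal.mem_span_singleton.mp hmem
          refine hst.1 (Ideal.mem_span_singleton.mpr ⟨c, ?_⟩)
          rw [he, hc, hf]; ring
        · intro hmem
          obtain ⟨c, hc⟩ := Ideal.mem_span_singleton.mp hmem
          refine hst.2 (Ideal.mem_span_singleton.mpr ⟨c, ?_⟩)
          rw [hf, hc, he]; ring
      have step : ∀ w c : A, c * c = 0 → w = x ^ k * c →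
          w ∈ Ideal.span ({x ^ (k+1)} : Set A) := by
        intro w c hcc hw
        rcases tricho c x with h1 | h1 | h1
        · exact absurd (sq_zero_of_incomp hQP h1.symm) hx2
        · obtain ⟨d, hd⟩ := Ideal.mem_span_singleton.mp h1
          exact Ideal.mem_span_singleton.mpr ⟨d, by rw [hw, hd, pow_succ]; ring⟩
        · obtain ⟨d, hd⟩ := Ideal.mem_span_singleton.mp h1
          refine absurd ?_ hx2
          rw [hd]
          calc c * d * (c * d) = (c * c) * (d * d) := by ring
          _ = 0 := by rw [hcc]; ring
      exact ⟨s, t, hst, step s e (sq_zero_of_incomp hQP hef) he,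
        step t f (sq_zero_of_incomp hQP hef.symm) hf⟩
  obtain ⟨s, t, hst, hs, ht⟩ := claim n
  rw [hn, Ideal.span_singleton_eq_bot.mpr rfl, Ideal.mem_bot] at hs
  exact hst.1 (hs ▸ Submodule.zero_mem _)

lemma nil_mul_zero (hQP : ∀ I : Ideal A, I.FG → QuasiProjective A I)
    (hNC : ¬ChainRing A) {x y : A} (hx : x ∈ nilradical A) (hy : y ∈ nilradical A) :
    x * y = 0 := by
  rcases tricho x y with h | h | h
  · exact mul_zero_of_incomp hQP h
  · obtain ⟨c, hc⟩ := Ideal.mem_span_singleton.mp h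
    rw [hc]
    calc y * c * y = (y * y) * c := by ring
    _ = 0 := by rw [nilp_sq_zero hQP hNC hy]; ring
  · obtain ⟨c, hc⟩ := Ideal.mem_span_singleton.mp h
    rw [hc]
    calc x * (x * c) = (x * x) * c := by ring
    _ = 0 := by rw [nilp_sq_zero hQP hNC hx]; ring

lemma sq_mem_nil {x : A} (h : x * x ∈ nilradical A) : x ∈ nilradical A := by
  rw [mem_nilradical] at h ⊢
  obtain ⟨n, hn⟩ := h
  exact ⟨2 * n, by rw [pow_mul, pow_two]; exact hn⟩

lemma nil_prime (hQP : ∀ I : Ideal A, I.FG → QuasiProjective A I)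
    {x y : A} (hxy : x * y ∈ nilradical A) : x ∈ nilradical A ∨ y ∈ nilradical A := by
  rcases tricho x y with h | h | h
  · exact Or.inl (mem_nil_of_incomp hQP h)
  · obtain ⟨c, hc⟩ := Ideal.mem_span_singleton.mp h
    left
    apply sq_mem_nil
    have : x * x = (x * y) * c := by rw [hc]; ring
    rw [this]
    exact Ideal.mul_mem_right c _ hxy
  · obtain ⟨c, hc⟩ := Ideal.mem_span_singleton.mp h
    right
    apply sq_mem_nil
    have : y * y = (x * y) * c := by rw [hc]; ring
    rw [this]
    exact Ideal.mul_mem_right c _ hxy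

lemma nil_div (hQP : ∀ I : Ideal A, I.FG → QuasiProjective A I)
    {a x : A} (ha : a ∉ nilradical A) (hx : x ∈ nilradical A) :
    ∃ y ∈ nilradical A, x = a * y := by
  rcases tricho a x with h | h | h
  · exact absurd (mem_nil_of_incomp hQP h) ha
  · obtain ⟨c, hc⟩ := Ideal.mem_span_singleton.mp h
    exact absurd (hc ▸ Ideal.mul_mem_right c _ hx) ha
  · obtain ⟨c, hc⟩ := Ideal.mem_span_singleton.mp h
    have hca : c ∈ nilradical A := by
      rcases nil_prime hQP (x := a) (y := c) (by rw [← hc]; exact hx) with h1 | h1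
      · exact absurd h1 ha
      · exact h1
    exact ⟨c, hca, hc⟩

lemma nil_torsion_free (hQP : ∀ I : Ideal A, I.FG → QuasiProjective A I)
    (hNC : ¬ChainRing A) {a z : A} (ha : a ∉ nilradical A) (hz : z ∈ nilradical A)
    (haz : a * z = 0) : z = 0 := by
  by_contra hz0
  obtain ⟨u, v, huv⟩ := incomp_of_not_chain hNC
  have hu0 : u ≠ 0 := huv.ne_zero
  have hv0 : v ≠ 0 := huv.symm.ne_zero
  have step1 : ∃ b, b ∉ nilradical A ∧ b * u = 0 ∧ b * v = 0 := by
    rcases tricho z u with h1 | h1 | h1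
    · -- z, u incomparable
      have hau : a * u = 0 := ann_transfer hQP h1 haz
      exact ⟨a, ha, hau, ann_transfer hQP huv hau⟩
    · -- z ∈ span u : z = u * p
      obtain ⟨p, hp⟩ := Ideal.mem_span_singleton.mp h1
      rcases tricho z v with h2 | h2 | h2
      · have hav : a * v = 0 := ann_transfer hQP h2 haz
        exact ⟨a, ha, ann_transfer hQP huv.symm hav, hav⟩
      · -- z ∈ span v : z = v * q
        obtain ⟨q, hq⟩ := Ideal.mem_span_singleton.mp h2
        have hbu : (a * p) * u = 0 := by
          rw [show a * p * u = a * z by rw [hp]; ring, haz]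
        refine ⟨a * p, ?_, hbu, ann_transfer hQP huv hbu⟩
        intro hmem
        rcases nil_prime hQP hmem with h3 | h3
        · exact ha h3
        · have h4 : u * p = 0 :=
            nil_mul_zero hQP hNC (mem_nil_of_incomp hQP huv) h3
          exact hz0 (by rw [hp, h4])
      · -- v ∈ span z : v = z * q ⇒ v ∈ span u, contra
        obtain ⟨q, hq⟩ := Ideal.mem_span_singleton.mp h2
        exact absurd (Ideal.mem_span_singleton.mpr ⟨p * q, by rw [hq, hp]; ring⟩) huv.2
    · -- u ∈ span z : u = z * p
      obtain ⟨p, hp⟩ := Ideal.mem_span_singleton.mp h1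
      have hau : a * u = 0 := by
        rw [hp, show a * (z * p) = (a * z) * p by ring, haz, zero_mul]
      rcases tricho z v with h2 | h2 | h2
      · exact ⟨a, ha, hau, ann_transfer hQP h2 haz⟩
      · -- z ∈ span v : z = v * q ⇒ u ∈ span v, contra
        obtain ⟨q, hq⟩ := Ideal.mem_span_singleton.mp h2
        exact absurd (Ideal.mem_span_singleton.mpr ⟨q * p, by rw [hp, hq]; ring⟩) huv.1
      · -- v ∈ span z : v = z * q
        obtain ⟨q, hq⟩ := Ideal.mem_span_singleton.mp h2
        have hav : a * v = 0 := by
          rw [hq, show a * (z * q) = (a * z) * q by ring, haz, zero_mul]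
        exact ⟨a, ha, hau, hav⟩
  obtain ⟨b, hb, hbu, hbv⟩ := step1
  obtain ⟨c₁, hc₁N, hc₁⟩ := nil_div hQP hb (mem_nil_of_incomp hQP huv)
  obtain ⟨c₂, hc₂N, hc₂⟩ := nil_div hQP hb (mem_nil_of_incomp hQP huv.symm)
  rcases tricho c₁ v with h1 | h1 | h1
  · exact hu0 (by rw [hc₁]; exact ann_transfer hQP h1.symm hbv)
  · obtain ⟨q, hq⟩ := Ideal.mem_span_singleton.mp h1
    exact hu0 (by rw [hc₁, hq, show b * (v * q) = (b * v) * q by ring, hbv, zero_mul])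
  · have hc12 : Incomp c₁ c₂ := by
      constructor
      · intro hmem
        obtain ⟨d, hd⟩ := Ideal.mem_span_singleton.mp hmem
        exact huv.1 (Ideal.mem_span_singleton.mpr ⟨d, by rw [hc₁, hd, hc₂]; ring⟩)
      · intro hmem
        obtain ⟨d, hd⟩ := Ideal.mem_span_singleton.mp hmem
        exact huv.2 (Ideal.mem_span_singleton.mpr ⟨d, by rw [hc₂, hd, hc₁]; ring⟩)
    have hvc₂ : v ∈ Ideal.span ({c₂} : Set A) :=
      Ideal.mem_span_singleton.mpr ⟨b, by rw [hc₂]; ring⟩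
    exact hv0 (eq_zero_of_mem_inf hQP hc12 h1 hvc₂)

end main

section reverse
variable {A : Type*} [CommRing A] [IsLocalRing A]

/-- cyclic ideals are quasi-projective -/
lemma qp_principal (x : A) : QuasiProjective A (Ideal.span ({x} : Set A)) := by
  intro X f
  have hx : x ∈ Ideal.span ({x} : Set A) := Ideal.mem_span_singleton_self x
  set x' : ↥(Ideal.span ({x} : Set A)) := ⟨x, hx⟩ with hx'
  obtain ⟨y, hy⟩ := Submodule.Quotient.mk_surjective X (f x')
  obtain ⟨d, hd⟩ := Ideal.mem_span_singleton.mp y.2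
  refine ⟨d • LinearMap.id, ?_⟩
  have hspan : Submodule.span A ({x'} : Set ↥(Ideal.span ({x} : Set A))) = ⊤ := by
    rw [Submodule.eq_top_iff']
    intro w
    obtain ⟨c, hc⟩ := Ideal.mem_span_singleton.mp w.2
    rw [Submodule.mem_span_singleton]
    exact ⟨c, Subtype.ext (by rw [SetLike.val_smul, smul_eq_mul, hx']; rw [hc]; ring)⟩
  apply LinearMap.ext_on hspan
  intro w hw
  rw [Set.mem_singleton_iff] at hw
  subst hw
  have h1 : (d • LinearMap.id : ↥(Ideal.span ({x} : Set A)) →ₗ[A] _) x' = y := by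
    apply Subtype.ext
    rw [LinearMap.smul_apply, LinearMap.id_apply, SetLike.val_smul, smul_eq_mul]
    rw [hd]; ring
  rw [LinearMap.comp_apply, h1, Submodule.mkQ_apply, hy]

lemma chain_dvd {R : Type*} [CommRing R] (hC : ChainRing R) (a b : R) : a ∣ b ∨ b ∣ a := by
  rcases hC (Ideal.span {a}) (Ideal.span {b}) with h | h
  · right
    exact Ideal.mem_span_singleton.mp (h (Ideal.mem_span_singleton_self a))
  · left
    exact Ideal.mem_span_singleton.mp (h (Ideal.mem_span_singleton_self b))

lemma chain_fg_principal {R : Type*} [CommRing R] (hC : ChainRing R) (S : Finset R) :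
    ∃ x, Ideal.span (↑S : Set R) = Ideal.span {x} := by
  classical
  induction S using Finset.induction_on with
  | empty =>
    exact ⟨0, by rw [Finset.coe_empty, Ideal.span_empty, Ideal.span_singleton_eq_bot.mpr rfl]⟩
  | @insert a S ha ih =>
    obtain ⟨b, hb⟩ := ih
    rw [Finset.coe_insert, Ideal.span_insert, hb]
    rcases hC (Ideal.span {a}) (Ideal.span {b}) with h | h
    · exact ⟨b, sup_eq_right.mpr h⟩
    · exact ⟨a, sup_eq_left.mpr h⟩

lemma finset_min {R α : Type*} [CommRing R] (hC : ChainRing R) (φ : α → R) :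
    ∀ T : Finset α, T.Nonempty → ∃ x ∈ T, ∀ y ∈ T, φ x ∣ φ y := by
  classical
  intro T
  induction T using Finset.induction_on with
  | empty => rintro ⟨x, hx⟩; cases hx
  | @insert a S ha ih =>
    intro _
    by_cases hS : S.Nonempty
    · obtain ⟨x, hxS, hx⟩ := ih hS
      rcases chain_dvd hC (φ x) (φ a) with h | h
      · refine ⟨x, Finset.mem_insert_of_mem hxS, ?_⟩
        intro y hy
        rcases Finset.mem_insert.mp hy with rfl | hy
        · exact h
        · exact hx y hy
      · refine ⟨a, Finset.mem_insert_self a S, ?_⟩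
        intro y hy
        rcases Finset.mem_insert.mp hy with rfl | hy
        · exact dvd_rfl
        · exact dvd_trans h (hx y hy)
    · rw [Finset.not_nonempty_iff_eq_empty] at hS
      subst hS
      refine ⟨a, Finset.mem_insert_self a _, ?_⟩
      intro y hy
      rcases Finset.mem_insert.mp hy with rfl | hy
      · exact dvd_rfl
      · cases hy

section indep
variable (S : Finset A)

lemma finMem (i : ↥S) : (↑i : A) ∈ Ideal.span (↑S : Set A) := Ideal.subset_span i.2

noncomputable def finMap : (↥S → A) →ₗ[A] ↥(Ideal.span (↑S : Set A)) :=
  LinearMap.codRestrict (Ideal.span (↑S : Set A))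
    (∑ i : ↥S, (LinearMap.proj (R := A) (φ := fun _ : ↥S => A) i).smulRight (↑i : A))
    (fun c => by
      have : (∑ i : ↥S, (LinearMap.proj (R := A) (φ := fun _ : ↥S => A) i).smulRight (↑i : A)) c
          = ∑ i : ↥S, c i * ↑i := by simp [smul_eq_mul]
      rw [this]
      exact Submodule.sum_mem _ (fun i _ => Ideal.mul_mem_left _ _ (finMem S i)))

lemma finMap_apply (c : ↥S → A) : (↑(finMap S c) : A) = ∑ i : ↥S, c i * ↑i := by
  show (∑ i : ↥S, (LinearMap.proj (R := A) (φ := fun _ : ↥S => A) i).smulRight (↑i : A)) c = _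
  simp [smul_eq_mul]

lemma finMap_surjective : Function.Surjective (finMap S) := by
  rintro ⟨w, hw⟩
  obtain ⟨c, -, hc⟩ := (Submodule.mem_span_finset (R := A)).mp (show w ∈ Submodule.span A (↑S : Set A) by
    rw [Ideal.submodule_span_eq]; exact hw)
  refine ⟨fun i => c ↑i, Subtype.ext ?_⟩
  rw [finMap_apply]
  show ∑ i : ↥S, c ↑i * ↑i = w
  rw [← hc, ← Finset.sum_coe_sort S (fun i => c i • i)]
  simp [smul_eq_mul]

lemma finMap_eq_sum (c : ↥S → A) :
    finMap S c = ∑ i : ↥S, c i • (⟨↑i, finMem S i⟩ : ↥(Ideal.span (↑S : Set A))) := by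
  apply Subtype.ext
  rw [finMap_apply]
  rw [show ((↑(∑ i : ↥S, c i • (⟨↑i, finMem S i⟩ : ↥(Ideal.span (↑S : Set A)))) : A))
    = (Ideal.span (↑S : Set A)).subtype (∑ i : ↥S, c i • ⟨↑i, finMem S i⟩) from rfl, map_sum]
  simp [smul_eq_mul]

end indep

/-- quasi-projectivity of ideals inside N generated by an "independent" finite set -/
lemma qp_of_indep (hN2 : nilradical A * nilradical A = ⊥)
    (S : Finset A) (hSN : ∀ x ∈ S, x ∈ nilradical A)
    (hind : ∀ c : A → A, (∑ x ∈ S, c x * x) = 0 → ∀ x ∈ S, c x ∈ nilradical A) :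
    QuasiProjective A (Ideal.span (↑S : Set A)) := by
  classical
  intro X f
  have hIN : Ideal.span (↑S : Set A) ≤ nilradical A := Ideal.span_le.mpr hSN
  have hnn : ∀ {x y : A}, x ∈ nilradical A → y ∈ nilradical A → x * y = 0 := by
    intro x y hx hy
    have := Ideal.mul_mem_mul hx hy
    rw [hN2] at this
    exact Ideal.mem_bot.mp this
  have hch : ∀ i : ↥S, ∃ z : ↥(Ideal.span (↑S : Set A)),
      X.mkQ z = f ⟨↑i, finMem S i⟩ := fun i =>
    Submodule.Quotient.mk_surjective X (f ⟨↑i, finMem S i⟩)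
  choose y hy using hch
  set G : (↥S → A) →ₗ[A] ↥(Ideal.span (↑S : Set A)) :=
    ∑ i : ↥S, (LinearMap.proj (R := A) (φ := fun _ : ↥S => A) i).smulRight (y i) with hG
  have hGapply : ∀ c : ↥S → A, G c = ∑ i : ↥S, c i • y i := by
    intro c
    rw [hG]
    simp
  have hker : ∀ c : ↥S → A, finMap S c = 0 → G c = 0 := by
    intro c hc
    have hc0 : ∑ i : ↥S, c i * ↑i = 0 := by
      rw [← finMap_apply, hc]
      rfl
    set c' : A → A := fun x => if h : x ∈ S then c ⟨x, h⟩ else 0 with hc'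
    have hsum : ∑ x ∈ S, c' x * x = ∑ i : ↥S, c i * ↑i := by
      rw [← Finset.sum_coe_sort S (fun x => c' x * x)]
      apply Finset.sum_congr rfl
      intro i _
      have : c' ↑i = c i := by simp [hc', i.2]
      rw [this]
    have hcN : ∀ i : ↥S, c i ∈ nilradical A := by
      intro i
      have h1 := hind c' (by rw [hsum, hc0]) ↑i i.2
      have h2 : c' ↑i = c i := by simp [hc', i.2]
      rwa [h2] at h1
    apply Subtype.ext
    have hcoe : (↑(G c) : A) = ∑ i : ↥S, c i * ↑(y i) := by
      rw [hGapply]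
      rw [show ((↑(∑ i : ↥S, c i • y i) : A))
        = (Ideal.span (↑S : Set A)).subtype (∑ i : ↥S, c i • y i) from rfl, map_sum]
      simp [smul_eq_mul]
    rw [hcoe]
    show _ = (0 : A)
    apply Finset.sum_eq_zero
    intro i _
    exact hnn (hcN i) (hIN (y i).2)
  obtain ⟨g, hg⟩ := lift_helper (finMap S) (finMap_surjective S) G hker
  refine ⟨g, ?_⟩
  apply LinearMap.ext
  intro w
  obtain ⟨c, rfl⟩ := finMap_surjective S w
  rw [LinearMap.comp_apply, hg c, hGapply, Submodule.mkQ_apply]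
  rw [show Submodule.Quotient.mk (∑ i : ↥S, c i • y i)
    = X.mkQ (∑ i : ↥S, c i • y i) from rfl, map_sum]
  rw [finMap_eq_sum, map_sum]
  apply Finset.sum_congr rfl
  intro i _
  rw [map_smul, map_smul, hy i]

end reverse

section reverse2
variable {A : Type*} [CommRing A] [IsLocalRing A]

lemma chain_fqp (hC : ChainRing A) : ∀ I : Ideal A, I.FG → QuasiProjective A I := by
  intro I hFG
  obtain ⟨S, hS⟩ := hFG
  obtain ⟨x, hx⟩ := chain_fg_principal hC S
  rw [← hS, hx]
  exact qp_principal x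

lemma package_fqp (hN2 : nilradical A * nilradical A = ⊥)
    (hChainQ : ChainRing (A ⧸ nilradical A))
    (hdiv : ∀ a ∉ nilradical A, ∀ x ∈ nilradical A, ∃ y ∈ nilradical A, x = a * y)
    (htf : ∀ a ∉ nilradical A, ∀ x ∈ nilradical A, a * x = 0 → x = 0) :
    ∀ I : Ideal A, I.FG → QuasiProjective A I := by
  classical
  have hnn : ∀ {x y : A}, x ∈ nilradical A → y ∈ nilradical A → x * y = 0 := by
    intro x y hx hy
    have := Ideal.mul_mem_mul hx hy
    rw [hN2] at this
    exact Ideal.mem_bot.mp this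
  have main : ∀ n : ℕ, ∀ S : Finset A, S.card ≤ n →
      QuasiProjective A (Ideal.span (↑S : Set A)) := by
    intro n
    induction n with
    | zero =>
      intro S hS
      rw [Nat.le_zero, Finset.card_eq_zero] at hS
      subst hS
      rw [Finset.coe_empty, Ideal.span_empty,
        show (⊥ : Ideal A) = Ideal.span {0} from (Ideal.span_singleton_eq_bot.mpr rfl).symm]
      exact qp_principal 0
    | succ n ih =>
      intro S hcard
      by_cases hSN : ∀ x ∈ S, x ∈ nilradical A
      · -- all generators nilpotent
        by_cases hind : ∀ c : A → A, (∑ x ∈ S, c x * x) = 0 → ∀ x ∈ S, c x ∈ nilradical A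
        · exact qp_of_indep hN2 S hSN hind
        · push_neg at hind
          obtain ⟨c, hc0, x₀, hx₀S, hx₀N⟩ := hind
          set T := S.filter (fun x => c x ∉ nilradical A) with hT
          have hTne : T.Nonempty := ⟨x₀, Finset.mem_filter.mpr ⟨hx₀S, hx₀N⟩⟩
          obtain ⟨xs, hxsT, hxs⟩ :=
            finset_min hChainQ (fun x => Ideal.Quotient.mk (nilradical A) (c x)) T hTne
          have hxsS : xs ∈ S := (Finset.mem_filter.mp hxsT).1
          have hcxs : c xs ∉ nilradical A := (Finset.mem_filter.mp hxsT).2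
          have ht : ∀ x : A, ∃ tx : A,
              (x ∈ S → c x - tx * c xs ∈ nilradical A) ∧ (x = xs → tx = 1) := by
            intro x
            by_cases hxx : x = xs
            · subst hxx
              exact ⟨1, fun _ => by rw [one_mul, sub_self]; exact Submodule.zero_mem _,
                fun _ => rfl⟩
            · by_cases hx : x ∈ S
              · by_cases hcx : c x ∈ nilradical A
                · exact ⟨0, fun _ => by rw [zero_mul, sub_zero]; exact hcx,
                    fun h => absurd h hxx⟩
                · obtain ⟨tq, htq⟩ := hxs x (Finset.mem_filter.mpr ⟨hx, hcx⟩)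
                  obtain ⟨tt, rfl⟩ := Ideal.Quotient.mk_surjective tq
                  refine ⟨tt, fun _ => ?_, fun h => absurd h hxx⟩
                  have h0 : Ideal.Quotient.mk (nilradical A) (c x - tt * c xs) = 0 := by
                    rw [map_sub, map_mul, htq]
                    ring
                  exact Ideal.Quotient.eq_zero_iff_mem.mp h0
              · exact ⟨0, fun h => absurd h hx, fun h => absurd h hxx⟩
          choose t htN ht1 using ht
          have hsum0 : c xs * (∑ x ∈ S, t x * x) = 0 := by
            have hterm : ∀ x ∈ S, (c xs * (t x * x)) = c x * x := by
              intro x hx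
              have h0 : (c x - t x * c xs) * x = 0 := hnn (htN x hx) (hSN x hx)
              linear_combination -h0
            calc c xs * ∑ x ∈ S, t x * x = ∑ x ∈ S, c xs * (t x * x) := Finset.mul_sum _ _ _
            _ = ∑ x ∈ S, c x * x := Finset.sum_congr rfl hterm
            _ = 0 := hc0
          have hsumN : (∑ x ∈ S, t x * x) ∈ nilradical A :=
            Submodule.sum_mem _ (fun x hx => Ideal.mul_mem_left _ _ (hSN x hx))
          have hzero : ∑ x ∈ S, t x * x = 0 := htf (c xs) hcxs _ hsumN hsum0
          have hxs_mem : xs ∈ Ideal.span (↑(S.erase xs) : Set A) := by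
            have hsplit : t xs * xs + ∑ x ∈ S.erase xs, t x * x = 0 := by
              rw [Finset.add_sum_erase S (fun x => t x * x) hxsS]
              exact hzero
            rw [ht1 xs rfl, one_mul] at hsplit
            have heq : xs = -(∑ x ∈ S.erase xs, t x * x) := by linear_combination hsplit
            have h2 : -(∑ x ∈ S.erase xs, t x * x) ∈ Ideal.span (↑(S.erase xs) : Set A) :=
              Submodule.neg_mem _ (Submodule.sum_mem _ (fun x hx =>
                Ideal.mul_mem_left _ _ (Ideal.subset_span (Finset.mem_coe.mpr hx))))
            rwa [← heq] at h2
          have hspan : Ideal.span (↑S : Set A) = Ideal.span (↑(S.erase xs) : Set A) := by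
            apply le_antisymm
            · rw [Ideal.span_le]
              intro x hx
              rw [Finset.mem_coe] at hx
              by_cases hxx : x = xs
              · subst hxx
                exact hxs_mem
              · exact Ideal.subset_span (Finset.mem_coe.mpr (Finset.mem_erase.mpr ⟨hxx, hx⟩))
            · exact Ideal.span_mono (fun x hx =>
                Finset.mem_coe.mpr (Finset.mem_of_mem_erase (Finset.mem_coe.mp hx)))
          rw [hspan]
          refine ih (S.erase xs) ?_
          have h1 : (S.erase xs).card < S.card := Finset.card_erase_lt_of_mem hxsS
          omega
      · -- some generator not nilpotent : the ideal is principal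
        push_neg at hSN
        obtain ⟨x₀, hx₀S, hx₀N⟩ := hSN
        set T := S.filter (fun x => x ∉ nilradical A) with hT
        have hTne : T.Nonempty := ⟨x₀, Finset.mem_filter.mpr ⟨hx₀S, hx₀N⟩⟩
        obtain ⟨xs, hxsT, hxs⟩ :=
          finset_min hChainQ (fun x => Ideal.Quotient.mk (nilradical A) x) T hTne
        have hxsS : xs ∈ S := (Finset.mem_filter.mp hxsT).1
        have hxsN : xs ∉ nilradical A := (Finset.mem_filter.mp hxsT).2
        have hprin : Ideal.span (↑S : Set A) = Ideal.span {xs} := by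
          apply le_antisymm
          · rw [Ideal.span_le]
            intro x hx
            rw [Finset.mem_coe] at hx
            rw [SetLike.mem_coe, Ideal.mem_span_singleton]
            by_cases hcx : x ∈ nilradical A
            · obtain ⟨y, hyN, hy⟩ := hdiv xs hxsN x hcx
              exact ⟨y, hy⟩
            · obtain ⟨tq, htq⟩ := hxs x (Finset.mem_filter.mpr ⟨hx, hcx⟩)
              obtain ⟨tt, rfl⟩ := Ideal.Quotient.mk_surjective tq
              have h0 : x - tt * xs ∈ nilradical A := by
                apply Ideal.Quotient.eq_zero_iff_mem.mp
                rw [map_sub, map_mul, htq]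
                ring
              obtain ⟨y, hyN, hy⟩ := hdiv xs hxsN _ h0
              exact ⟨tt + y, by linear_combination hy⟩
          · rw [Ideal.span_singleton_le_iff_mem]
            exact Ideal.subset_span (Finset.mem_coe.mpr hxsS)
        rw [hprin]
        exact qp_principal xs
  intro I hFG
  obtain ⟨S, hS⟩ := hFG
  rw [← hS]
  exact main S.card S le_rfl

end reverse2

/-- a local ring `A` with nilradical `N` is an fqp-ring iff either `A` is a
chain ring, or `A/N` is a valuation domain and `N` is a divisible torsion-free `A/N`-module
(in particular `N² = 0` in the non-chain case). -/
theorem local_fqp_iff {A : Type*} [CommRing A] [IsLocalRing A] :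
    IsFqpRing A ↔
      (ChainRing A ∨
        (nilradical A * nilradical A = ⊥ ∧
          IsDomain (A ⧸ nilradical A) ∧ ChainRing (A ⧸ nilradical A) ∧
          (∀ a ∉ nilradical A, ∀ x ∈ nilradical A, ∃ y ∈ nilradical A, x = a * y) ∧
          (∀ a ∉ nilradical A, ∀ x ∈ nilradical A, a * x = 0 → x = 0))) := by
  constructor
  · intro hQP
    by_cases hC : ChainRing A
    · exact Or.inl hC
    · right
      have hQP' : ∀ I : Ideal A, I.FG → QuasiProjective A I := hQP
      refine ⟨?_, ?_, ?_, ?_, ?_⟩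
      · apply le_antisymm _ bot_le
        rw [Ideal.mul_le]
        intro r hr s hs
        rw [Ideal.mem_bot]
        exact nil_mul_zero hQP' hC hr hs
      · have hprime : (nilradical A).IsPrime := by
          constructor
          · intro h
            have h1 : (1 : A) ∈ nilradical A := h ▸ Submodule.mem_top
            obtain ⟨n, hn⟩ := mem_nilradical.mp h1
            rw [one_pow] at hn
            exact one_ne_zero hn
          · intro x y hxy
            exact nil_prime hQP' hxy
        exact (Ideal.Quotient.isDomain_iff_prime _).mpr hprime
      · apply chain_of_pairs
        intro xq yq
        obtain ⟨a, rfl⟩ := Ideal.Quotient.mk_surjective xq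
        obtain ⟨b, rfl⟩ := Ideal.Quotient.mk_surjective yq
        rcases tricho a b with h | h | h
        · left
          have h0 : Ideal.Quotient.mk (nilradical A) a = 0 :=
            Ideal.Quotient.eq_zero_iff_mem.mpr (mem_nil_of_incomp hQP' h)
          rw [h0]
          exact Submodule.zero_mem _
        · left
          obtain ⟨d, hd⟩ := Ideal.mem_span_singleton.mp h
          exact Ideal.mem_span_singleton.mpr
            ⟨Ideal.Quotient.mk _ d, by rw [← map_mul, ← hd]⟩
        · right
          obtain ⟨d, hd⟩ := Ideal.mem_span_singleton.mp h
          exact Ideal.mem_span_singleton.mpr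
            ⟨Ideal.Quotient.mk _ d, by rw [← map_mul, ← hd]⟩
      · exact fun a ha x hx => nil_div hQP' ha hx
      · exact fun a ha x hx h => nil_torsion_free hQP' hC ha hx h
  · rintro (hC | ⟨hN2, _, hChainQ, hdiv, htf⟩)
    · exact chain_fqp hC
    · exact package_fqp hN2 hChainQ hdiv htf
end
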